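/- arXiv:1604.00310 — 13 statements merged into one kernel-verified Lean document; each statement's English description precedes it below -/
import Mathlib

section
/- For every k-HDM instance and every fractional solution x, the vector x/(2k) lies in the convex hull (in ℝ^𝓔) of the indicator vectors of integral solutions of the instance. -/
/-!
Add the hyperedges one at a time in order of decreasing demand, maintaining a probability
distribution on the packings of the hyperedges added so far whose marginals are `x / (2k)`.
When `a` is added, `d a` is the smallest demand so far, so a vertex `v ∈ a` whose load exceeds
`b v - d a` carries load at least `max (b v - d a + 1) (d a)`. Markov's inequality and the capacity
constraint at `v` bound the probability of this by `(1 - x a / (2k)) / k`, and a union bound over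
the at most `k` vertices of `a` leaves mass at least `x a / (2k)` on packings that `a` fits into.
Moving that much mass proportionally from those packings `M` to `insert a M` extends the
distribution.
-/

open Finset

section WeightedSums

variable {ι α : Type*} {s : Finset ι} {w f : ι → ℝ}

theorem Finset.mul_sum_filter_le_sum_mul {P : ι → Prop} [DecidablePred P] {t : ℝ}
    (hw : ∀ i ∈ s, 0 ≤ w i) (hf : ∀ i ∈ s, 0 ≤ f i) (ht : ∀ i ∈ s, P i → t ≤ f i) :
    t * ∑ i ∈ s with P i, w i ≤ ∑ i ∈ s, w i * f i := by
  rw [mul_sum]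
  calc ∑ i ∈ s with P i, t * w i
      ≤ ∑ i ∈ s with P i, w i * f i := by
        refine sum_le_sum fun i hi => ?_
        rw [mem_filter] at hi
        rw [mul_comm]
        exact mul_le_mul_of_nonneg_left (ht i hi.1 hi.2) (hw i hi.1)
    _ ≤ ∑ i ∈ s, w i * f i :=
        sum_le_sum_of_subset_of_nonneg (filter_subset _ _) fun i hi _ =>
          mul_nonneg (hw i hi) (hf i hi)

theorem Finset.sum_filter_exists_le {T : Finset α} {P : ι → α → Prop}
    [∀ i j, Decidable (P i j)] (hw : ∀ i ∈ s, 0 ≤ w i) :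
    ∑ i ∈ s with ∃ j ∈ T, P i j, w i ≤ ∑ j ∈ T, ∑ i ∈ s with P i j, w i := by
  calc ∑ i ∈ s with ∃ j ∈ T, P i j, w i
      ≤ ∑ i ∈ s with ∃ j ∈ T, P i j, ∑ j ∈ T with P i j, w i := by
        refine sum_le_sum fun i hi => ?_
        obtain ⟨hi, j, hj, hPj⟩ := mem_filter.mp hi
        exact single_le_sum (f := fun _ => w i) (fun _ _ => hw i hi) (mem_filter.mpr ⟨hj, hPj⟩)
    _ ≤ ∑ i ∈ s, ∑ j ∈ T with P i j, w i :=
        sum_le_sum_of_subset_of_nonneg (filter_subset _ _) fun i hi _ =>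
          sum_nonneg fun _ _ => hw i hi
    _ = ∑ j ∈ T, ∑ i ∈ s with P i j, w i :=
        sum_comm' fun i j => by simp only [mem_filter]; tauto

end WeightedSums

theorem Finset.forall_mem_powerset_insert {α : Type*} [DecidableEq α] {s : Finset α} {a : α}
    {P : Finset α → Prop} :
    (∀ M ∈ (insert a s).powerset, P M) ↔ ∀ M ∈ s.powerset, P M ∧ P (insert a M) := by
  simp only [powerset_insert, mem_union, mem_image]
  constructor
  · intro h M hM
    exact ⟨h M (Or.inl hM), h _ (Or.inr ⟨M, hM, rfl⟩)⟩
  · rintro h M (hM | ⟨N, hN, rfl⟩)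
    exacts [(h M hM).1, (h N hN).2]

namespace HDM

-- Both sides are affine in `x`; at `x = 0` use `b < 2t`, at `x = 1` use `b - d < t ≤ (2k - 1) t / k`.
theorem mul_sub_le_mul_of_max_le {k x d b t : ℝ} (hk : 1 ≤ k) (hx0 : 0 ≤ x) (hx1 : x ≤ 1)
    (hdb : d ≤ b) (hdt : d ≤ t) (hbt : b - d + 1 ≤ t) : k * (b - d * x) ≤ (2 * k - x) * t := by
  nlinarith [mul_nonneg hx0 (sub_nonneg.mpr hk), mul_nonneg (sub_nonneg.mpr hx1) (sub_nonneg.mpr hk)]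

variable {V : Type*} [DecidableEq V] (d : Finset V → ℤ) (b : V → ℤ)

def load (M : Finset (Finset V)) (v : V) : ℤ := ∑ S ∈ M with v ∈ S, d S

def IsPacking (M : Finset (Finset V)) : Prop := ∀ v, load d M v ≤ b v

def Fits (a : Finset V) (M : Finset (Finset V)) : Prop := ∀ v ∈ a, load d M v + d a ≤ b v

instance (a : Finset V) : DecidablePred (Fits d b a) := fun M => by unfold Fits; infer_instance

structure IsPackingDistrib (F : Finset (Finset V)) (p : Finset (Finset V) → ℝ) : Prop where
  nonneg : ∀ M ∈ F.powerset, 0 ≤ p M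
  sum_eq_one : ∑ M ∈ F.powerset, p M = 1
  isPacking : ∀ M ∈ F.powerset, p M ≠ 0 → IsPacking d b M

def marginal (F : Finset (Finset V)) (p : Finset (Finset V) → ℝ) (S : Finset V) : ℝ :=
  ∑ M ∈ F.powerset with S ∈ M, p M

-- Moves the mass `μ M` from each `M` not containing `a` to `insert a M`.
def transfer (a : Finset V) (p μ : Finset (Finset V) → ℝ) (M : Finset (Finset V)) : ℝ :=
  if a ∈ M then μ (M.erase a) else p M - μ M

variable {d b}

section Packings

variable {a : Finset V} {M : Finset (Finset V)}

theorem isPacking_empty (hb : ∀ v, 0 ≤ b v) : IsPacking d b ∅ := by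
  simpa [IsPacking, load] using hb

theorem load_insert (ha : a ∉ M) (v : V) :
    load d (insert a M) v = (if v ∈ a then d a else 0) + load d M v := by
  unfold load
  split_ifs with hv
  · rw [filter_insert, if_pos hv, sum_insert (fun h => ha (mem_filter.mp h).1)]
  · rw [filter_insert, if_neg hv, zero_add]

theorem IsPacking.insert (hM : IsPacking d b M) (ha : a ∉ M) (hfit : Fits d b a M) :
    IsPacking d b (insert a M) := by
  intro v
  rw [load_insert ha]
  split_ifs with hv
  · linarith [hfit v hv]
  · simpa using hM v

theorem load_nonneg (hd : ∀ S ∈ M, 0 ≤ d S) (v : V) : 0 ≤ load d M v :=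
  sum_nonneg fun S hS => hd S (mem_filter.mp hS).1

theorem load_eq_zero_or_le {m : ℤ} (hm : 0 ≤ m) (hd : ∀ S ∈ M, m ≤ d S) (v : V) :
    load d M v = 0 ∨ m ≤ load d M v := by
  rcases (M.filter (v ∈ ·)).eq_empty_or_nonempty with hempty | ⟨S, hS⟩
  · left
    simp [load, hempty]
  · right
    calc m ≤ d S := hd S (mem_filter.mp hS).1
      _ ≤ load d M v := single_le_sum (fun T hT => hm.trans (hd T (mem_filter.mp hT).1)) hS

end Packings

variable {s : Finset (Finset V)} {a : Finset V} {p μ : Finset (Finset V) → ℝ}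

theorem isPackingDistrib_empty (hb : ∀ v, 0 ≤ b v) : IsPackingDistrib d b ∅ (fun _ => 1) where
  nonneg _ _ := zero_le_one
  sum_eq_one := by simp
  isPacking M hM _ := by
    rw [powerset_empty, mem_singleton] at hM
    exact hM ▸ isPacking_empty hb

theorem sum_mul_load (F : Finset (Finset V)) (p : Finset (Finset V) → ℝ) (v : V) :
    ∑ M ∈ F.powerset, p M * load d M v = ∑ S ∈ F with v ∈ S, d S * marginal F p S := by
  calc ∑ M ∈ F.powerset, p M * load d M v
      = ∑ M ∈ F.powerset, ∑ S ∈ M with v ∈ S, (d S : ℝ) * p M := by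
        simp only [load, Int.cast_sum, mul_sum, mul_comm]
    _ = ∑ S ∈ F with v ∈ S, ∑ M ∈ F.powerset with S ∈ M, (d S : ℝ) * p M := by
        refine sum_comm' fun M S => ?_
        simp only [mem_powerset, mem_filter]
        exact ⟨fun ⟨hMF, hSM, hvS⟩ => ⟨⟨hMF, hSM⟩, hMF hSM, hvS⟩,
          fun ⟨⟨hMF, hSM⟩, _, hvS⟩ => ⟨hMF, hSM, hvS⟩⟩
    _ = ∑ S ∈ F with v ∈ S, d S * marginal F p S := by simp only [marginal, mul_sum]

theorem marginal_insert (ha : a ∉ s) (q : Finset (Finset V) → ℝ) (S : Finset V) :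
    marginal (insert a s) q S = ∑ M ∈ s.powerset,
      ((if S ∈ M then q M else 0) + if S ∈ insert a M then q (insert a M) else 0) := by
  rw [marginal, sum_filter, sum_powerset_insert ha, sum_add_distrib]

section Transfer

variable {M : Finset (Finset V)}

theorem transfer_of_notMem (haM : a ∉ M) : transfer a p μ M = p M - μ M := if_neg haM

theorem transfer_insert (haM : a ∉ M) : transfer a p μ (insert a M) = μ M := by
  rw [transfer, if_pos (mem_insert_self a M), erase_insert haM]

theorem IsPackingDistrib.transfer (hp : IsPackingDistrib d b s p) (ha : a ∉ s)
    (hμ : ∀ M ∈ s.powerset, 0 ≤ μ M ∧ μ M ≤ p M) (hfit : ∀ M ∈ s.powerset, μ M ≠ 0 → Fits d b a M) :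
    IsPackingDistrib d b (insert a s) (transfer a p μ) := by
  have haM : ∀ M ∈ s.powerset, a ∉ M := fun M hM haM => ha (mem_powerset.mp hM haM)
  refine ⟨?_, ?_, ?_⟩
  · refine forall_mem_powerset_insert.mpr fun M hM => ?_
    rw [transfer_of_notMem (haM M hM), transfer_insert (haM M hM)]
    exact ⟨sub_nonneg.mpr (hμ M hM).2, (hμ M hM).1⟩
  · rw [sum_powerset_insert ha, sum_congr rfl fun M hM => transfer_of_notMem (haM M hM),
      sum_congr rfl fun M hM => transfer_insert (haM M hM), sum_sub_distrib, sub_add_cancel,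
      hp.sum_eq_one]
  · refine forall_mem_powerset_insert.mpr fun M hM => ?_
    rw [transfer_of_notMem (haM M hM), transfer_insert (haM M hM)]
    have hμM : p M = 0 → μ M = 0 := fun hpM => le_antisymm (hpM ▸ (hμ M hM).2) (hμ M hM).1
    refine ⟨fun hq => hp.isPacking M hM fun hpM => hq ?_, fun hq => ?_⟩
    · rw [hpM, hμM hpM, sub_zero]
    · exact (hp.isPacking M hM (mt hμM hq)).insert (haM M hM) (hfit M hM hq)

theorem marginal_transfer_self (ha : a ∉ s) :
    marginal (insert a s) (transfer a p μ) a = ∑ M ∈ s.powerset, μ M := by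
  rw [marginal_insert ha]
  refine sum_congr rfl fun M hM => ?_
  have haM : a ∉ M := fun haM => ha (mem_powerset.mp hM haM)
  rw [if_neg haM, if_pos (mem_insert_self a M), transfer_insert haM, zero_add]

theorem marginal_transfer_of_mem (ha : a ∉ s) {S : Finset V} (hS : S ∈ s) :
    marginal (insert a s) (transfer a p μ) S = marginal s p S := by
  have hSa : S ≠ a := fun h => ha (h ▸ hS)
  rw [marginal_insert ha, marginal, sum_filter]
  refine sum_congr rfl fun M hM => ?_
  have haM : a ∉ M := fun haM => ha (mem_powerset.mp hM haM)
  simp only [mem_insert, hSa, false_or, transfer_of_notMem haM, transfer_insert haM]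
  split_ifs <;> ring

end Transfer

theorem IsPackingDistrib.exists_insert (hp : IsPackingDistrib d b s p) (ha : a ∉ s) {α : ℝ}
    (hα : 0 ≤ α) (hαG : α ≤ ∑ M ∈ s.powerset with Fits d b a M, p M) :
    ∃ q, IsPackingDistrib d b (insert a s) q ∧ marginal (insert a s) q a = α ∧
      ∀ S ∈ s, marginal (insert a s) q S = marginal s p S := by
  set G := ∑ M ∈ s.powerset with Fits d b a M, p M
  have hG : 0 ≤ G := sum_nonneg fun M hM => hp.nonneg M (mem_filter.mp hM).1
  set μ : Finset (Finset V) → ℝ := fun M => if Fits d b a M then α / G * p M else 0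
  have hμ : ∀ M ∈ s.powerset, 0 ≤ μ M ∧ μ M ≤ p M := by
    intro M hM
    by_cases hfit : Fits d b a M
    · simp only [μ, if_pos hfit]
      exact ⟨mul_nonneg (div_nonneg hα hG) (hp.nonneg M hM),
        mul_le_of_le_one_left (hp.nonneg M hM) (div_le_one_of_le₀ hαG hG)⟩
    · simp only [μ, if_neg hfit]
      exact ⟨le_rfl, hp.nonneg M hM⟩
  have hfit : ∀ M ∈ s.powerset, μ M ≠ 0 → Fits d b a M := fun M _ hμM => by
    by_contra hfit
    exact hμM (if_neg hfit)
  refine ⟨HDM.transfer a p μ, hp.transfer ha hμ hfit, ?_, fun S hS => marginal_transfer_of_mem ha hS⟩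
  calc marginal (insert a s) (HDM.transfer a p μ) a = ∑ M ∈ s.powerset, μ M :=
        marginal_transfer_self ha
    _ = α / G * G := by rw [← sum_filter, mul_sum]
    _ = α := div_mul_cancel_of_imp fun hG0 => le_antisymm (hG0 ▸ hαG) hα

variable {k : ℕ} {x : ℝ}

theorem IsPackingDistrib.mul_sum_filter_load_gt_le (hp : IsPackingDistrib d b s p) (hk : 0 < k)
    (hx0 : 0 ≤ x) (hx1 : x ≤ 1) (hda : 0 ≤ d a) (hmin : ∀ S ∈ s, d a ≤ d S) {v : V}
    (hdb : d a ≤ b v) (hcap : 2 * k * ∑ S ∈ s with v ∈ S, d S * marginal s p S + d a * x ≤ b v) :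
    k * ∑ M ∈ s.powerset with b v - d a < load d M v, p M ≤ 1 - x / (2 * k) := by
  set P := ∑ M ∈ s.powerset with b v - d a < load d M v, p M
  set t : ℤ := max (b v - d a + 1) (d a)
  have ht : ∀ M ∈ s.powerset, b v - d a < load d M v → (t : ℝ) ≤ load d M v := by
    intro M hM hover
    have hdM : ∀ S ∈ M, d a ≤ d S := fun S hS => hmin S (mem_powerset.mp hM hS)
    rcases load_eq_zero_or_le hda hdM v with h0 | hle
    · omega
    · exact_mod_cast max_le (by omega) hle
  have hmarkov : t * P ≤ ∑ S ∈ s with v ∈ S, d S * marginal s p S := by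
    rw [← sum_mul_load]
    refine mul_sum_filter_le_sum_mul hp.nonneg (fun M hM => ?_) ht
    exact_mod_cast load_nonneg (fun S hS => hda.trans (hmin S (mem_powerset.mp hM hS))) v
  have hkR : (1 : ℝ) ≤ k := by exact_mod_cast hk
  have htpos : (0 : ℝ) < t := by exact_mod_cast (by omega : (0 : ℤ) < t)
  have hkey := mul_sub_le_mul_of_max_le hkR hx0 hx1 (d := d a) (b := b v) (t := t)
    (by exact_mod_cast hdb) (by exact_mod_cast le_max_right _ _)
    (by exact_mod_cast le_max_left _ _)
  have hP : 2 * k * (k * P) ≤ 2 * k - x := by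
    refine le_of_mul_le_mul_left ?_ htpos
    nlinarith [mul_le_mul_of_nonneg_left hmarkov (by positivity : (0 : ℝ) ≤ 2 * k * k)]
  rw [le_sub_iff_add_le, ← le_sub_iff_add_le', div_le_iff₀ (by positivity)]
  linarith

theorem IsPackingDistrib.div_le_sum_filter_fits (hp : IsPackingDistrib d b s p) (hk : 0 < k)
    (hcard : a.card ≤ k) (hx0 : 0 ≤ x) (hx1 : x ≤ 1) (hda : 0 ≤ d a)
    (hmin : ∀ S ∈ s, d a ≤ d S) (hnoclip : ∀ v ∈ a, d a ≤ b v)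
    (hcap : ∀ v ∈ a, 2 * k * ∑ S ∈ s with v ∈ S, d S * marginal s p S + d a * x ≤ b v) :
    x / (2 * k) ≤ ∑ M ∈ s.powerset with Fits d b a M, p M := by
  have hkpos : (0 : ℝ) < k := by exact_mod_cast hk
  have hnotfits : ∀ M, ¬Fits d b a M ↔ ∃ v ∈ a, b v - d a < load d M v := by
    intro M
    simp only [Fits, not_forall, exists_prop]
    exact exists_congr fun v => and_congr_right fun _ => by omega
  have hbad : ∑ M ∈ s.powerset with ¬Fits d b a M, p M ≤ 1 - x / (2 * k) :=
    calc ∑ M ∈ s.powerset with ¬Fits d b a M, p M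
        = ∑ M ∈ s.powerset with ∃ v ∈ a, b v - d a < load d M v, p M := by
          simp only [hnotfits]
      _ ≤ ∑ v ∈ a, ∑ M ∈ s.powerset with b v - d a < load d M v, p M :=
          sum_filter_exists_le hp.nonneg
      _ ≤ ∑ v ∈ a, (1 - x / (2 * k)) / k := by
          refine sum_le_sum fun v hv => ?_
          rw [le_div_iff₀ hkpos, mul_comm]
          exact hp.mul_sum_filter_load_gt_le hk hx0 hx1 hda hmin (hnoclip v hv) (hcap v hv)
      _ ≤ 1 - x / (2 * k) := by
          have h1x : 0 ≤ 1 - x / (2 * k) := by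
            rw [sub_nonneg, div_le_one (by positivity)]
            linarith [(by exact_mod_cast hk : (1 : ℝ) ≤ k)]
          rw [sum_const, nsmul_eq_mul, mul_div_left_comm]
          exact mul_le_of_le_one_right h1x ((div_le_one hkpos).mpr (mod_cast hcard))
  linarith [sum_filter_add_sum_filter_not s.powerset (Fits d b a) p, hp.sum_eq_one]

theorem exists_isPackingDistrib_marginal_eq {𝓔 : Finset (Finset V)} (hk : 0 < k)
    (hcard : ∀ S ∈ 𝓔, S.card ≤ k) (hd : ∀ S ∈ 𝓔, 0 ≤ d S) (hb : ∀ v, 0 ≤ b v)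
    (hnoclip : ∀ S ∈ 𝓔, ∀ v ∈ S, d S ≤ b v) {y : Finset V → ℝ} (hy0 : ∀ S ∈ 𝓔, 0 ≤ y S)
    (hy1 : ∀ S ∈ 𝓔, y S ≤ 1) (hcap : ∀ v, ∑ S ∈ 𝓔 with v ∈ S, d S * y S ≤ b v) :
    ∃ p, IsPackingDistrib d b 𝓔 p ∧ ∀ S ∈ 𝓔, marginal 𝓔 p S = y S / (2 * k) := by
  suffices ∀ F ⊆ 𝓔, ∃ p, IsPackingDistrib d b F p ∧ ∀ S ∈ F, marginal F p S = y S / (2 * k) from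
    this 𝓔 subset_rfl
  intro F
  induction F using Finset.induction_on_min_value d with
  | empty => exact fun _ => ⟨_, isPackingDistrib_empty hb, by simp⟩
  | insert a s ha hmin ih =>
    intro hsub
    obtain ⟨p, hp, hmarg⟩ := ih ((subset_insert a s).trans hsub)
    have ha𝓔 : a ∈ 𝓔 := hsub (mem_insert_self a s)
    have hcap' : ∀ v ∈ a, 2 * k * ∑ S ∈ s with v ∈ S, d S * marginal s p S + d a * y a ≤ b v := by
      intro v hv
      have hk' : (2 * k : ℝ) ≠ 0 := by positivity
      calc 2 * k * ∑ S ∈ s with v ∈ S, d S * marginal s p S + d a * y a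
          = ∑ S ∈ insert a s with v ∈ S, d S * y S := by
            rw [filter_insert, if_pos hv, sum_insert (fun h => ha (mem_filter.mp h).1), add_comm,
              mul_sum]
            congr 1
            refine sum_congr rfl fun S hS => ?_
            rw [hmarg S (mem_filter.mp hS).1]
            field_simp
        _ ≤ ∑ S ∈ 𝓔 with v ∈ S, d S * y S :=
            sum_le_sum_of_subset_of_nonneg (filter_subset_filter _ hsub) fun S hS _ =>
              mul_nonneg (mod_cast hd S (mem_filter.mp hS).1) (hy0 S (mem_filter.mp hS).1)
        _ ≤ b v := hcap v
    obtain ⟨q, hq, hqa, hqs⟩ := hp.exists_insert ha (by have := hy0 a ha𝓔; positivity)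
      (hp.div_le_sum_filter_fits hk (hcard a ha𝓔) (hy0 a ha𝓔) (hy1 a ha𝓔) (hd a ha𝓔) hmin
        (hnoclip a ha𝓔) hcap')
    refine ⟨q, hq, fun S hS => ?_⟩
    rcases mem_insert.mp hS with rfl | hS
    exacts [hqa, (hqs S hS).trans (hmarg S hS)]

theorem IsPackingDistrib.marginal_mem_convexHull {F : Finset (Finset V)}
    (hp : IsPackingDistrib d b F p) :
    (fun S : F => marginal F p S) ∈ convexHull ℝ {χ : F → ℝ |
      ∃ M, M ⊆ F ∧ IsPacking d b M ∧ χ = fun S => if S.1 ∈ M then 1 else 0} := by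
  have hsum : (fun S : F => marginal F p S) =
      ∑ M ∈ F.powerset with p M ≠ 0, p M • fun S : F => if S.1 ∈ M then (1 : ℝ) else 0 := by
    rw [sum_filter_of_ne (p := fun M => p M ≠ 0) fun M _ h hpM => h (by rw [hpM, zero_smul])]
    funext S
    simp [marginal, Finset.sum_apply, sum_filter]
  rw [hsum]
  refine (convex_convexHull ℝ _).sum_mem (fun M hM => hp.nonneg M (mem_filter.mp hM).1)
    (by rw [sum_filter_ne_zero, hp.sum_eq_one]) fun M hM => subset_convexHull ℝ _ ?_
  obtain ⟨hMF, hpM⟩ := mem_filter.mp hM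
  exact ⟨M, mem_powerset.mp hMF, hp.isPacking M hMF hpM, rfl⟩

end HDM

theorem kHDM_half_2k_in_convexHull_general
    {V : Type*} [DecidableEq V]
    (k : ℕ) (hk : 1 ≤ k)
    (𝓔 : Finset (Finset V))
    (d : Finset V → ℤ) (b : V → ℤ)
    (hcard : ∀ S ∈ 𝓔, 1 ≤ S.card ∧ S.card ≤ k)
    (hd : ∀ S ∈ 𝓔, 1 ≤ d S)
    (hb : ∀ v : V, 1 ≤ b v)
    (hnoclip : ∀ S ∈ 𝓔, ∀ v ∈ S, d S ≤ b v)
    (x : {S : Finset V // S ∈ 𝓔} → ℝ)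
    (hx0 : ∀ S, 0 ≤ x S) (hx1 : ∀ S, x S ≤ 1)
    (hxcap : ∀ v : V,
      ∑ S : {S : Finset V // S ∈ 𝓔}, (if v ∈ S.1 then (d S.1 : ℝ) * x S else 0) ≤ (b v : ℝ)) :
    (fun S => x S / (2 * k)) ∈
      convexHull ℝ {χ : {S : Finset V // S ∈ 𝓔} → ℝ |
        ∃ M : Finset (Finset V), M ⊆ 𝓔 ∧
          (∀ v : V, ∑ S ∈ M.filter (fun S => v ∈ S), d S ≤ b v) ∧
          χ = fun S => if S.1 ∈ M then 1 else 0} := by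
  set y : Finset V → ℝ := fun S => if h : S ∈ 𝓔 then x ⟨S, h⟩ else 0
  have hyx : ∀ S : 𝓔, y S = x S := fun S => dif_pos S.2
  obtain ⟨p, hp, hmarg⟩ := HDM.exists_isPackingDistrib_marginal_eq (d := d) (b := b) (y := y) hk
    (fun S hS => (hcard S hS).2) (fun S hS => by linarith [hd S hS]) (fun v => by linarith [hb v])
    hnoclip (fun S hS => by simpa [hyx ⟨S, hS⟩] using hx0 ⟨S, hS⟩)
    (fun S hS => by simpa [hyx ⟨S, hS⟩] using hx1 ⟨S, hS⟩)
    (fun v => by simpa [sum_filter, ← sum_coe_sort 𝓔, hyx] using hxcap v)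
  have hx : (fun S => x S / (2 * k)) = fun S : 𝓔 => HDM.marginal 𝓔 p S :=
    funext fun S => by rw [hmarg S S.2, hyx]
  rw [hx]
  exact hp.marginal_mem_convexHull

/-- **Iterative packing for k-HDM.** For every k-HDM instance and every fractional
solution `x`, the vector `x/(2k)` lies in the convex hull (in `ℝ^𝓔`) of the indicator
vectors of integral solutions of the instance. -/
theorem kHDM_half_2k_in_convexHull
    {V : Type*} [Fintype V] [DecidableEq V]
    (k : ℕ) (hk : 1 ≤ k)
    (𝓔 : Finset (Finset V))
    (d : Finset V → ℤ) (b : V → ℤ)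
    (hcard : ∀ S ∈ 𝓔, 1 ≤ S.card ∧ S.card ≤ k)
    (hd : ∀ S ∈ 𝓔, 1 ≤ d S)
    (hb : ∀ v : V, 1 ≤ b v)
    (hnoclip : ∀ S ∈ 𝓔, ∀ v ∈ S, d S ≤ b v)
    (x : {S : Finset V // S ∈ 𝓔} → ℝ)
    (hx0 : ∀ S, 0 ≤ x S) (hx1 : ∀ S, x S ≤ 1)
    (hxcap : ∀ v : V,
      ∑ S : {S : Finset V // S ∈ 𝓔}, (if v ∈ S.1 then (d S.1 : ℝ) * x S else 0) ≤ (b v : ℝ)) :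
    (fun S => x S / (2 * k)) ∈
      convexHull ℝ {χ : {S : Finset V // S ∈ 𝓔} → ℝ |
        ∃ M : Finset (Finset V), M ⊆ 𝓔 ∧
          (∀ v : V, ∑ S ∈ M.filter (fun S => v ∈ S), d S ≤ b v) ∧
          χ = fun S => if S.1 ∈ M then 1 else 0} :=
  kHDM_half_2k_in_convexHull_general k hk 𝓔 d b hcard hd hb hnoclip x hx0 hx1 hxcap
end

section
/- For every k-HDM instance with profits c_S ≥ 0 for S ∈ 𝓔 and every fractional solution x, there exists an integral solution M with Σ_{S ∈ M} c_S ≥ (1/(2k)) Σ_{S ∈ 𝓔} c_S x_S. In particular, the integrality gap of the natural LP relaxation of k-HDM is at most 2k. -/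
open Finset

section HDMAux

variable {V : Type*} [Fintype V] [DecidableEq V]

/-- Integral load of a collection of hyperedges at a vertex. -/
def hdmLoad (d : Finset V → ℤ) (M : Finset (Finset V)) (v : V) : ℤ :=
  ∑ T ∈ M.filter (fun T => v ∈ T), d T

/-- Integral feasibility of a collection of hyperedges. -/
def hdmFeas (d : Finset V → ℤ) (b : V → ℤ) (M : Finset (Finset V)) : Prop :=
  ∀ v : V, hdmLoad d M v ≤ b v

lemma hdmLoad_eq (d : Finset V → ℤ) (M : Finset (Finset V)) (v : V) :
    hdmLoad d M v = ∑ T ∈ M.filter (fun T => v ∈ T), d T := rfl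

/-- **Iterated packing.** Any fractional solution `xt`, divided by `2k`, is a convex
combination of (indicators of) integral solutions, on any subfamily `A ⊆ 𝓔`. -/
lemma hdm_pack (k : ℕ) (hk : 1 ≤ k) (𝓔 : Finset (Finset V))
    (d : Finset V → ℤ) (b : V → ℤ)
    (hcard : ∀ S ∈ 𝓔, 1 ≤ S.card ∧ S.card ≤ k)
    (hd : ∀ S ∈ 𝓔, 1 ≤ d S) (hb : ∀ v : V, 1 ≤ b v)
    (hnoclip : ∀ S ∈ 𝓔, ∀ v ∈ S, d S ≤ b v)
    (xt : Finset V → ℝ) (hx0 : ∀ S, 0 ≤ xt S) (hx1 : ∀ S, xt S ≤ 1)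
    (hcap : ∀ v : V, ∑ S ∈ 𝓔.filter (fun S => v ∈ S), (d S : ℝ) * xt S ≤ (b v : ℝ)) :
    ∀ A : Finset (Finset V), A ⊆ 𝓔 →
      ∃ μ : Finset (Finset V) → ℝ,
        (∀ M, 0 ≤ μ M) ∧
        (∀ M, μ M ≠ 0 → M ⊆ A ∧ hdmFeas d b M) ∧
        (∑ M : Finset (Finset V), μ M = 1) ∧
        (∀ S ∈ A, (∑ M : Finset (Finset V), if S ∈ M then μ M else 0) = xt S / (2 * k)) := by
  classical
  intro A
  induction A using Finset.strongInduction with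
  | _ A ih =>
  intro hAE
  rcases A.eq_empty_or_nonempty with hAe | hAne
  · subst hAe
    refine ⟨fun M => if M = ∅ then 1 else 0, ?_, ?_, ?_, ?_⟩
    · intro M; dsimp only; split <;> norm_num
    · intro M hM
      have hM0 : M = ∅ := by by_contra h; simp [h] at hM
      subst hM0
      refine ⟨subset_rfl, fun v => ?_⟩
      have h1 : hdmLoad d (∅ : Finset (Finset V)) v = 0 := by
        simp [hdmLoad_eq]
      rw [h1]
      have := hb v; omega
    · simp
    · intro S hS; simp at hS
  · -- inductive step
    obtain ⟨S₀, hS₀A, hmin⟩ := A.exists_min_image d hAne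
    have hS₀E : S₀ ∈ 𝓔 := hAE hS₀A
    have hA'E : A.erase S₀ ⊆ 𝓔 := (erase_subset _ _).trans hAE
    obtain ⟨μ', hμ'0, hμ'supp, hμ'tot, hμ'marg⟩ :=
      ih (A.erase S₀) (Finset.erase_ssubset hS₀A) hA'E
    set A' := A.erase S₀ with hA'def
    set D : ℤ := d S₀ with hDdef
    set y : ℝ := xt S₀ with hydef
    have hy0 : 0 ≤ y := hx0 S₀
    have hy1 : y ≤ 1 := hx1 S₀
    have hD1 : 1 ≤ D := hd S₀ hS₀E
    have hkR : (1 : ℝ) ≤ (k : ℝ) := by exact_mod_cast hk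
    have h2k0 : (0 : ℝ) < 2 * k := by linarith
    set ℳ : Finset (Finset (Finset V)) :=
      univ.filter (fun M : Finset (Finset V) => S₀ ∈ M) with hℳdef
    set 𝒩 : Finset (Finset (Finset V)) :=
      univ.filter (fun N : Finset (Finset V) => S₀ ∉ N) with h𝒩def
    have hmem𝒩 : ∀ N ∈ 𝒩, S₀ ∉ N := by
      intro N hN
      rw [h𝒩def] at hN
      exact (mem_filter.1 hN).2
    -- μ' vanishes on sets containing S₀
    have L0 : ∀ N : Finset (Finset V), S₀ ∈ N → μ' N = 0 := by
      intro N hN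
      by_contra h
      exact (Finset.notMem_erase S₀ A) ((hμ'supp N h).1 hN)
    -- reindexing sums over sets containing S₀
    have REIDX : ∀ ψ : Finset (Finset V) → ℝ,
        ∑ M ∈ ℳ, ψ M = ∑ N ∈ 𝒩, ψ (insert S₀ N) := by
      intro ψ
      refine Finset.sum_nbij' (fun M => M.erase S₀) (fun N => insert S₀ N) ?_ ?_ ?_ ?_ ?_
      · intro M _
        rw [h𝒩def]
        exact mem_filter.2 ⟨mem_univ _, Finset.notMem_erase _ _⟩
      · intro N _
        rw [hℳdef]
        exact mem_filter.2 ⟨mem_univ _, mem_insert_self _ _⟩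
      · intro M hM
        rw [hℳdef] at hM
        exact Finset.insert_erase (mem_filter.1 hM).2
      · intro N hN
        rw [h𝒩def] at hN
        exact Finset.erase_insert (mem_filter.1 hN).2
      · intro M hM
        rw [hℳdef] at hM
        rw [Finset.insert_erase (mem_filter.1 hM).2]
    have SPLIT : ∀ ψ : Finset (Finset V) → ℝ,
        ∑ M : Finset (Finset V), ψ M
          = (∑ N ∈ 𝒩, ψ (insert S₀ N)) + ∑ N ∈ 𝒩, ψ N := by
      intro ψ
      rw [← Finset.sum_filter_add_sum_filter_not univ
        (fun M : Finset (Finset V) => S₀ ∈ M) ψ]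
      rw [← hℳdef, ← h𝒩def, REIDX ψ]
    -- total mass of μ' over 𝒩
    have SB : ∑ N ∈ 𝒩, μ' N = 1 := by
      have h1 := SPLIT μ'
      rw [hμ'tot] at h1
      have hz : ∑ N ∈ 𝒩, μ' (insert S₀ N) = 0 :=
        Finset.sum_eq_zero fun N _ => L0 _ (mem_insert_self _ _)
      rw [hz, zero_add] at h1
      exact h1.symm
    -- marginals of μ' as sums over 𝒩
    have MARGN : ∀ T ∈ A', (∑ N ∈ 𝒩, if T ∈ N then μ' N else 0) = xt T / (2 * k) := by
      intro T hT
      have h1 := hμ'marg T hT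
      rw [SPLIT (fun N => if T ∈ N then μ' N else 0)] at h1
      have hz : (∑ N ∈ 𝒩, if T ∈ insert S₀ N then μ' (insert S₀ N) else 0) = 0 :=
        Finset.sum_eq_zero fun N _ => by
          rw [L0 (insert S₀ N) (mem_insert_self _ _), ite_self]
      rw [hz, zero_add] at h1
      exact h1
    -- nonnegativity of loads of supported sets
    have hloadnn : ∀ N : Finset (Finset V), N ⊆ A' → ∀ v : V, (0 : ℤ) ≤ hdmLoad d N v := by
      intro N hN v
      rw [hdmLoad_eq]
      refine Finset.sum_nonneg fun T hT => ?_
      have hTE : T ∈ 𝓔 := hA'E (hN (mem_filter.1 hT).1)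
      linarith [hd T hTE]
    -- expected load identity
    have LOADSUM : ∀ v : V,
        ∑ N ∈ 𝒩, μ' N * ((hdmLoad d N v : ℤ) : ℝ)
          = ∑ T ∈ A'.filter (fun T => v ∈ T), (d T : ℝ) * (xt T / (2 * k)) := by
      intro v
      have point : ∀ N ∈ 𝒩, μ' N * ((hdmLoad d N v : ℤ) : ℝ)
          = ∑ T ∈ A'.filter (fun T => v ∈ T), (if T ∈ N then μ' N * (d T : ℝ) else 0) := by
        intro N _
        by_cases hμ : μ' N = 0
        · simp [hμ]
        · have hNsub : N ⊆ A' := (hμ'supp N hμ).1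
          have hset : N.filter (fun T => v ∈ T)
              = (A'.filter (fun T => v ∈ T)).filter (fun T => T ∈ N) := by
            ext T
            simp only [mem_filter]
            constructor
            · rintro ⟨hTN, hvT⟩; exact ⟨⟨hNsub hTN, hvT⟩, hTN⟩
            · rintro ⟨⟨_, hvT⟩, hTN⟩; exact ⟨hTN, hvT⟩
          rw [hdmLoad_eq, hset]
          push_cast
          rw [Finset.mul_sum, Finset.sum_filter]
      rw [Finset.sum_congr rfl point, Finset.sum_comm]
      refine Finset.sum_congr rfl fun T hT => ?_
      have hTA' : T ∈ A' := (mem_filter.1 hT).1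
      have h1 : ∑ N ∈ 𝒩, (if T ∈ N then μ' N * (d T : ℝ) else 0)
          = (∑ N ∈ 𝒩, if T ∈ N then μ' N else 0) * (d T : ℝ) := by
        rw [Finset.sum_mul]
        refine Finset.sum_congr rfl fun N _ => ?_
        split <;> simp
      rw [h1, MARGN T hTA']
      ring
    -- capacity bound on A' at vertices of S₀
    have CAP' : ∀ v ∈ S₀,
        ∑ T ∈ A'.filter (fun T => v ∈ T), (d T : ℝ) * xt T
          ≤ (b v : ℝ) - (D : ℝ) * y := by
      intro v hv
      have hnotin : S₀ ∉ A'.filter (fun T => v ∈ T) := by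
        intro h
        exact (Finset.notMem_erase S₀ A) ((mem_filter.1 h).1)
      have hsub : insert S₀ (A'.filter (fun T => v ∈ T)) ⊆ 𝓔.filter (fun T => v ∈ T) := by
        rw [Finset.insert_subset_iff]
        exact ⟨mem_filter.2 ⟨hS₀E, hv⟩,
          Finset.filter_subset_filter _ hA'E⟩
      have hchain : (D : ℝ) * y + ∑ T ∈ A'.filter (fun T => v ∈ T), (d T : ℝ) * xt T
          ≤ (b v : ℝ) := by
        calc (D : ℝ) * y + ∑ T ∈ A'.filter (fun T => v ∈ T), (d T : ℝ) * xt T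
            = ∑ T ∈ insert S₀ (A'.filter (fun T => v ∈ T)), (d T : ℝ) * xt T := by
              rw [Finset.sum_insert hnotin]
          _ ≤ ∑ T ∈ 𝓔.filter (fun T => v ∈ T), (d T : ℝ) * xt T := by
              refine Finset.sum_le_sum_of_subset_of_nonneg hsub fun T hT _ => ?_
              have hTE : T ∈ 𝓔 := (mem_filter.1 hT).1
              have hdT : (1 : ℝ) ≤ (d T : ℝ) := by exact_mod_cast hd T hTE
              exact mul_nonneg (by linarith) (hx0 T)
          _ ≤ (b v : ℝ) := hcap v
      linarith
    -- per-vertex blocking probability bound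
    have PV : ∀ v ∈ S₀,
        (∑ N ∈ 𝒩, if b v < hdmLoad d N v + D then μ' N else 0)
          ≤ (2 - y) / (2 * k) := by
      intro v hv
      set t : ℤ := max D (b v - D + 1) with htdef
      have htD : D ≤ t := le_max_left _ _
      have htB : b v - D + 1 ≤ t := le_max_right _ _
      have ht0 : (0 : ℤ) < t := by omega
      have htR0 : (0 : ℝ) < ((t : ℤ) : ℝ) := by exact_mod_cast ht0
      have hDb : D ≤ b v := hnoclip S₀ hS₀E v hv
      have step1 : (∑ N ∈ 𝒩, if b v < hdmLoad d N v + D then μ' N else 0)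
          ≤ ∑ N ∈ 𝒩, μ' N * (((hdmLoad d N v : ℤ) : ℝ) / ((t : ℤ) : ℝ)) := by
        refine Finset.sum_le_sum fun N _ => ?_
        by_cases hμ : μ' N = 0
        · simp [hμ]
        · obtain ⟨hNsub, _⟩ := hμ'supp N hμ
          have hl0 : (0 : ℤ) ≤ hdmLoad d N v := hloadnn N hNsub v
          by_cases hviol : b v < hdmLoad d N v + D
          · rw [if_pos hviol]
            have h1 : b v - D + 1 ≤ hdmLoad d N v := by omega
            have h2 : D ≤ hdmLoad d N v := by
              rcases (N.filter (fun T => v ∈ T)).eq_empty_or_nonempty with he | hne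
              · exfalso
                have hz : hdmLoad d N v = 0 := by rw [hdmLoad_eq, he, Finset.sum_empty]
                omega
              · obtain ⟨T₀, hT₀⟩ := hne
                have hT₀N : T₀ ∈ N := (mem_filter.1 hT₀).1
                have h1' : d T₀ ≤ hdmLoad d N v := by
                  rw [hdmLoad_eq]
                  refine Finset.single_le_sum (f := d) (fun T hT => ?_) hT₀
                  have hTE : T ∈ 𝓔 := hA'E (hNsub (mem_filter.1 hT).1)
                  linarith [hd T hTE]
                have h2' : D ≤ d T₀ := hmin T₀ (Finset.mem_of_mem_erase (hNsub hT₀N))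
                omega
            have hlt : t ≤ hdmLoad d N v := max_le h2 h1
            have hltR : ((t : ℤ) : ℝ) ≤ ((hdmLoad d N v : ℤ) : ℝ) := by exact_mod_cast hlt
            have hone : (1 : ℝ) ≤ ((hdmLoad d N v : ℤ) : ℝ) / ((t : ℤ) : ℝ) :=
              (one_le_div htR0).2 hltR
            exact le_mul_of_one_le_right (hμ'0 N) hone
          · rw [if_neg hviol]
            have hl0R : (0 : ℝ) ≤ ((hdmLoad d N v : ℤ) : ℝ) := by exact_mod_cast hl0
            exact mul_nonneg (hμ'0 N) (div_nonneg hl0R (le_of_lt htR0))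
      have step2 : ∑ N ∈ 𝒩, μ' N * (((hdmLoad d N v : ℤ) : ℝ) / ((t : ℤ) : ℝ))
          = (∑ T ∈ A'.filter (fun T => v ∈ T), (d T : ℝ) * xt T)
              / ((2 * k) * ((t : ℤ) : ℝ)) := by
        have e1 : ∀ N ∈ 𝒩, μ' N * (((hdmLoad d N v : ℤ) : ℝ) / ((t : ℤ) : ℝ))
            = (μ' N * ((hdmLoad d N v : ℤ) : ℝ)) / ((t : ℤ) : ℝ) :=
          fun N _ => (mul_div_assoc _ _ _).symm
        rw [Finset.sum_congr rfl e1, ← Finset.sum_div, LOADSUM v]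
        have e2 : ∑ T ∈ A'.filter (fun T => v ∈ T), (d T : ℝ) * (xt T / (2 * k))
            = (∑ T ∈ A'.filter (fun T => v ∈ T), (d T : ℝ) * xt T) / (2 * k) := by
          rw [Finset.sum_div]
          exact Finset.sum_congr rfl fun T _ => by ring
        rw [e2, div_div]
      have htDR : (D : ℝ) ≤ ((t : ℤ) : ℝ) := by exact_mod_cast htD
      have htBR : (b v : ℝ) - (D : ℝ) + 1 ≤ ((t : ℤ) : ℝ) := by exact_mod_cast htB
      have hP : (1 - y) * (D : ℝ) ≤ (1 - y) * ((t : ℤ) : ℝ) :=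
        mul_le_mul_of_nonneg_left htDR (by linarith)
      have key : (b v : ℝ) - (D : ℝ) * y ≤ (2 - y) * ((t : ℤ) : ℝ) := by nlinarith [hP, htBR]
      have htne : ((t : ℤ) : ℝ) ≠ 0 := ne_of_gt htR0
      calc (∑ N ∈ 𝒩, if b v < hdmLoad d N v + D then μ' N else 0)
          ≤ ∑ N ∈ 𝒩, μ' N * (((hdmLoad d N v : ℤ) : ℝ) / ((t : ℤ) : ℝ)) := step1
        _ = (∑ T ∈ A'.filter (fun T => v ∈ T), (d T : ℝ) * xt T)
              / ((2 * k) * ((t : ℤ) : ℝ)) := step2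
        _ ≤ ((b v : ℝ) - (D : ℝ) * y) / ((2 * k) * ((t : ℤ) : ℝ)) := by
            rw [div_le_div_iff_of_pos_right (mul_pos h2k0 htR0)]
            exact CAP' v hv
        _ ≤ ((2 - y) * ((t : ℤ) : ℝ)) / ((2 * k) * ((t : ℤ) : ℝ)) := by
            rw [div_le_div_iff_of_pos_right (mul_pos h2k0 htR0)]
            exact key
        _ = (2 - y) / (2 * k) := by
            field_simp
    -- the feasible-insertion mass F
    set F : ℝ := ∑ N ∈ 𝒩, (if hdmFeas d b (insert S₀ N) then μ' N else 0) with hFdef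
    have hFc : F + (∑ N ∈ 𝒩, if hdmFeas d b (insert S₀ N) then 0 else μ' N) = 1 := by
      rw [hFdef, ← Finset.sum_add_distrib]
      have e : ∀ N ∈ 𝒩,
          ((if hdmFeas d b (insert S₀ N) then μ' N else 0)
            + (if hdmFeas d b (insert S₀ N) then 0 else μ' N)) = μ' N := by
        intro N _
        by_cases hC : hdmFeas d b (insert S₀ N)
        · simp [hC]
        · simp [hC]
      rw [Finset.sum_congr rfl e, SB]
    have FCB : (∑ N ∈ 𝒩, if hdmFeas d b (insert S₀ N) then 0 else μ' N) ≤ (2 - y) / 2 := by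
      have pstep : ∀ N ∈ 𝒩, (if hdmFeas d b (insert S₀ N) then 0 else μ' N)
          ≤ ∑ v ∈ S₀, (if b v < hdmLoad d N v + D then μ' N else 0) := by
        intro N hN
        have hS₀N : S₀ ∉ N := by
          have := hmem𝒩 N hN
          exact this
        by_cases hμ : μ' N = 0
        · simp [hμ]
        · obtain ⟨hNsub, hNfeas⟩ := hμ'supp N hμ
          by_cases hG : hdmFeas d b (insert S₀ N)
          · rw [if_pos hG]
            refine Finset.sum_nonneg fun v _ => ?_
            split
            · exact hμ'0 N
            · exact le_rfl
          · rw [if_neg hG]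
            unfold hdmFeas at hG
            push_neg at hG
            obtain ⟨v₀, hv₀⟩ := hG
            have hv₀S₀ : v₀ ∈ S₀ := by
              by_contra hns
              have heq : hdmLoad d (insert S₀ N) v₀ = hdmLoad d N v₀ := by
                rw [hdmLoad_eq, hdmLoad_eq, Finset.filter_insert, if_neg hns]
              rw [heq] at hv₀
              exact absurd (hNfeas v₀) (not_le.2 hv₀)
            have hload : hdmLoad d (insert S₀ N) v₀ = D + hdmLoad d N v₀ := by
              rw [hdmLoad_eq, hdmLoad_eq, Finset.filter_insert, if_pos hv₀S₀,
                Finset.sum_insert]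
              intro hmem
              exact hS₀N (mem_filter.1 hmem).1
            have hviol : b v₀ < hdmLoad d N v₀ + D := by
              rw [hload] at hv₀; omega
            calc μ' N = (if b v₀ < hdmLoad d N v₀ + D then μ' N else 0) :=
                  (if_pos hviol).symm
              _ ≤ ∑ v ∈ S₀, (if b v < hdmLoad d N v + D then μ' N else 0) := by
                  refine Finset.single_le_sum (f := fun v =>
                    (if b v < hdmLoad d N v + D then μ' N else 0)) (fun v _ => ?_) hv₀S₀
                  split
                  · exact hμ'0 N
                  · exact le_rfl
      calc (∑ N ∈ 𝒩, if hdmFeas d b (insert S₀ N) then 0 else μ' N)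
          ≤ ∑ N ∈ 𝒩, ∑ v ∈ S₀, (if b v < hdmLoad d N v + D then μ' N else 0) :=
            Finset.sum_le_sum pstep
        _ = ∑ v ∈ S₀, ∑ N ∈ 𝒩, (if b v < hdmLoad d N v + D then μ' N else 0) :=
            Finset.sum_comm
        _ ≤ ∑ v ∈ S₀, (2 - y) / (2 * k) := Finset.sum_le_sum (fun v hv => PV v hv)
        _ = (S₀.card : ℝ) * ((2 - y) / (2 * k)) := by
            rw [Finset.sum_const, nsmul_eq_mul]
        _ ≤ (k : ℝ) * ((2 - y) / (2 * k)) := by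
            have hcardk : (S₀.card : ℝ) ≤ (k : ℝ) := by exact_mod_cast (hcard S₀ hS₀E).2
            have hnn : (0 : ℝ) ≤ (2 - y) / (2 * k) :=
              div_nonneg (by linarith) (le_of_lt h2k0)
            exact mul_le_mul_of_nonneg_right hcardk hnn
        _ = (2 - y) / 2 := by
            have hkne : (k : ℝ) ≠ 0 := by linarith
            field_simp
    have hF0 : 0 ≤ F := by
      rw [hFdef]
      refine Finset.sum_nonneg fun N _ => ?_
      split
      · exact hμ'0 N
      · exact le_rfl
    have hyF : y / 2 ≤ F := by linarith
    set β : ℝ := y / (2 * k) with hβdef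
    have hβ0 : 0 ≤ β := div_nonneg hy0 (le_of_lt h2k0)
    have hβF : β ≤ F := by
      have hβy2 : β ≤ y / 2 := by
        rw [hβdef, div_le_div_iff₀ h2k0 (by norm_num : (0:ℝ) < 2)]
        nlinarith
      linarith
    set ρ : ℝ := β / F with hρdef
    have hρ0 : 0 ≤ ρ := div_nonneg hβ0 hF0
    have hρF : ρ * F = β := by
      rcases eq_or_lt_of_le hF0 with hF | hF
      · have hβz : β = 0 := by
          have : β ≤ 0 := by rw [hF]; exact hβF
          linarith
        rw [hρdef, ← hF]
        simp [hβz]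
      · rw [hρdef]
        field_simp
    have hρ1 : ρ ≤ 1 := by
      rcases eq_or_lt_of_le hF0 with hF | hF
      · rw [hρdef, ← hF, div_zero]
        norm_num
      · rw [hρdef, div_le_one hF]
        exact hβF
    -- the new distribution
    set μ : Finset (Finset V) → ℝ := fun M =>
      if S₀ ∈ M then ρ * (if hdmFeas d b (insert S₀ (M.erase S₀)) then μ' (M.erase S₀) else 0)
      else (1 - ρ * (if hdmFeas d b (insert S₀ M) then 1 else 0)) * μ' M with hμdef
    have H1 : ∀ N : Finset (Finset V), S₀ ∉ N →
        μ (insert S₀ N) = ρ * (if hdmFeas d b (insert S₀ N) then μ' N else 0) := by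
      intro N hN
      simp only [hμdef]
      rw [if_pos (mem_insert_self S₀ N), Finset.erase_insert hN]
    have H2 : ∀ M : Finset (Finset V), S₀ ∉ M →
        μ M = (1 - ρ * (if hdmFeas d b (insert S₀ M) then 1 else 0)) * μ' M := by
      intro M hM
      simp only [hμdef]
      rw [if_neg hM]
    refine ⟨μ, ?_, ?_, ?_, ?_⟩
    · -- nonnegativity
      intro M
      simp only [hμdef]
      by_cases h1 : S₀ ∈ M
      · rw [if_pos h1]
        refine mul_nonneg hρ0 ?_
        split
        · exact hμ'0 _
        · exact le_rfl
      · rw [if_neg h1]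
        refine mul_nonneg ?_ (hμ'0 M)
        split
        · linarith
        · simp
    · -- support
      intro M hM
      by_cases h1 : S₀ ∈ M
      · rw [hμdef] at hM
        simp only at hM
        rw [if_pos h1] at hM
        have h2 : (if hdmFeas d b (insert S₀ (M.erase S₀)) then μ' (M.erase S₀) else 0) ≠ 0 :=
          fun h => hM (by rw [h, mul_zero])
        have hGe : hdmFeas d b (insert S₀ (M.erase S₀)) := by
          by_contra h
          rw [if_neg h] at h2
          exact h2 rfl
        have hμe : μ' (M.erase S₀) ≠ 0 := by rwa [if_pos hGe] at h2
        obtain ⟨hsub, _⟩ := hμ'supp _ hμe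
        constructor
        · intro T hT
          rcases eq_or_ne T S₀ with rfl | hTne
          · exact hS₀A
          · exact Finset.mem_of_mem_erase (hsub (Finset.mem_erase.2 ⟨hTne, hT⟩))
        · rw [Finset.insert_erase h1] at hGe
          exact hGe
      · rw [H2 M h1] at hM
        have hμM : μ' M ≠ 0 := fun h => hM (by rw [h, mul_zero])
        obtain ⟨hsub, hfeas⟩ := hμ'supp M hμM
        exact ⟨hsub.trans (Finset.erase_subset _ _), hfeas⟩
    · -- total mass
      rw [SPLIT μ]
      have e1 : ∀ N ∈ 𝒩, μ (insert S₀ N) + μ N = μ' N := by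
        intro N hN
        have hS₀N : S₀ ∉ N := hmem𝒩 N hN
        rw [H1 N hS₀N, H2 N hS₀N]
        by_cases hC : hdmFeas d b (insert S₀ N)
        · rw [if_pos hC, if_pos hC]; ring
        · rw [if_neg hC, if_neg hC]; ring
      rw [← Finset.sum_add_distrib, Finset.sum_congr rfl e1, SB]
    · -- marginals
      intro S hS
      by_cases hSS₀ : S = S₀
      · subst hSS₀
        rw [SPLIT (fun M => if S ∈ M then μ M else 0)]
        have e1 : ∀ N ∈ 𝒩, (if S ∈ insert S N then μ (insert S N) else 0)
            = ρ * (if hdmFeas d b (insert S N) then μ' N else 0) := by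
          intro N hN
          have hS₀N : S ∉ N := hmem𝒩 N hN
          rw [if_pos (mem_insert_self _ _), H1 N hS₀N]
        have e2 : ∀ N ∈ 𝒩, (if S ∈ N then μ N else 0) = 0 := by
          intro N hN
          have hS₀N : S ∉ N := hmem𝒩 N hN
          rw [if_neg hS₀N]
        rw [Finset.sum_congr rfl e1, Finset.sum_congr rfl e2, Finset.sum_const_zero,
          add_zero, ← Finset.mul_sum, ← hFdef, hρF, hβdef, hydef]
      · have hSA' : S ∈ A' := by
          rw [hA'def]
          exact Finset.mem_erase.2 ⟨hSS₀, hS⟩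
        rw [SPLIT (fun M => if S ∈ M then μ M else 0)]
        have e1 : ∀ N ∈ 𝒩,
            ((if S ∈ insert S₀ N then μ (insert S₀ N) else 0) + (if S ∈ N then μ N else 0))
              = (if S ∈ N then μ' N else 0) := by
          intro N hN
          have hS₀N : S₀ ∉ N := hmem𝒩 N hN
          by_cases hSN : S ∈ N
          · rw [if_pos (Finset.mem_insert_of_mem hSN), if_pos hSN, if_pos hSN,
              H1 N hS₀N, H2 N hS₀N]
            by_cases hC : hdmFeas d b (insert S₀ N)
            · rw [if_pos hC, if_pos hC]; ring
            · rw [if_neg hC, if_neg hC]; ring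
          · have hSiN : S ∉ insert S₀ N := by
              rw [Finset.mem_insert]
              push_neg
              exact ⟨hSS₀, hSN⟩
            rw [if_neg hSiN, if_neg hSN, if_neg hSN, zero_add]
        rw [← Finset.sum_add_distrib, Finset.sum_congr rfl e1]
        exact MARGN S hSA'

end HDMAux

/-- **2k-approximation for k-HDM.** For every k-HDM instance with nonnegative profits
and every fractional solution `x`, there exists an integral solution `M` whose profit
is at least `(1/(2k))` times the LP value of `x`; in particular the integrality gap of
the natural LP relaxation of k-HDM is at most `2k`. -/
theorem kHDM_two_k_approximation
    {V : Type*} [Fintype V] [DecidableEq V]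
    (k : ℕ) (hk : 1 ≤ k)
    (𝓔 : Finset (Finset V))
    (d : Finset V → ℤ) (b : V → ℤ) (c : Finset V → ℝ)
    (hcard : ∀ S ∈ 𝓔, 1 ≤ S.card ∧ S.card ≤ k)
    (hd : ∀ S ∈ 𝓔, 1 ≤ d S)
    (hb : ∀ v : V, 1 ≤ b v)
    (hnoclip : ∀ S ∈ 𝓔, ∀ v ∈ S, d S ≤ b v)
    (hc : ∀ S ∈ 𝓔, 0 ≤ c S)
    (x : {S : Finset V // S ∈ 𝓔} → ℝ)
    (hx0 : ∀ S, 0 ≤ x S) (hx1 : ∀ S, x S ≤ 1)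
    (hxcap : ∀ v : V,
      ∑ S : {S : Finset V // S ∈ 𝓔}, (if v ∈ S.1 then (d S.1 : ℝ) * x S else 0) ≤ (b v : ℝ)) :
    ∃ M : Finset (Finset V), M ⊆ 𝓔 ∧
      (∀ v : V, ∑ S ∈ M.filter (fun S => v ∈ S), d S ≤ b v) ∧
      (1 / (2 * k)) * ∑ S : {S : Finset V // S ∈ 𝓔}, c S.1 * x S ≤ ∑ S ∈ M, c S := by
  classical
  set xt : Finset V → ℝ := fun S => if h : S ∈ 𝓔 then x ⟨S, h⟩ else 0 with hxtdef
  have hxteq : ∀ S : {S : Finset V // S ∈ 𝓔}, xt S.1 = x S := by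
    intro S
    simp only [hxtdef]
    rw [dif_pos S.2]
  have hxt0 : ∀ S, 0 ≤ xt S := by
    intro S
    simp only [hxtdef]
    split
    · exact hx0 _
    · exact le_rfl
  have hxt1 : ∀ S, xt S ≤ 1 := by
    intro S
    simp only [hxtdef]
    split
    · exact hx1 _
    · norm_num
  have hcap : ∀ v : V, ∑ S ∈ 𝓔.filter (fun S => v ∈ S), (d S : ℝ) * xt S ≤ (b v : ℝ) := by
    intro v
    have h1 : ∑ S ∈ 𝓔.filter (fun S => v ∈ S), (d S : ℝ) * xt S
        = ∑ S ∈ 𝓔, (if v ∈ S then (d S : ℝ) * xt S else 0) := Finset.sum_filter _ _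
    have h2 : ∑ S ∈ 𝓔, (if v ∈ S then (d S : ℝ) * xt S else 0)
        = ∑ S : {S : Finset V // S ∈ 𝓔}, (if v ∈ S.1 then (d S.1 : ℝ) * xt S.1 else 0) :=
      (Finset.sum_coe_sort 𝓔 _).symm
    rw [h1, h2]
    have h3 : ∀ S : {S : Finset V // S ∈ 𝓔},
        (if v ∈ S.1 then (d S.1 : ℝ) * xt S.1 else 0)
          = (if v ∈ S.1 then (d S.1 : ℝ) * x S else 0) := by
      intro S
      rw [hxteq]
    rw [Finset.sum_congr rfl fun S _ => h3 S]
    exact hxcap v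
  obtain ⟨μ, hμ0, hμsupp, hμtot, hμmarg⟩ :=
    hdm_pack k hk 𝓔 d b hcard hd hb hnoclip xt hxt0 hxt1 hcap 𝓔 subset_rfl
  have hval : ∑ M : Finset (Finset V), μ M * (∑ S ∈ M, c S)
      = (1 / (2 * k)) * ∑ S : {S : Finset V // S ∈ 𝓔}, c S.1 * x S := by
    have point : ∀ M : Finset (Finset V), μ M * (∑ S ∈ M, c S)
        = ∑ S ∈ 𝓔, (if S ∈ M then μ M * c S else 0) := by
      intro M
      by_cases hμ : μ M = 0
      · simp [hμ]
      · have hsub : M ⊆ 𝓔 := (hμsupp M hμ).1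
        have hMsum : (∑ S ∈ M, c S) = ∑ S ∈ 𝓔, (if S ∈ M then c S else 0) := by
          rw [← Finset.sum_filter]
          refine Finset.sum_congr ?_ (fun _ _ => rfl)
          ext S
          simp only [mem_filter]
          exact ⟨fun h => ⟨hsub h, h⟩, fun h => h.2⟩
        rw [hMsum, Finset.mul_sum]
        refine Finset.sum_congr rfl fun S _ => ?_
        split
        · rfl
        · exact mul_zero _
    rw [Finset.sum_congr rfl fun M _ => point M, Finset.sum_comm]
    have inner : ∀ S ∈ 𝓔, (∑ M : Finset (Finset V), if S ∈ M then μ M * c S else 0)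
        = (xt S / (2 * k)) * c S := by
      intro S hS
      have e : ∀ M : Finset (Finset V),
          (if S ∈ M then μ M * c S else 0) = (if S ∈ M then μ M else 0) * c S := by
        intro M
        split
        · rfl
        · exact (zero_mul _).symm
      rw [Finset.sum_congr rfl fun M _ => e M, ← Finset.sum_mul, hμmarg S hS]
    rw [Finset.sum_congr rfl inner]
    have hsub2 : ∑ S : {S : Finset V // S ∈ 𝓔}, c S.1 * x S = ∑ S ∈ 𝓔, c S * xt S := by
      rw [← Finset.sum_coe_sort 𝓔 (fun S => c S * xt S)]
      refine Finset.sum_congr rfl fun S _ => ?_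
      rw [hxteq]
    rw [hsub2, Finset.mul_sum]
    refine Finset.sum_congr rfl fun S _ => ?_
    ring
  have hex : ∃ M : Finset (Finset V), μ M ≠ 0 ∧
      (1 / (2 * k)) * ∑ S : {S : Finset V // S ∈ 𝓔}, c S.1 * x S ≤ ∑ S ∈ M, c S := by
    by_contra hcon
    push_neg at hcon
    obtain ⟨M₀, hM₀⟩ : ∃ M : Finset (Finset V), μ M ≠ 0 := by
      by_contra hall
      push_neg at hall
      simp [hall] at hμtot
    have hlt : ∀ M ∈ (univ : Finset (Finset (Finset V))),
        μ M * (∑ S ∈ M, c S)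
          ≤ μ M * ((1 / (2 * k)) * ∑ S : {S : Finset V // S ∈ 𝓔}, c S.1 * x S) := by
      intro M _
      by_cases hμ : μ M = 0
      · rw [hμ]; simp
      · exact mul_le_mul_of_nonneg_left (le_of_lt (hcon M hμ)) (hμ0 M)
    have hstrict : μ M₀ * (∑ S ∈ M₀, c S)
        < μ M₀ * ((1 / (2 * k)) * ∑ S : {S : Finset V // S ∈ 𝓔}, c S.1 * x S) :=
      mul_lt_mul_of_pos_left (hcon M₀ hM₀) (lt_of_le_of_ne (hμ0 M₀) (Ne.symm hM₀))
    have hsum := Finset.sum_lt_sum hlt ⟨M₀, mem_univ M₀, hstrict⟩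
    rw [hval, ← Finset.sum_mul, hμtot, one_mul] at hsum
    exact lt_irrefl _ hsum
  obtain ⟨M, hMne, hMval⟩ := hex
  obtain ⟨hMsub, hMfeas⟩ := hμsupp M hMne
  exact ⟨M, hMsub, fun v => hMfeas v, hMval⟩
end

section
/- Let k ≥ 1 be an integer, let d and δ̄ be real numbers with 1 ≤ d ≤ δ̄, let b_1, …, b_k be real numbers with b_u ≥ d for each u = 1, …, k, and let x be a real number with 0 ≤ x ≤ 1. Then x + Σ_{u=1}^{k} (b_u − d·x) / max(b_u − d + 1, δ̄) ≤ 2k. -/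
/-!
Each summand is at most `2 - x`. Both sides are affine in `x`, so it suffices to check the
endpoints: at `x = 0` because `max a c ≥ (a + c) / 2` gives `b ≤ 2 max (b - d + 1) δ`, and at
`x = 1` because `b - d < b - d + 1`. Summing, the left-hand side is at most
`x + k (2 - x) = 2k - (k - 1) x ≤ 2k`.
-/

open Finset

theorem le_two_mul_max_sub_add_one {b d δ : ℝ} (hdδ : d ≤ δ) :
    b ≤ 2 * max (b - d + 1) δ := by
  linarith [le_max_left (b - d + 1) δ, le_max_right (b - d + 1) δ]

theorem sub_mul_div_max_sub_add_one_le {b d δ x : ℝ} (hb : d ≤ b) (hdδ : d ≤ δ)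
    (hx0 : 0 ≤ x) (hx1 : x ≤ 1) :
    (b - d * x) / max (b - d + 1) δ ≤ 2 - x := by
  set M := max (b - d + 1) δ
  have hM : 0 < M := lt_max_of_lt_left (by linarith)
  have h_at_zero : b ≤ 2 * M := le_two_mul_max_sub_add_one hdδ
  have h_at_one : b - d ≤ M := by linarith [le_max_left (b - d + 1) δ]
  rw [div_le_iff₀ hM]
  linarith [mul_le_mul_of_nonneg_left h_at_zero (sub_nonneg.2 hx1),
    mul_le_mul_of_nonneg_left h_at_one hx0]

theorem kHDM_key_inequality_general
    (k : ℕ) (hk : 1 ≤ k)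
    (d δ : ℝ) (hdδ : d ≤ δ)
    (b : Fin k → ℝ) (hb : ∀ u, d ≤ b u)
    (x : ℝ) (hx0 : 0 ≤ x) (hx1 : x ≤ 1) :
    x + ∑ u : Fin k, (b u - d * x) / max (b u - d + 1) δ ≤ 2 * k := by
  have hk' : (1 : ℝ) ≤ k := by exact_mod_cast hk
  calc x + ∑ u : Fin k, (b u - d * x) / max (b u - d + 1) δ
      ≤ x + ∑ _u : Fin k, (2 - x) := by
        gcongr with u
        exact sub_mul_div_max_sub_add_one_le (hb u) hdδ hx0 hx1
    _ = 2 * k - (k - 1) * x := by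
        simp only [sum_const, card_univ, Fintype.card_fin, nsmul_eq_mul]
        ring
    _ ≤ 2 * k := sub_le_self _ (mul_nonneg (sub_nonneg.2 hk') hx0)

/-- The key arithmetic inequality in the proof of the 2k-approximation guarantee for
k-HDM: for `1 ≤ d ≤ δ̄`, capacities `b u ≥ d` and `0 ≤ x ≤ 1`,
`x + Σ_u (b_u − d·x) / max (b_u − d + 1) δ̄ ≤ 2k`. -/
theorem kHDM_key_inequality
    (k : ℕ) (hk : 1 ≤ k)
    (d δ : ℝ) (hd : 1 ≤ d) (hdδ : d ≤ δ)
    (b : Fin k → ℝ) (hb : ∀ u, d ≤ b u)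
    (x : ℝ) (hx0 : 0 ≤ x) (hx1 : x ≤ 1) :
    x + ∑ u : Fin k, (b u - d * x) / max (b u - d + 1) δ ≤ 2 * k :=
  kHDM_key_inequality_general k hk d δ hdδ b hb x hx0 hx1
end

section
/- Let a k-HDM instance be given, let S₀ ∈ 𝓔, let x be a fractional solution, and let x̄ : 𝓔 → ℝ agree with x on 𝓔 ∖ {S₀} and satisfy x̄_{S₀} = 0. Let α ∈ (0,1], and suppose α·x̄ = Σ_{i ∈ I} μ_i χ^i is a convex combination (I finite, μ_i ≥ 0, Σ_{i ∈ I} μ_i = 1) of the indicator vectors χ^i of integral solutions M_i with S₀ ∉ M_i. For u ∈ S₀ let β_u := Σ { μ_i : i ∈ I such that Σ_{T ∈ M_i : u ∈ T} d_T > b_u − d_{S₀} } (the fraction of the solutions in which S₀ is blocked at u). If 1 − Σ_{u ∈ S₀} β_u ≥ α·x_{S₀}, then α·x lies in the convex hull of the indicator vectors of integral solutions of the instance. -/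
/-!
Call a solution `M i` free if `S₀` still fits into it at every `u ∈ S₀`. By the union bound the
free solutions carry mass at least `1 - ∑ u ∈ S₀, β u ≥ α * x S₀`. Adding `S₀` to a free solution
keeps it feasible and adds the indicator of `S₀` to its indicator vector, so the point
`α • x̄ + (mass of free solutions) • 𝟙_{S₀}` lies in the hull as well, and `α • x` lies on the
segment between it and `α • x̄`.
-/

open Finset

theorem Finset.sum_filter_exists_le_sum_sum_filter {ι α β : Type*} [AddCommMonoid β]
    [PartialOrder β] [IsOrderedAddMonoid β] (I : Finset ι) (s : Finset α) (P : α → ι → Prop)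
    [∀ u i, Decidable (P u i)] {μ : ι → β} (hμ : ∀ i ∈ I, 0 ≤ μ i) :
    ∑ i ∈ I with ∃ u ∈ s, P u i, μ i ≤ ∑ u ∈ s, ∑ i ∈ I with P u i, μ i := by
  calc ∑ i ∈ I with ∃ u ∈ s, P u i, μ i
      ≤ ∑ i ∈ I with ∃ u ∈ s, P u i, ∑ u ∈ s with P u i, μ i := by
        refine sum_le_sum fun i hi => ?_
        obtain ⟨hiI, u, hu, hP⟩ := mem_filter.mp hi
        exact single_le_sum (f := fun _ => μ i) (fun _ _ => hμ i hiI) (mem_filter.mpr ⟨hu, hP⟩)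
    _ ≤ ∑ i ∈ I, ∑ u ∈ s with P u i, μ i :=
        sum_le_sum_of_subset_of_nonneg (filter_subset _ _)
          fun i hi _ => sum_nonneg fun _ _ => hμ i hi
    _ = ∑ u ∈ s, ∑ i ∈ I with P u i, μ i := by
        simp_rw [sum_filter]
        exact sum_comm

theorem add_smul_mem_convexHull_of_le_sum_filter {𝕜 E ι : Type*} [Field 𝕜] [LinearOrder 𝕜]
    [IsStrictOrderedRing 𝕜] [AddCommGroup E] [Module 𝕜 E] {s : Set E} {I : Finset ι}
    {μ : ι → 𝕜} {p : ι → E} {e : E} {G : ι → Prop} [DecidablePred G] {t : 𝕜}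
    (hμ0 : ∀ i ∈ I, 0 ≤ μ i) (hμ1 : ∑ i ∈ I, μ i = 1) (hp : ∀ i ∈ I, p i ∈ s)
    (hpe : ∀ i ∈ I, G i → p i + e ∈ s) (ht0 : 0 ≤ t) (ht : t ≤ ∑ i ∈ I with G i, μ i) :
    ∑ i ∈ I, μ i • p i + t • e ∈ convexHull 𝕜 s := by
  set T := ∑ i ∈ I with G i, μ i
  have hT0 : 0 ≤ T := ht0.trans ht
  have hconv : ∀ q : ι → E, (∀ i ∈ I, q i ∈ s) → ∑ i ∈ I, μ i • q i ∈ convexHull 𝕜 s :=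
    fun q hq => (convex_convexHull 𝕜 s).sum_mem hμ0 hμ1 fun i hi => subset_convexHull 𝕜 s (hq i hi)
  have hfull : ∑ i ∈ I, μ i • p i + T • e ∈ convexHull 𝕜 s := by
    convert hconv (fun i => if G i then p i + e else p i)
      (fun i hi => by split_ifs with h; exacts [hpe i hi h, hp i hi]) using 1
    simp only [T, sum_smul, sum_filter, ← sum_add_distrib]
    refine sum_congr rfl fun i _ => ?_
    split_ifs <;> simp [smul_add]
  have := (convex_convexHull 𝕜 s).add_smul_sub_mem (hconv p hp) hfull
    ⟨div_nonneg ht0 hT0, div_le_one_of_le₀ ht hT0⟩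
  rwa [add_sub_cancel_left, smul_smul, div_mul_cancel_of_imp fun h => le_antisymm (h ▸ ht) ht0]
    at this

namespace kHDM

variable {V : Type*} [DecidableEq V]

def load (d : Finset V → ℤ) (N : Finset (Finset V)) (v : V) : ℤ :=
  ∑ S ∈ N with v ∈ S, d S

theorem load_insert {d : Finset V → ℤ} {N : Finset (Finset V)} {S : Finset V} (hS : S ∉ N)
    (v : V) : load d (insert S N) v = (if v ∈ S then d S else 0) + load d N v := by
  unfold load
  rw [filter_insert]
  split_ifs
  · exact sum_insert fun h => hS (mem_filter.mp h).1
  · rw [zero_add]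

theorem load_insert_le {d : Finset V → ℤ} {b : V → ℤ} {N : Finset (Finset V)} {S : Finset V}
    (hS : S ∉ N) (hN : ∀ v, load d N v ≤ b v) (hfit : ∀ u ∈ S, load d N u ≤ b u - d S) (v : V) :
    load d (insert S N) v ≤ b v := by
  rw [load_insert hS]
  split_ifs with hv
  · linarith [hfit v hv]
  · simpa using hN v

end kHDM

theorem kHDM_pack_edge_general
    {V : Type*} [DecidableEq V]
    (𝓔 : Finset (Finset V))
    (d : Finset V → ℤ) (b : V → ℤ)
    (S₀ : {S : Finset V // S ∈ 𝓔})
    (x : {S : Finset V // S ∈ 𝓔} → ℝ)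
    (hx0 : ∀ S, 0 ≤ x S)
    (xbar : {S : Finset V // S ∈ 𝓔} → ℝ)
    (hxbar : ∀ S, S ≠ S₀ → xbar S = x S) (hxbar0 : xbar S₀ = 0)
    (α : ℝ) (hα0 : 0 < α)
    {ι : Type*} (I : Finset ι) (μ : ι → ℝ) (M : ι → Finset (Finset V))
    (hM𝓔 : ∀ i ∈ I, M i ⊆ 𝓔)
    (hMfeas : ∀ i ∈ I, ∀ v : V, ∑ T ∈ (M i).filter (fun T => v ∈ T), d T ≤ b v)
    (hMS₀ : ∀ i ∈ I, S₀.1 ∉ M i)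
    (hμ0 : ∀ i ∈ I, 0 ≤ μ i) (hμ1 : ∑ i ∈ I, μ i = 1)
    (hdecomp : ∀ S, α * xbar S = ∑ i ∈ I, μ i * (if S.1 ∈ M i then 1 else 0))
    (hpack : α * x S₀ ≤ 1 - ∑ u ∈ S₀.1,
      ∑ i ∈ I.filter (fun i => b u - d S₀.1 < ∑ T ∈ (M i).filter (fun T => u ∈ T), d T), μ i) :
    (fun S => α * x S) ∈
      convexHull ℝ {χ : {S : Finset V // S ∈ 𝓔} → ℝ |
        ∃ N : Finset (Finset V), N ⊆ 𝓔 ∧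
          (∀ v : V, ∑ S ∈ N.filter (fun S => v ∈ S), d S ≤ b v) ∧
          χ = fun S => if S.1 ∈ N then 1 else 0} := by
  set χ : Finset (Finset V) → {S // S ∈ 𝓔} → ℝ := fun N S => if S.1 ∈ N then 1 else 0
  have hfree : α * x S₀ ≤ ∑ i ∈ I with
      ¬ ∃ u ∈ S₀.1, b u - d S₀.1 < ∑ T ∈ (M i).filter (fun T => u ∈ T), d T, μ i := by
    have hblocked := sum_filter_exists_le_sum_sum_filter I S₀.1
      (fun u i => b u - d S₀.1 < ∑ T ∈ (M i).filter (fun T => u ∈ T), d T) hμ0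
    have hsplit := sum_filter_add_sum_filter_not I
      (fun i => ∃ u ∈ S₀.1, b u - d S₀.1 < ∑ T ∈ (M i).filter (fun T => u ∈ T), d T) μ
    linarith
  have hχ_insert : ∀ i ∈ I, χ (insert S₀.1 (M i)) = χ (M i) + χ {S₀.1} := by
    intro i hi
    funext S
    by_cases hS : S = S₀ <;> simp [χ, hS, hMS₀ i hi]
  have hx_eq : (fun S => α * x S) = ∑ i ∈ I, μ i • χ (M i) + (α * x S₀) • χ {S₀.1} := by
    funext S
    have hS_decomp : (∑ i ∈ I, μ i • χ (M i)) S = α * xbar S := by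
      simp [χ, Finset.sum_apply, hdecomp]
    rw [Pi.add_apply, hS_decomp]
    by_cases hS : S = S₀
    · simp [χ, hS, hxbar0]
    · simp [χ, hS, hxbar S hS]
  rw [hx_eq]
  refine add_smul_mem_convexHull_of_le_sum_filter hμ0 hμ1
    (fun i hi => ⟨M i, hM𝓔 i hi, hMfeas i hi, rfl⟩) (fun i hi hfit => ?_)
    (mul_nonneg hα0.le (hx0 S₀)) hfree
  push Not at hfit
  exact ⟨insert S₀.1 (M i), insert_subset S₀.2 (hM𝓔 i hi),
    kHDM.load_insert_le (hMS₀ i hi) (hMfeas i hi) hfit, (hχ_insert i hi).symm⟩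

/-- **Packing an edge back (Lemma 1).** If `α·x̄` (where `x̄` is `x` with the
coordinate of `S₀` zeroed out) has a convex decomposition into indicator vectors of
integral solutions avoiding `S₀`, and `1 − Σ_{u ∈ S₀} β_u ≥ α·x_{S₀}` where `β_u` is
the fraction of the solutions in which `S₀` is blocked at `u`, then `α·x` lies in the
convex hull of the indicator vectors of integral solutions. -/
theorem kHDM_pack_edge
    {V : Type*} [Fintype V] [DecidableEq V]
    (k : ℕ) (hk : 1 ≤ k)
    (𝓔 : Finset (Finset V))
    (d : Finset V → ℤ) (b : V → ℤ)
    (hcard : ∀ S ∈ 𝓔, 1 ≤ S.card ∧ S.card ≤ k)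
    (hd : ∀ S ∈ 𝓔, 1 ≤ d S)
    (hb : ∀ v : V, 1 ≤ b v)
    (hnoclip : ∀ S ∈ 𝓔, ∀ v ∈ S, d S ≤ b v)
    (S₀ : {S : Finset V // S ∈ 𝓔})
    (x : {S : Finset V // S ∈ 𝓔} → ℝ)
    (hx0 : ∀ S, 0 ≤ x S) (hx1 : ∀ S, x S ≤ 1)
    (hxcap : ∀ v : V,
      ∑ S : {S : Finset V // S ∈ 𝓔}, (if v ∈ S.1 then (d S.1 : ℝ) * x S else 0) ≤ (b v : ℝ))
    (xbar : {S : Finset V // S ∈ 𝓔} → ℝ)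
    (hxbar : ∀ S, S ≠ S₀ → xbar S = x S) (hxbar0 : xbar S₀ = 0)
    (α : ℝ) (hα0 : 0 < α) (hα1 : α ≤ 1)
    {ι : Type*} (I : Finset ι) (μ : ι → ℝ) (M : ι → Finset (Finset V))
    (hM𝓔 : ∀ i ∈ I, M i ⊆ 𝓔)
    (hMfeas : ∀ i ∈ I, ∀ v : V, ∑ T ∈ (M i).filter (fun T => v ∈ T), d T ≤ b v)
    (hMS₀ : ∀ i ∈ I, S₀.1 ∉ M i)
    (hμ0 : ∀ i ∈ I, 0 ≤ μ i) (hμ1 : ∑ i ∈ I, μ i = 1)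
    (hdecomp : ∀ S, α * xbar S = ∑ i ∈ I, μ i * (if S.1 ∈ M i then 1 else 0))
    (hpack : α * x S₀ ≤ 1 - ∑ u ∈ S₀.1,
      ∑ i ∈ I.filter (fun i => b u - d S₀.1 < ∑ T ∈ (M i).filter (fun T => u ∈ T), d T), μ i) :
    (fun S => α * x S) ∈
      convexHull ℝ {χ : {S : Finset V // S ∈ 𝓔} → ℝ |
        ∃ N : Finset (Finset V), N ⊆ 𝓔 ∧
          (∀ v : V, ∑ S ∈ N.filter (fun S => v ∈ S), d S ≤ b v) ∧
          χ = fun S => if S.1 ∈ N then 1 else 0} :=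
  kHDM_pack_edge_general 𝓔 d b S₀ x hx0 xbar hxbar hxbar0 α hα0 I μ M hM𝓔 hMfeas hMS₀ hμ0 hμ1
    hdecomp hpack
end

section
/- Let a k-HDM instance with |𝓔| ≥ 2 be given, let S₀ ∈ 𝓔, let x be a fractional solution, and let x̄ : 𝓔 → ℝ agree with x on 𝓔 ∖ {S₀} and satisfy x̄_{S₀} = 0. Let α ∈ (0,1] and suppose α·x̄ = Σ_{i ∈ I} μ_i χ^i is a convex combination (I finite, μ_i ≥ 0, Σ_{i ∈ I} μ_i = 1) of the indicator vectors χ^i of integral solutions M_i with S₀ ∉ M_i. Fix u ∈ S₀, let β_u := Σ { μ_i : i ∈ I such that Σ_{T ∈ M_i : u ∈ T} d_T > b_u − d_{S₀} }, and let δ̄ := min { d_T : T ∈ 𝓔, T ≠ S₀ }. Then β_u ≤ α·(b_u − d_{S₀}·x_{S₀}) / max(b_u − d_{S₀} + 1, δ̄). -/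
open Finset

/-- **Bound on the blocked fraction (Lemma 2).** With `α·x̄` decomposed into indicator
vectors of integral solutions avoiding `S₀`, the fraction `β_u` of solutions blocking
`S₀` at `u` satisfies `β_u ≤ α·(b_u − d_{S₀}·x_{S₀}) / max (b_u − d_{S₀} + 1) δ̄`,
where `δ̄ = min { d_T : T ∈ 𝓔, T ≠ S₀ }`. -/
theorem kHDM_blocked_fraction_bound
    {V : Type*} [Fintype V] [DecidableEq V]
    (k : ℕ) (hk : 1 ≤ k)
    (𝓔 : Finset (Finset V)) (h𝓔 : 2 ≤ 𝓔.card)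
    (d : Finset V → ℤ) (b : V → ℤ)
    (hcard : ∀ S ∈ 𝓔, 1 ≤ S.card ∧ S.card ≤ k)
    (hd : ∀ S ∈ 𝓔, 1 ≤ d S)
    (hb : ∀ v : V, 1 ≤ b v)
    (hnoclip : ∀ S ∈ 𝓔, ∀ v ∈ S, d S ≤ b v)
    (S₀ : {S : Finset V // S ∈ 𝓔})
    (x : {S : Finset V // S ∈ 𝓔} → ℝ)
    (hx0 : ∀ S, 0 ≤ x S) (hx1 : ∀ S, x S ≤ 1)
    (hxcap : ∀ v : V,
      ∑ S : {S : Finset V // S ∈ 𝓔}, (if v ∈ S.1 then (d S.1 : ℝ) * x S else 0) ≤ (b v : ℝ))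
    (xbar : {S : Finset V // S ∈ 𝓔} → ℝ)
    (hxbar : ∀ S, S ≠ S₀ → xbar S = x S) (hxbar0 : xbar S₀ = 0)
    (α : ℝ) (hα0 : 0 < α) (hα1 : α ≤ 1)
    {ι : Type*} (I : Finset ι) (μ : ι → ℝ) (M : ι → Finset (Finset V))
    (hM𝓔 : ∀ i ∈ I, M i ⊆ 𝓔)
    (hMfeas : ∀ i ∈ I, ∀ v : V, ∑ T ∈ (M i).filter (fun T => v ∈ T), d T ≤ b v)
    (hMS₀ : ∀ i ∈ I, S₀.1 ∉ M i)
    (hμ0 : ∀ i ∈ I, 0 ≤ μ i) (hμ1 : ∑ i ∈ I, μ i = 1)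
    (hdecomp : ∀ S, α * xbar S = ∑ i ∈ I, μ i * (if S.1 ∈ M i then 1 else 0))
    (u : V) (hu : u ∈ S₀.1)
    (δbar : ℤ)
    (hδbar_le : ∀ T ∈ 𝓔.erase S₀.1, δbar ≤ d T)
    (hδbar_mem : ∃ T ∈ 𝓔.erase S₀.1, d T = δbar) :
    ∑ i ∈ I.filter (fun i => b u - d S₀.1 < ∑ T ∈ (M i).filter (fun T => u ∈ T), d T), μ i ≤
      α * ((b u : ℝ) - (d S₀.1 : ℝ) * x S₀) /
        max ((b u : ℝ) - (d S₀.1 : ℝ) + 1) (δbar : ℝ) := by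

  classical
  set m : ℝ := max ((b u : ℝ) - (d S₀.1 : ℝ) + 1) (δbar : ℝ) with hm
  have hdS₀ : 1 ≤ d S₀.1 := hd _ S₀.2
  have hDb : d S₀.1 ≤ b u := hnoclip _ S₀.2 u hu
  have hδ1 : 1 ≤ δbar := by
    obtain ⟨T, hT, hTe⟩ := hδbar_mem
    rw [← hTe]; exact hd T (mem_of_mem_erase hT)
  have hm1 : (1:ℝ) ≤ m := le_max_of_le_right (by exact_mod_cast hδ1)
  have hm0 : (0:ℝ) < m := lt_of_lt_of_le one_pos hm1
  rw [le_div_iff₀ hm0]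
  set L : ι → ℤ := fun i => ∑ T ∈ (M i).filter (fun T => u ∈ T), d T with hLdef
  have hL0 : ∀ i ∈ I, (0:ℤ) ≤ L i := by
    intro i hi
    exact Finset.sum_nonneg fun T hT =>
      le_trans zero_le_one (hd T (hM𝓔 i hi (mem_filter.mp hT).1))
  have hLm : ∀ i ∈ I.filter (fun i => b u - d S₀.1 < L i), m ≤ (L i : ℝ) := by
    intro i hi
    rw [mem_filter] at hi
    obtain ⟨hiI, hlt⟩ := hi
    have h1 : b u - d S₀.1 + 1 ≤ L i := hlt
    have hne : ((M i).filter (fun T => u ∈ T)).Nonempty := by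
      by_contra h
      rw [not_nonempty_iff_eq_empty] at h
      have hz : L i = 0 := by simp [hLdef, h]
      omega
    obtain ⟨T, hT⟩ := hne
    have hT𝓔 : T ∈ 𝓔 := hM𝓔 i hiI (mem_filter.mp hT).1
    have hTne : T ≠ S₀.1 := fun h => hMS₀ i hiI (h ▸ (mem_filter.mp hT).1)
    have h2 : δbar ≤ L i := by
      calc δbar ≤ d T := hδbar_le T (mem_erase.mpr ⟨hTne, hT𝓔⟩)
        _ ≤ L i := Finset.single_le_sum
            (fun T' hT' => le_trans zero_le_one (hd T' (hM𝓔 i hiI (mem_filter.mp hT').1))) hT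
    apply max_le
    · push_cast; exact_mod_cast h1
    · exact_mod_cast h2
  have key1 : (∑ i ∈ I.filter (fun i => b u - d S₀.1 < L i), μ i) * m
      ≤ ∑ i ∈ I, μ i * (L i : ℝ) := by
    rw [Finset.sum_mul]
    calc ∑ i ∈ I.filter (fun i => b u - d S₀.1 < L i), μ i * m
        ≤ ∑ i ∈ I.filter (fun i => b u - d S₀.1 < L i), μ i * (L i : ℝ) :=
          Finset.sum_le_sum fun i hi =>
            mul_le_mul_of_nonneg_left (hLm i hi) (hμ0 i (mem_of_mem_filter i hi))
      _ ≤ ∑ i ∈ I, μ i * (L i : ℝ) := by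
          apply Finset.sum_le_sum_of_subset_of_nonneg (filter_subset _ _)
          intro i hi _
          exact mul_nonneg (hμ0 i hi) (by exact_mod_cast hL0 i hi)
  have hcast : ∀ i ∈ I, (L i : ℝ) = ∑ S : {S : Finset V // S ∈ 𝓔},
      (if u ∈ S.1 then (d S.1 : ℝ) else 0) * (if S.1 ∈ M i then 1 else 0) := by
    intro i hiI
    rw [Finset.sum_coe_sort 𝓔
      (fun S => (if u ∈ S then (d S : ℝ) else 0) * (if S ∈ M i then 1 else 0))]
    have hfe : 𝓔.filter (fun S => u ∈ S ∧ S ∈ M i) = (M i).filter (fun T => u ∈ T) := by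
      ext S
      simp only [mem_filter]
      constructor
      · rintro ⟨_, h1, h2⟩; exact ⟨h2, h1⟩
      · rintro ⟨h1, h2⟩; exact ⟨hM𝓔 i hiI h1, h2, h1⟩
    have : ∑ S ∈ 𝓔, (if u ∈ S then (d S : ℝ) else 0) * (if S ∈ M i then 1 else 0)
        = ∑ S ∈ 𝓔.filter (fun S => u ∈ S ∧ S ∈ M i), (d S : ℝ) := by
      rw [Finset.sum_filter]
      refine Finset.sum_congr rfl fun S _ => ?_
      by_cases h1 : u ∈ S <;> by_cases h2 : S ∈ M i <;> simp [h1, h2]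
    rw [this, hfe, hLdef]
    push_cast
    rfl
  have key2 : ∑ i ∈ I, μ i * (L i : ℝ)
      = α * ((∑ S : {S : Finset V // S ∈ 𝓔}, if u ∈ S.1 then (d S.1 : ℝ) * x S else 0)
          - (d S₀.1 : ℝ) * x S₀) := by
    have step1 : ∑ i ∈ I, μ i * (L i : ℝ)
        = ∑ S : {S : Finset V // S ∈ 𝓔},
            (if u ∈ S.1 then (d S.1 : ℝ) else 0) * (α * xbar S) := by
      rw [Finset.sum_congr rfl fun i hi => by rw [hcast i hi, Finset.mul_sum]]
      rw [Finset.sum_comm]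
      refine Finset.sum_congr rfl fun S _ => ?_
      rw [hdecomp S, Finset.mul_sum]
      exact Finset.sum_congr rfl fun i _ => by ring
    rw [step1]
    have step2 : ∀ S : {S : Finset V // S ∈ 𝓔},
        (if u ∈ S.1 then (d S.1 : ℝ) else 0) * (α * xbar S)
        = α * ((if u ∈ S.1 then (d S.1 : ℝ) * x S else 0)
            - (if S = S₀ then (d S₀.1 : ℝ) * x S₀ else 0)) := by
      intro S
      by_cases hS : S = S₀
      · subst hS; simp [hxbar0, hu]
      · rw [hxbar S hS]
        simp only [hS, if_neg]
        by_cases h1 : u ∈ S.1 <;> simp [h1] <;> ring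
    rw [Finset.sum_congr rfl fun S _ => step2 S, ← Finset.mul_sum,
      Finset.sum_sub_distrib]
    congr 2
    simp
  have key3 : α * ((∑ S : {S : Finset V // S ∈ 𝓔}, if u ∈ S.1 then (d S.1 : ℝ) * x S else 0)
        - (d S₀.1 : ℝ) * x S₀) ≤ α * ((b u : ℝ) - (d S₀.1 : ℝ) * x S₀) := by
    apply mul_le_mul_of_nonneg_left _ (le_of_lt hα0)
    exact sub_le_sub_right (hxcap u) _
  calc (∑ i ∈ I.filter (fun i => b u - d S₀.1 < L i), μ i) * m
      ≤ ∑ i ∈ I, μ i * (L i : ℝ) := key1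
    _ = _ := key2
    _ ≤ α * ((b u : ℝ) - (d S₀.1 : ℝ) * x S₀) := key3
end

section
/- For every finite simple graph G = (V, E) and every fractional matching x of G, the vector x/2 lies in the matching polytope of G. -/
/-!
Put `y = x / 2` and call two edges conflicting when they share a vertex. For an edge `uv`, the
`y`-weight of the edges conflicting with `uv` (itself included) is at most
`(x(δ(u)) + x(δ(v))) / 2 ≤ 1`.

For any reflexive symmetric conflict relation, a nonnegative `y` whose conflict sums are at most `s`
on its support lies in `s` times the convex hull of the indicators of conflict-free sets: choose a
maximal conflict-free set `M` in the support and let `t` be the least value of `y` on `M`. Then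
`y - t • 1_M` is nonnegative with strictly smaller support, and since every element of the support
conflicts with some element of `M`, its conflict sums are at most `s - t`; induct on the support.
Conflict-free sets of edges are exactly matchings.
-/

open Finset
open scoped Pointwise
open Function

namespace StableSet

variable {ι : Type*} [Fintype ι] (r : ι → ι → Prop)

def indicators : Set (ι → ℝ) :=
  {χ | ∃ M : Finset ι, (M : Set ι).Pairwise (fun e f => ¬ r e f) ∧ χ = (M : Set ι).indicator 1}

variable {r}

theorem sum_rel_sub_smul_indicator_le [DecidableRel r] {y : ι → ℝ} {s t : ℝ} {M : Finset ι}
    {e m : ι} (ht : 0 ≤ t) (hm : m ∈ M) (hem : r e m) (hys : ∑ f with r e f, y f ≤ s) :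
    ∑ f with r e f, (y - t • (M : Set ι).indicator (1 : ι → ℝ)) f ≤ s - t := by
  have hM : 1 ≤ ∑ f with r e f, (M : Set ι).indicator (1 : ι → ℝ) f := by
    simpa [hm] using single_le_sum (f := (M : Set ι).indicator (1 : ι → ℝ))
      (fun f _ => Set.indicator_nonneg (fun _ _ => zero_le_one) f) (mem_filter.2 ⟨mem_univ m, hem⟩)
  simp only [Pi.sub_apply, Pi.smul_apply, smul_eq_mul, sum_sub_distrib, ← mul_sum]
  nlinarith

variable [Std.Refl r] [Std.Symm r]

theorem exists_pairwise_subset_forall_exists_rel (S : Finset ι) :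
    ∃ M ⊆ S, (M : Set ι).Pairwise (fun e f => ¬ r e f) ∧ ∀ e ∈ S, ∃ m ∈ M, r e m := by
  classical
  obtain ⟨M, -, ⟨hMS, hM⟩, hmax⟩ := Finite.exists_le_maximal
    (p := fun M : Finset ι => M ⊆ S ∧ (M : Set ι).Pairwise (fun e f => ¬ r e f))
    (a := ∅) ⟨empty_subset S, by simp⟩
  refine ⟨M, hMS, hM, fun e he => ?_⟩
  by_contra! hfree
  have hinsert : insert e M ⊆ S ∧
      ((insert e M : Finset ι) : Set ι).Pairwise (fun e f => ¬ r e f) := by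
    refine ⟨insert_subset he hMS, ?_⟩
    rw [coe_insert]
    exact hM.insert fun m hm _ => ⟨hfree m hm, fun h => hfree m hm (symm_of r h)⟩
  exact hfree e (hmax hinsert (subset_insert e M) (mem_insert_self e M)) (refl_of r e)

variable [DecidableRel r]

theorem mem_smul_convexHull_indicators {y : ι → ℝ} {s : ℝ} (hy : 0 ≤ y)
    (hys : ∀ e, 0 < y e → ∑ f with r e f, y f ≤ s) :
    y ∈ s • convexHull ℝ (indicators r) := by
  by_cases hpos : ∃ e, 0 < y e
  swap
  · have hy0 : y = 0 := funext fun e => (not_lt.1 fun h => hpos ⟨e, h⟩).antisymm (hy e)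
    refine ⟨0, subset_convexHull ℝ _ ⟨∅, by simp, by ext; simp⟩, by rw [hy0]; exact smul_zero s⟩
  obtain ⟨M, hMS, hM, hcover⟩ :=
    exists_pairwise_subset_forall_exists_rel (r := r) (univ.filter (0 < y ·))
  set χ := (M : Set ι).indicator (1 : ι → ℝ)
  have hMne : M.Nonempty := by
    obtain ⟨e, he⟩ := hpos
    obtain ⟨m, hm, -⟩ := hcover e (by simpa using he)
    exact ⟨m, hm⟩
  obtain ⟨e₀, he₀, hmin⟩ := M.exists_min_image y hMne
  set t := y e₀
  have ht : 0 < t := by simpa using hMS he₀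
  have hts : t ≤ s := calc
    t ≤ ∑ f with r e₀ f, y f := single_le_sum (fun f _ => hy f) (by simp [refl_of r e₀])
    _ ≤ s := hys e₀ ht
  set z := y - t • χ
  have hz : 0 ≤ z := fun e => by
    by_cases he : e ∈ M
    · simpa [z, χ, he] using hmin e he
    · simpa [z, χ, he] using hy e
  have hzy : ∀ e, z e ≤ y e := fun e => by
    by_cases he : e ∈ M <;> simp [z, χ, he, ht.le]
  have hzsupp : univ.filter (0 < z ·) ⊂ univ.filter (0 < y ·) := by
    refine (ssubset_iff_of_subset fun e he => ?_).2 ⟨e₀, hMS he₀, by simp [z, χ, he₀, t]⟩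
    simp only [mem_filter, mem_univ, true_and] at he ⊢
    exact he.trans_le (hzy e)
  have hzs : ∀ e, 0 < z e → ∑ f with r e f, z f ≤ s - t := fun e he => by
    have hye := he.trans_le (hzy e)
    obtain ⟨m, hm, hem⟩ := hcover e (by simpa using hye)
    exact sum_rel_sub_smul_indicator_le ht.le hm hem (hys e hye)
  have hz_mem : z ∈ (s - t) • convexHull ℝ (indicators r) :=
    mem_smul_convexHull_indicators hz hzs
  have hχ_mem : t • χ ∈ t • convexHull ℝ (indicators r) :=
    Set.smul_mem_smul_set (subset_convexHull ℝ _ ⟨M, hM, rfl⟩)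
  have hsplit := (convex_convexHull ℝ (indicators r)).add_smul ht.le (sub_nonneg.2 hts)
  rw [add_sub_cancel] at hsplit
  rw [hsplit, show y = t • χ + z by simp [z]]
  exact Set.add_mem_add hχ_mem hz_mem
termination_by (univ.filter (0 < y ·)).card
decreasing_by exact card_lt_card hzsupp

end StableSet

section Matching

variable {V : Type*}

def Sym2.Meets (e f : Sym2 V) : Prop := ∃ v, v ∈ e ∧ v ∈ f

instance : Std.Refl (Sym2.Meets (V := V)) :=
  ⟨fun e => ⟨e.out.1, Sym2.out_fst_mem e, Sym2.out_fst_mem e⟩⟩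

instance : Std.Symm (Sym2.Meets (V := V)) :=
  ⟨fun _ _ ⟨v, he, hf⟩ => ⟨v, hf, he⟩⟩

instance [Fintype V] [DecidableEq V] : DecidableRel (Sym2.Meets (V := V)) :=
  fun _ _ => Fintype.decidableExistsFintype

theorem sum_meets_half_le_one [Fintype V] [DecidableEq V] {ι : Type*} [Fintype ι]
    (g : ι → Sym2 V) {x : ι → ℝ} (hx : 0 ≤ x)
    (hdeg : ∀ v, ∑ f, (if v ∈ g f then x f else 0) ≤ 1) (e : Sym2 V) :
    ∑ f with Sym2.Meets e (g f), x f / 2 ≤ 1 := by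
  induction e using Sym2.ind with
  | _ u v =>
    have hsum : ∑ f with Sym2.Meets s(u, v) (g f), x f ≤
        ∑ f, (if u ∈ g f then x f else 0) + ∑ f, (if v ∈ g f then x f else 0) := by
      rw [sum_filter, ← sum_add_distrib]
      gcongr with f
      have := hx f
      split_ifs <;> simp_all [Sym2.Meets]
    rw [← sum_div]
    linarith [hdeg u, hdeg v]

theorem indicators_meets_subset [DecidableEq V] (E : Finset (Sym2 V)) :
    StableSet.indicators (Sym2.Meets on ((↑) : {e // e ∈ E} → Sym2 V)) ⊆
      {χ | ∃ M : Finset (Sym2 V), M ⊆ E ∧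
        (∀ e ∈ M, ∀ f ∈ M, e ≠ f → ∀ v : V, v ∈ e → v ∉ f) ∧
        χ = fun e => if e.1 ∈ M then 1 else 0} := by
  rintro _ ⟨M, hM, rfl⟩
  refine ⟨M.map (Embedding.subtype _), fun e he => ?_, ?_, ?_⟩
  · obtain ⟨e, -, rfl⟩ := mem_map.1 he
    exact e.2
  · simp only [mem_map, Embedding.subtype_apply]
    rintro _ ⟨e, he, rfl⟩ _ ⟨f, hf, rfl⟩ hef v hve hvf
    exact hM he hf (fun h => hef (congrArg _ h)) ⟨v, hve, hvf⟩
  · ext e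
    simp [Set.indicator_apply]

end Matching

theorem half_fractional_matching_in_matching_polytope_general
    {V : Type*} [Fintype V] [DecidableEq V]
    (G : SimpleGraph V) [DecidableRel G.Adj]
    (x : {e : Sym2 V // e ∈ G.edgeFinset} → ℝ)
    (hx0 : ∀ e, 0 ≤ x e)
    (hxdeg : ∀ v : V,
      ∑ e : {e : Sym2 V // e ∈ G.edgeFinset}, (if v ∈ e.1 then x e else 0) ≤ 1) :
    (fun e => x e / 2) ∈
      convexHull ℝ {χ : {e : Sym2 V // e ∈ G.edgeFinset} → ℝ |
        ∃ M : Finset (Sym2 V), M ⊆ G.edgeFinset ∧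
          (∀ e ∈ M, ∀ f ∈ M, e ≠ f → ∀ v : V, v ∈ e → v ∉ f) ∧
          χ = fun e => if e.1 ∈ M then 1 else 0} := by
  have hmem := StableSet.mem_smul_convexHull_indicators (r := Sym2.Meets on Subtype.val) (s := 1)
    (fun e => div_nonneg (hx0 e) zero_le_two)
    (fun e _ => sum_meets_half_le_one Subtype.val hx0 hxdeg e.1)
  rw [one_smul] at hmem
  exact convexHull_mono (indicators_meets_subset _) hmem

/-- For every finite simple graph `G` and every fractional matching `x` of `G`,
the vector `x/2` lies in the matching polytope of `G`. -/
theorem half_fractional_matching_in_matching_polytope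
    {V : Type*} [Fintype V] [DecidableEq V]
    (G : SimpleGraph V) [DecidableRel G.Adj]
    (x : {e : Sym2 V // e ∈ G.edgeFinset} → ℝ)
    (hx0 : ∀ e, 0 ≤ x e) (hx1 : ∀ e, x e ≤ 1)
    (hxdeg : ∀ v : V,
      ∑ e : {e : Sym2 V // e ∈ G.edgeFinset}, (if v ∈ e.1 then x e else 0) ≤ 1) :
    (fun e => x e / 2) ∈
      convexHull ℝ {χ : {e : Sym2 V // e ∈ G.edgeFinset} → ℝ |
        ∃ M : Finset (Sym2 V), M ⊆ G.edgeFinset ∧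
          (∀ e ∈ M, ∀ f ∈ M, e ≠ f → ∀ v : V, v ∈ e → v ∉ f) ∧
          χ = fun e => if e.1 ∈ M then 1 else 0} :=
  half_fractional_matching_in_matching_polytope_general G x hx0 hxdeg
end

section
/- For every finite simple graph G = (V, E) and every fractional matching x of G, the vector (2/3)·x lies in the matching polytope of G. Consequently, for any profits c_e ≥ 0 there exists a matching M of G with Σ_{e ∈ M} c_e ≥ (2/3) Σ_{e ∈ E} c_e x_e. -/
/-!
A fractional matching `x` gives a symmetric nonnegative matrix `A u v = x s(u, v)` whose row and
column sums are at most `1`; bordered by diagonal blocks it becomes doubly stochastic on `V ⊕ V`.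
By Birkhoff–von Neumann, for any profit `c` of either sign some permutation in its support does at
least as well as `A` for the objective `∑ c s(u, v) A u v = 2 ∑ c_e x_e`. Its arcs from the first
copy of `V` to the second form vertex-disjoint directed paths and cycles; each meets at most two
others, so a greedy 3-colouring splits them into three matchings, one of which earns at least
`(2/3) ∑ c_e x_e`. As this holds for every linear objective, separation puts `(2/3) x` in the
convex hull of the matchings.
-/

open Finset

theorem Fintype.exists_pos_and_sum_mul_le {ι R : Type*} [Fintype ι] [Semiring R] [LinearOrder R]
    [IsStrictOrderedRing R] {w : ι → R} (hw0 : ∀ i, 0 ≤ w i) (hw1 : ∑ i, w i = 1) (a : ι → R) :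
    ∃ i, 0 < w i ∧ ∑ j, w j * a j ≤ a i := by
  have hsupp {f : ι → R} (hf : ∀ i, w i = 0 → f i = 0) : ∑ i with 0 < w i, f i = ∑ i, f i :=
    sum_filter_of_ne fun i _ h => (hw0 i).lt_of_ne' fun h0 => h (hf i h0)
  have hne : ({i | 0 < w i} : Finset ι).Nonempty :=
    nonempty_of_sum_ne_zero (f := w) (by rw [hsupp fun _ h => h, hw1]; exact one_ne_zero)
  obtain ⟨i, hi, hle⟩ := exists_le_of_sum_le hne (f := fun i => w i * ∑ j, w j * a j)
    (g := fun i => w i * a i) (by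
      rw [hsupp fun _ h => by simp [h], hsupp fun _ h => by simp [h], ← sum_mul, hw1, one_mul])
  exact ⟨i, (mem_filter.1 hi).2, le_of_mul_le_mul_left hle (mem_filter.1 hi).2⟩

namespace Matrix

theorem fromBlocks_diagonal_mem_doublyStochastic {R m n : Type*} [Ring R] [PartialOrder R]
    [IsOrderedRing R] [Fintype m] [Fintype n] [DecidableEq m] [DecidableEq n] {A : Matrix m n R}
    (hA : ∀ i j, 0 ≤ A i j) (hrow : ∀ i, ∑ j, A i j ≤ 1) (hcol : ∀ j, ∑ i, A i j ≤ 1) :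
    fromBlocks (diagonal fun i => 1 - ∑ j, A i j) A Aᵀ (diagonal fun j => 1 - ∑ i, A i j) ∈
      doublyStochastic R (m ⊕ n) := by
  refine mem_doublyStochastic_iff_sum.2 ⟨?_, ?_, ?_⟩
  · rintro (i | j) (i' | j') <;> simp only [fromBlocks_apply₁₁, fromBlocks_apply₁₂,
      fromBlocks_apply₂₁, fromBlocks_apply₂₂, diagonal_apply, transpose_apply]
    · split <;> simp [hrow]
    · exact hA _ _
    · exact hA _ _
    · split <;> simp [hcol]
  · rintro (i | j) <;> simp [Fintype.sum_sum_type, diagonal_apply]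
  · rintro (i | j) <;> simp [Fintype.sum_sum_type, diagonal_apply]

variable {R : Type*} [Field R] [LinearOrder R] [IsStrictOrderedRing R]

theorem exists_perm_pos_and_le_of_mem_doublyStochastic {n : Type*} [Fintype n] [DecidableEq n]
    {B : Matrix n n R} (hB : B ∈ doublyStochastic R n) (L : Matrix n n R →ₗ[R] R) :
    ∃ σ : Equiv.Perm n, (∀ i, 0 < B i (σ i)) ∧ L B ≤ L (σ.permMatrix R) := by
  obtain ⟨w, hw0, hw1, rfl⟩ := exists_eq_sum_perm_of_mem_doublyStochastic hB
  obtain ⟨σ, hσ, hle⟩ := Fintype.exists_pos_and_sum_mul_le hw0 hw1 fun σ => L (σ.permMatrix R)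
  refine ⟨σ, fun i => ?_, by simpa [map_sum, map_smul] using hle⟩
  calc 0 < w σ := hσ
    _ = w σ • σ.permMatrix R i (σ i) := by simp
    _ ≤ ∑ τ, w τ • τ.permMatrix R i (σ i) :=
      single_le_sum (f := fun τ => w τ • τ.permMatrix R i (σ i))
        (fun τ _ => smul_nonneg (hw0 τ) (nonneg_of_mem_doublyStochastic
          permMatrix_mem_doublyStochastic)) (mem_univ σ)
    _ = (∑ τ, w τ • τ.permMatrix R) i (σ i) := by simp [sum_apply]

theorem exists_partialMatching_pos_and_sum_mul_le {m n : Type*} [Fintype m] [Fintype n]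
    [DecidableEq m] [DecidableEq n] {A : Matrix m n R}
    (hA : ∀ i j, 0 ≤ A i j) (hrow : ∀ i, ∑ j, A i j ≤ 1) (hcol : ∀ j, ∑ i, A i j ≤ 1)
    (C : Matrix m n R) :
    ∃ P : Finset (m × n), Set.InjOn Prod.fst (P : Set (m × n)) ∧
      Set.InjOn Prod.snd (P : Set (m × n)) ∧ (∀ p ∈ P, 0 < A p.1 p.2) ∧
      ∑ i, ∑ j, C i j * A i j ≤ ∑ p ∈ P, C p.1 p.2 := by
  let L : Matrix (m ⊕ n) (m ⊕ n) R →ₗ[R] R :=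
    ∑ i, ∑ j, C i j • entryLinearMap R R (Sum.inl i) (Sum.inr j)
  have hL (N : Matrix (m ⊕ n) (m ⊕ n) R) :
      L N = ∑ i, ∑ j, C i j * N (Sum.inl i) (Sum.inr j) := by
    simp [L, LinearMap.sum_apply]
  obtain ⟨σ, hpos, hle⟩ := exists_perm_pos_and_le_of_mem_doublyStochastic
    (fromBlocks_diagonal_mem_doublyStochastic hA hrow hcol) L
  refine ⟨({p : m × n | σ (Sum.inl p.1) = Sum.inr p.2} : Finset _), ?_, ?_, ?_, ?_⟩
  · intro p hp q hq h
    simp only [coe_filter, mem_univ, true_and, Set.mem_ofPred_eq] at hp hq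
    exact Prod.ext h (Sum.inr_injective (by rw [← hp, ← hq, h]))
  · intro p hp q hq h
    simp only [coe_filter, mem_univ, true_and, Set.mem_ofPred_eq] at hp hq
    exact Prod.ext (Sum.inl_injective (σ.injective (by rw [hp, hq, h]))) h
  · intro p hp
    simpa [(mem_filter.1 hp).2] using hpos (Sum.inl p.1)
  · rw [hL, hL] at hle
    simp only [fromBlocks_apply₁₂] at hle
    refine hle.trans_eq ?_
    rw [sum_filter, ← Fintype.sum_prod_type']
    simp [PEquiv.toMatrix_apply]

end Matrix

namespace Sym2

variable {α M : Type*} [Fintype α] [DecidableEq α] [AddCommMonoid M]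

theorem sum_mk_eq_sum_filter_mem (f : Sym2 α → M) (u : α) :
    ∑ v, f s(u, v) = ∑ e with u ∈ e, f e := by
  have himage : (univ.image fun v => s(u, v)) = ({e | u ∈ e} : Finset (Sym2 α)) := by
    ext e
    induction e with
    | _ a b => simp only [mem_image, mem_univ, true_and, mem_filter, Sym2.eq_iff, mem_iff]; grind
  rw [← himage, sum_image fun _ _ _ _ h => congr_right.1 h]

theorem sum_sum_mk_eq_two_nsmul_sum {f : Sym2 α → M} (hf : ∀ e, e.IsDiag → f e = 0) :
    ∑ u, ∑ v, f s(u, v) = 2 • ∑ e, f e := by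
  simp_rw [sum_mk_eq_sum_filter_mem, sum_filter]
  rw [sum_comm, smul_sum]
  refine sum_congr rfl fun e _ => ?_
  rw [← sum_filter, sum_const]
  by_cases he : e.IsDiag
  · simp [hf e he]
  · have htoFinset : ({u | u ∈ e} : Finset α) = e.toFinset := by ext; simp [mem_toFinset]
    rw [htoFinset, card_toFinset_of_not_isDiag e he]

end Sym2

theorem Finset.exists_coloring_of_forall_card_le {α : Type*} [DecidableEq α]
    {r : α → α → Prop} [DecidableRel r] (hr : ∀ p q, r p q → r q p) {P : Finset α} {k : ℕ}
    (hdeg : ∀ p ∈ P, #{q ∈ P | q ≠ p ∧ r p q} ≤ k) :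
    ∃ col : α → Fin (k + 1), ∀ p ∈ P, ∀ q ∈ P, p ≠ q → r p q → col p ≠ col q := by
  refine Finset.induction_on' (motive := fun s => ∃ col : α → Fin (k + 1),
      ∀ p ∈ s, ∀ q ∈ s, p ≠ q → r p q → col p ≠ col q) P ⟨0, by simp⟩ ?_
  rintro a s ha hs has ⟨col, hcol⟩
  obtain ⟨c, hc⟩ : ∃ c, c ∉ image col {q ∈ s | r a q} := by
    refine exists_mem_notMem_of_card_lt_card (t := univ) ?_ |>.imp fun c h => h.2
    calc #(image col {q ∈ s | r a q}) ≤ #{q ∈ s | r a q} := card_image_le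
      _ ≤ k := (card_le_card fun q hq => ?_).trans (hdeg a ha)
      _ < #(univ : Finset (Fin (k + 1))) := by simp
    simp only [mem_filter] at hq ⊢
    exact ⟨hs hq.1, fun h => has (h ▸ hq.1), hq.2⟩
  have hfresh {q} (hq : q ∈ s) (hr : r a q) : c ≠ col q := fun h =>
    hc (h ▸ mem_image_of_mem col (mem_filter.2 ⟨hq, hr⟩))
  refine ⟨Function.update col a c, fun p hp q hq hpq hpq' => ?_⟩
  have hne {b} (hb : b ∈ s) : b ≠ a := ne_of_mem_of_not_mem hb has
  rcases mem_insert.1 hp with rfl | hps <;> rcases mem_insert.1 hq with rfl | hqs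
  · exact absurd rfl hpq
  · simpa [hne hqs] using hfresh hqs hpq'
  · simpa [hne hps] using (hfresh hps (hr _ _ hpq')).symm
  · simpa [hne hps, hne hqs] using hcol p hps q hqs hpq hpq'

def IsMatchingSet {V : Type*} (M : Finset (Sym2 V)) : Prop :=
  ∀ e ∈ M, ∀ f ∈ M, e ≠ f → ∀ v : V, v ∈ e → v ∉ f

section Arcs

variable {V : Type*} [DecidableEq V] {P : Finset (V × V)}

def ShareEndpoint (p q : V × V) : Prop :=
  p.1 = q.1 ∨ p.1 = q.2 ∨ p.2 = q.1 ∨ p.2 = q.2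

instance : DecidableRel (ShareEndpoint (V := V)) := fun p q =>
  inferInstanceAs (Decidable (p.1 = q.1 ∨ p.1 = q.2 ∨ p.2 = q.1 ∨ p.2 = q.2))

theorem card_shareEndpoint_le_two (hfst : Set.InjOn Prod.fst (P : Set (V × V)))
    (hsnd : Set.InjOn Prod.snd (P : Set (V × V))) {p : V × V} (hp : p ∈ P) :
    #{q ∈ P | q ≠ p ∧ ShareEndpoint p q} ≤ 2 := by
  have hsub : {q ∈ P | q ≠ p ∧ ShareEndpoint p q} ⊆
      {q ∈ P | q.2 = p.1} ∪ {q ∈ P | q.1 = p.2} := by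
    intro q hq
    simp only [mem_filter, mem_union] at hq ⊢
    obtain ⟨hqP, hqp, h | h | h | h⟩ := hq
    · exact absurd (hfst hqP hp h.symm) hqp
    · exact .inl ⟨hqP, h.symm⟩
    · exact .inr ⟨hqP, h.symm⟩
    · exact absurd (hsnd hqP hp h.symm) hqp
  have hle {f : V × V → V} (hf : Set.InjOn f (P : Set (V × V))) (v : V) :
      #{q ∈ P | f q = v} ≤ 1 :=
    card_le_one.2 fun a ha b hb => by
      simp only [mem_filter] at ha hb
      exact hf ha.1 hb.1 (ha.2.trans hb.2.symm)
  exact (card_le_card hsub).trans <|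
    (card_union_le _ _).trans (add_le_add (hle hsnd _) (hle hfst _))

theorem exists_isMatchingSet_sum_le_three_mul (hfst : Set.InjOn Prod.fst (P : Set (V × V)))
    (hsnd : Set.InjOn Prod.snd (P : Set (V × V))) (c : Sym2 V → ℝ) :
    ∃ M ⊆ P.image fun p => s(p.1, p.2), IsMatchingSet M ∧
      ∑ p ∈ P, c s(p.1, p.2) ≤ 3 * ∑ e ∈ M, c e := by
  obtain ⟨col, hcol⟩ := exists_coloring_of_forall_card_le (r := ShareEndpoint)
    (fun p q h => by unfold ShareEndpoint at *; tauto)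
    fun _ => card_shareEndpoint_le_two hfst hsnd
  obtain ⟨i, -, hi⟩ := exists_le_sum_fiber_of_maps_to_of_nsmul_le_sum (s := P) (t := univ)
    (f := col) (w := fun p => c s(p.1, p.2)) (b := (∑ p ∈ P, c s(p.1, p.2)) / 3)
    (fun _ _ => mem_univ _) univ_nonempty (by simp; linarith)
  set Q := {p ∈ P | col p = i}
  have hdisj {p q} (hp : p ∈ Q) (hq : q ∈ Q) (hpq : p ≠ q) : ¬ ShareEndpoint p q := fun h =>
    hcol p (mem_filter.1 hp).1 q (mem_filter.1 hq).1 hpq h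
      ((mem_filter.1 hp).2.trans (mem_filter.1 hq).2.symm)
  have hinj : Set.InjOn (fun p : V × V => s(p.1, p.2)) (Q : Set (V × V)) := by
    intro p hp q hq h
    by_contra hpq
    have : p.1 ∈ s(q.1, q.2) := by simp only at h; exact h ▸ Sym2.mem_mk_left p.1 p.2
    exact hdisj hp hq hpq (by rcases Sym2.mem_iff.1 this with h | h <;> simp [ShareEndpoint, h])
  refine ⟨Q.image fun p => s(p.1, p.2), image_subset_image (filter_subset _ _), ?_, ?_⟩
  · simp only [IsMatchingSet, mem_image]
    rintro _ ⟨p, hp, rfl⟩ _ ⟨q, hq, rfl⟩ hpq v hvp hvq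
    refine hdisj hp hq (fun h => hpq (h ▸ rfl)) ?_
    rcases Sym2.mem_iff.1 hvp with rfl | rfl <;> rcases Sym2.mem_iff.1 hvq with h | h <;>
      simp [ShareEndpoint, h]
  · rw [sum_image hinj]
    linarith

end Arcs

theorem exists_isMatchingSet_two_mul_sum_le {V : Type*} [Fintype V] [DecidableEq V]
    {y : Sym2 V → ℝ} (hy0 : ∀ e, 0 ≤ y e) (hdiag : ∀ e, e.IsDiag → y e = 0)
    (hdeg : ∀ v, ∑ e with v ∈ e, y e ≤ 1) (c : Sym2 V → ℝ) :
    ∃ M : Finset (Sym2 V), (∀ e ∈ M, 0 < y e) ∧ IsMatchingSet M ∧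
      2 * ∑ e, c e * y e ≤ 3 * ∑ e ∈ M, c e := by
  have hrow (u : V) : ∑ v, y s(u, v) ≤ 1 := Sym2.sum_mk_eq_sum_filter_mem y u ▸ hdeg u
  obtain ⟨P, hfst, hsnd, hpos, hle⟩ := Matrix.exists_partialMatching_pos_and_sum_mul_le
    (A := Matrix.of fun u v => y s(u, v)) (fun _ _ => hy0 _) hrow
    (fun v => by simpa only [Matrix.of_apply, Sym2.eq_swap] using hrow v)
    (Matrix.of fun u v => c s(u, v))
  obtain ⟨M, hMP, hM, hPM⟩ := exists_isMatchingSet_sum_le_three_mul hfst hsnd c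
  refine ⟨M, fun e he => ?_, hM, ?_⟩
  · obtain ⟨p, hp, rfl⟩ := mem_image.1 (hMP he)
    exact hpos p hp
  · have hcount := Sym2.sum_sum_mk_eq_two_nsmul_sum (f := fun e => c e * y e)
      (fun e he => by simp [hdiag e he])
    simp only [Matrix.of_apply] at hle
    rw [hcount, nsmul_eq_mul, Nat.cast_ofNat] at hle
    exact hle.trans hPM

theorem mem_convexHull_of_forall_exists_dotProduct_le {ι : Type*} [Fintype ι]
    {S : Set (ι → ℝ)} (hS : S.Finite) {y : ι → ℝ}
    (h : ∀ c : ι → ℝ, ∃ s ∈ S, c ⬝ᵥ y ≤ c ⬝ᵥ s) : y ∈ convexHull ℝ S := by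
  classical
  by_contra hy
  obtain ⟨f, u, hfS, hfy⟩ := geometric_hahn_banach_closed_point (convex_convexHull ℝ S)
    (hS.isClosed_convexHull ℝ) hy
  have hf (z : ι → ℝ) : f z = (fun i => f (Pi.single i 1)) ⬝ᵥ z := by
    have := LinearMap.congr_fun ((LinearEquiv.piRing ℝ ℝ ι ℝ).symm_apply_apply f.toLinearMap) z
    rw [LinearEquiv.piRing_symm_apply] at this
    simpa [dotProduct, mul_comm] using this.symm
  obtain ⟨s, hs, hle⟩ := h fun i => f (Pi.single i 1)
  have hfs := hfS s (subset_convexHull ℝ S hs)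
  rw [hf] at hfs hfy
  linarith

theorem Finset.sum_coe_sort_eq_sum_dite {α M N : Type*} [Fintype α] [DecidableEq α]
    [AddCommMonoid M] [Zero N] (s : Finset α) {g : α → N → M} (hg : ∀ a, g a 0 = 0) (x : s → N) :
    ∑ a : s, g a (x a) = ∑ a, g a (if h : a ∈ s then x ⟨a, h⟩ else 0) := by
  rw [← sum_subset (subset_univ s) fun a _ ha => by rw [dif_neg ha, hg], ← sum_coe_sort s]
  exact sum_congr rfl fun a _ => by rw [dif_pos a.2]

section FractionalMatching

variable {V : Type*} [Fintype V] [DecidableEq V] {G : SimpleGraph V} [DecidableRel G.Adj]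

theorem exists_isMatchingSet_two_thirds_le {x : G.edgeFinset → ℝ} (hx0 : ∀ e, 0 ≤ x e)
    (hxdeg : ∀ v, ∑ e : G.edgeFinset, (if v ∈ e.1 then x e else 0) ≤ 1) (c : Sym2 V → ℝ) :
    ∃ M ⊆ G.edgeFinset, IsMatchingSet M ∧
      2 / 3 * ∑ e : G.edgeFinset, c e * x e ≤ ∑ e ∈ M, c e := by
  set y : Sym2 V → ℝ := fun e => if h : e ∈ G.edgeFinset then x ⟨e, h⟩ else 0
  have hy0 (e : Sym2 V) : 0 ≤ y e := by
    by_cases he : e ∈ G.edgeFinset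
    · simp only [y, dif_pos he, hx0]
    · simp only [y, dif_neg he, le_refl]
  have hdiag (e : Sym2 V) (he : e.IsDiag) : y e = 0 :=
    dif_neg fun h => G.not_isDiag_of_mem_edgeSet (G.mem_edgeFinset.1 h) he
  have hdeg (v : V) : ∑ e with v ∈ e, y e ≤ 1 := by
    have := hxdeg v
    rwa [sum_coe_sort_eq_sum_dite _ (g := fun e (t : ℝ) => if v ∈ e then t else 0)
      fun _ => ite_self 0, ← sum_filter] at this
  obtain ⟨M, hMpos, hM, hle⟩ := exists_isMatchingSet_two_mul_sum_le hy0 hdiag hdeg c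
  refine ⟨M, fun e he => by_contra fun h => (hMpos e he).ne' (dif_neg h), hM, ?_⟩
  rw [sum_coe_sort_eq_sum_dite _ (g := fun e (t : ℝ) => c e * t) fun _ => mul_zero _]
  linarith

theorem mem_convexHull_indicator_isMatchingSet {z : G.edgeFinset → ℝ}
    (hz : ∀ c : Sym2 V → ℝ, ∃ M ⊆ G.edgeFinset, IsMatchingSet M ∧
      ∑ e : G.edgeFinset, c e * z e ≤ ∑ e ∈ M, c e) :
    z ∈ convexHull ℝ {χ : G.edgeFinset → ℝ | ∃ M : Finset (Sym2 V), M ⊆ G.edgeFinset ∧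
      IsMatchingSet M ∧ χ = fun e => if e.1 ∈ M then 1 else 0} := by
  refine mem_convexHull_of_forall_exists_dotProduct_le ?_ fun c => ?_
  · refine (Set.finite_range fun (M : Finset (Sym2 V)) (e : G.edgeFinset) =>
      if e.1 ∈ M then (1 : ℝ) else 0).subset ?_
    rintro _ ⟨M, -, -, rfl⟩
    exact ⟨M, rfl⟩
  · obtain ⟨M, hME, hM, hle⟩ := hz fun e => if h : e ∈ G.edgeFinset then c ⟨e, h⟩ else 0
    refine ⟨_, ⟨M, hME, hM, rfl⟩, ?_⟩
    have hcM : c ⬝ᵥ (fun e => if e.1 ∈ M then 1 else 0) =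
        ∑ e ∈ M, if h : e ∈ G.edgeFinset then c ⟨e, h⟩ else 0 := by
      simp only [dotProduct, mul_ite, mul_one, mul_zero]
      rw [sum_coe_sort_eq_sum_dite _ (g := fun e (t : ℝ) => if e ∈ M then t else 0)
        fun _ => ite_self 0, ← sum_filter, filter_mem_eq_inter, univ_inter]
    rw [hcM]
    simpa only [dotProduct, coe_mem, dif_pos, Subtype.coe_eta] using hle

end FractionalMatching

theorem two_thirds_fractional_matching_in_matching_polytope_general
    {V : Type*} [Fintype V] [DecidableEq V]
    (G : SimpleGraph V) [DecidableRel G.Adj]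
    (x : {e : Sym2 V // e ∈ G.edgeFinset} → ℝ)
    (hx0 : ∀ e, 0 ≤ x e)
    (hxdeg : ∀ v : V,
      ∑ e : {e : Sym2 V // e ∈ G.edgeFinset}, (if v ∈ e.1 then x e else 0) ≤ 1) :
    ((fun e => (2 / 3) * x e) ∈
      convexHull ℝ {χ : {e : Sym2 V // e ∈ G.edgeFinset} → ℝ |
        ∃ M : Finset (Sym2 V), M ⊆ G.edgeFinset ∧
          (∀ e ∈ M, ∀ f ∈ M, e ≠ f → ∀ v : V, v ∈ e → v ∉ f) ∧
          χ = fun e => if e.1 ∈ M then 1 else 0}) ∧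
    ∀ c : Sym2 V → ℝ, (∀ e ∈ G.edgeFinset, 0 ≤ c e) →
      ∃ M : Finset (Sym2 V), M ⊆ G.edgeFinset ∧
        (∀ e ∈ M, ∀ f ∈ M, e ≠ f → ∀ v : V, v ∈ e → v ∉ f) ∧
        (2 / 3) * ∑ e : {e : Sym2 V // e ∈ G.edgeFinset}, c e.1 * x e ≤ ∑ e ∈ M, c e := by
  refine ⟨mem_convexHull_indicator_isMatchingSet fun c => ?_,
    fun c _ => exists_isMatchingSet_two_thirds_le hx0 hxdeg c⟩
  obtain ⟨M, hME, hM, hle⟩ := exists_isMatchingSet_two_thirds_le hx0 hxdeg c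
  refine ⟨M, hME, hM, le_of_eq_of_le ?_ hle⟩
  simp only [mul_sum]
  ring_nf

/-- For every finite simple graph `G` and every fractional matching `x` of `G`, the
vector `(2/3)·x` lies in the matching polytope of `G`; consequently, for any
nonnegative profits `c` there exists a matching `M` of `G` with
`Σ_{e ∈ M} c_e ≥ (2/3) Σ_{e ∈ E} c_e x_e`. -/
theorem two_thirds_fractional_matching_in_matching_polytope
    {V : Type*} [Fintype V] [DecidableEq V]
    (G : SimpleGraph V) [DecidableRel G.Adj]
    (x : {e : Sym2 V // e ∈ G.edgeFinset} → ℝ)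
    (hx0 : ∀ e, 0 ≤ x e) (hx1 : ∀ e, x e ≤ 1)
    (hxdeg : ∀ v : V,
      ∑ e : {e : Sym2 V // e ∈ G.edgeFinset}, (if v ∈ e.1 then x e else 0) ≤ 1) :
    ((fun e => (2 / 3) * x e) ∈
      convexHull ℝ {χ : {e : Sym2 V // e ∈ G.edgeFinset} → ℝ |
        ∃ M : Finset (Sym2 V), M ⊆ G.edgeFinset ∧
          (∀ e ∈ M, ∀ f ∈ M, e ≠ f → ∀ v : V, v ∈ e → v ∉ f) ∧
          χ = fun e => if e.1 ∈ M then 1 else 0}) ∧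
    ∀ c : Sym2 V → ℝ, (∀ e ∈ G.edgeFinset, 0 ≤ c e) →
      ∃ M : Finset (Sym2 V), M ⊆ G.edgeFinset ∧
        (∀ e ∈ M, ∀ f ∈ M, e ≠ f → ∀ v : V, v ∈ e → v ∉ f) ∧
        (2 / 3) * ∑ e : {e : Sym2 V // e ∈ G.edgeFinset}, c e.1 * x e ≤ ∑ e ∈ M, c e :=
  two_thirds_fractional_matching_in_matching_polytope_general G x hx0 hxdeg
end

section
/- Let k ≥ 1 be an integer, V a finite set, 𝓔 a finite family of subsets of V each of size at least 1 and at most k, and b_v ≥ 1 an integer capacity for each v ∈ V. Let x : 𝓔 → ℝ satisfy 0 ≤ x_S ≤ 1 for all S ∈ 𝓔 and Σ_{S ∈ 𝓔 : v ∈ S} x_S ≤ b_v for every v ∈ V. Then x/(k+1) lies in the convex hull of the indicator vectors of integral b-matchings, i.e., of subsets M ⊆ 𝓔 with |{S ∈ M : v ∈ S}| ≤ b_v for every v ∈ V. -/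
open Finset

/-!
By separation (the convex hull of finitely many points is closed), it suffices to find, for every
weight vector `c`, a b-matching `M` with `∑ c_S x_S ≤ (k + 1) c(M)`. Build `M` greedily, scanning
the edges of positive weight in decreasing order and keeping an edge whenever none of its vertices
is saturated. A rejected edge `S` is blocked at some `v ∈ S` saturated by `b_v` heavier chosen
edges, so `c_S ≤ c(M_v) / b_v`. Charging `c_S x_S` to the vertices of `S` costs each vertex `v` at
most `c(M_v)`, as `∑_{S ∋ v} x_S ≤ b_v`; and `∑_v c(M_v) ≤ k c(M)` since edges have at most `k`
vertices. The chosen edges themselves contribute at most `c(M)`, as `x ≤ 1`.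
-/

theorem mem_convexHull_of_forall_exists_le {ι : Type*} [Fintype ι] {A : Set (ι → ℝ)}
    (hA : A.Finite) {y : ι → ℝ} (h : ∀ c : ι → ℝ, ∃ a ∈ A, ∑ i, c i * y i ≤ ∑ i, c i * a i) :
    y ∈ convexHull ℝ A := by
  classical
  by_contra hy
  obtain ⟨f, u, hfA, hfy⟩ := geometric_hahn_banach_closed_point (convex_convexHull ℝ A)
    (hA.isClosed_convexHull (𝕜 := ℝ)) hy
  set c : ι → ℝ := fun i => f fun j => if i = j then 1 else 0
  have hf : ∀ z, f z = ∑ i, c i * z i := fun z => by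
    simp only [c, mul_comm _ (z _), ← smul_eq_mul]
    exact LinearMap.pi_apply_eq_sum_univ f.toLinearMap z
  obtain ⟨a, haA, hle⟩ := h c
  have := hfA a (subset_convexHull ℝ A haA)
  rw [hf] at this hfy
  linarith

section BMatching

variable {E V : Type*} [DecidableEq V] (e : E → Finset V) (b : V → ℤ)

def IsBMatching (M : Finset E) : Prop :=
  ∀ v, (#{T ∈ M | v ∈ e T} : ℤ) ≤ b v

def IsBlocked (c : E → ℝ) (G : Finset E) (S : E) : Prop :=
  ∃ v ∈ e S, (#{T ∈ G | v ∈ e T} : ℤ) = b v ∧ ∀ T ∈ G, v ∈ e T → c S ≤ c T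

variable {e b}

theorem IsBMatching.empty (hb : ∀ v, 0 ≤ b v) : IsBMatching e b (∅ : Finset E) := by
  simpa [IsBMatching] using hb

theorem filter_insert_mem_eq_of_notMem [DecidableEq E] {a : E} {G : Finset E} {v : V}
    (hv : v ∉ e a) : {T ∈ insert a G | v ∈ e T} = {T ∈ G | v ∈ e T} := by
  rw [filter_insert, if_neg hv]

theorem IsBMatching.insert [DecidableEq E] {G : Finset E} (hG : IsBMatching e b G) {a : E}
    (ha : ∀ v ∈ e a, (#{T ∈ G | v ∈ e T} : ℤ) < b v) : IsBMatching e b (insert a G) := by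
  intro v
  by_cases hv : v ∈ e a
  · rw [filter_insert, if_pos hv]
    have := card_insert_le a {T ∈ G | v ∈ e T}
    have := ha v hv
    omega
  · rw [filter_insert_mem_eq_of_notMem hv]
    exact hG v

theorem IsBlocked.insert [DecidableEq E] {c : E → ℝ} {G : Finset E} {S : E}
    (hS : IsBlocked e b c G S) {a : E} (ha : ∀ v ∈ e a, (#{T ∈ G | v ∈ e T} : ℤ) < b v) :
    IsBlocked e b c (insert a G) S := by
  obtain ⟨v, hvS, hcard, hle⟩ := hS
  have hva : v ∉ e a := fun hva => (ha v hva).ne hcard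
  refine ⟨v, hvS, by rwa [filter_insert_mem_eq_of_notMem hva], fun T hT hvT => ?_⟩
  rcases mem_insert.1 hT with rfl | hT
  · exact absurd hvT hva
  · exact hle T hT hvT

theorem exists_isBMatching_forall_isBlocked [DecidableEq E] (hb : ∀ v, 0 ≤ b v) (c : E → ℝ)
    (s : Finset E) :
    ∃ G ⊆ s, IsBMatching e b G ∧ ∀ S ∈ s, S ∉ G → IsBlocked e b c G S := by
  -- the lightest edge is inserted last, so edges are scanned in decreasing order of weight
  induction s using Finset.induction_on_min_value c with
  | empty => exact ⟨∅, subset_refl _, .empty hb, by simp⟩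
  | insert a s _ hmin ih =>
    obtain ⟨G, hGs, hG, hblocked⟩ := ih
    by_cases hfree : ∀ v ∈ e a, (#{T ∈ G | v ∈ e T} : ℤ) < b v
    · refine ⟨insert a G, insert_subset_insert a hGs, hG.insert hfree, fun S hS hSG => ?_⟩
      obtain ⟨hSa, hSG⟩ := not_or.1 (mt mem_insert.2 hSG)
      exact (hblocked S ((mem_insert.1 hS).resolve_left hSa) hSG).insert hfree
    · refine ⟨G, hGs.trans (subset_insert a s), hG, fun S hS hSG => ?_⟩
      rcases mem_insert.1 hS with rfl | hS
      · push Not at hfree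
        obtain ⟨v, hv, hbv⟩ := hfree
        exact ⟨v, hv, le_antisymm (hG v) hbv, fun T hT _ => hmin T (hGs hT)⟩
      · exact hblocked S hS hSG

theorem IsBlocked.le_sum_div (hb : ∀ v, 0 < b v) {c : E → ℝ} {G : Finset E}
    (hc : ∀ T ∈ G, 0 ≤ c T) {S : E} (hS : IsBlocked e b c G S) :
    c S ≤ ∑ v ∈ e S, (∑ T ∈ G with v ∈ e T, c T) / b v := by
  obtain ⟨v, hvS, hcard, hle⟩ := hS
  have hbv : (0 : ℝ) < b v := by exact_mod_cast hb v
  have hsat : (b v : ℝ) * c S ≤ ∑ T ∈ G with v ∈ e T, c T := by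
    have := card_nsmul_le_sum {T ∈ G | v ∈ e T} c (c S) fun T hT =>
      hle T (mem_filter.1 hT).1 (mem_filter.1 hT).2
    rwa [nsmul_eq_mul, ← Int.cast_natCast, hcard] at this
  calc c S ≤ (∑ T ∈ G with v ∈ e T, c T) / b v := by rw [le_div_iff₀ hbv]; linarith
    _ ≤ ∑ v ∈ e S, (∑ T ∈ G with v ∈ e T, c T) / b v :=
      single_le_sum (f := fun w => (∑ T ∈ G with w ∈ e T, c T) / b w)
        (fun w _ => div_nonneg (sum_nonneg fun T hT => hc T (mem_filter.1 hT).1)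
          (by exact_mod_cast (hb w).le)) hvS

variable [Fintype V]

theorem sum_sum_filter_mem_le_mul_sum {k : ℕ} (hk : ∀ T, #(e T) ≤ k) {c : E → ℝ} {G : Finset E}
    (hc : ∀ T ∈ G, 0 ≤ c T) : ∑ v, ∑ T ∈ G with v ∈ e T, c T ≤ k * ∑ T ∈ G, c T :=
  calc ∑ v, ∑ T ∈ G with v ∈ e T, c T = ∑ T ∈ G, #(e T) * c T := by
        simp only [sum_filter]
        rw [sum_comm]
        refine sum_congr rfl fun T _ => ?_
        rw [sum_ite_mem, univ_inter, sum_const, nsmul_eq_mul]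
    _ ≤ ∑ T ∈ G, k * c T :=
      sum_le_sum fun T hT => mul_le_mul_of_nonneg_right (by exact_mod_cast hk T) (hc T hT)
    _ = k * ∑ T ∈ G, c T := (mul_sum _ _ _).symm

variable [Fintype E]

theorem sum_mul_sum_le_of_sum_le {x : E → ℝ} {a : V → ℝ} (ha : ∀ v, 0 ≤ a v)
    (hx : ∀ v, ∑ S, (if v ∈ e S then x S else 0) ≤ b v) :
    ∑ S, x S * ∑ v ∈ e S, a v ≤ ∑ v, a v * b v :=
  calc ∑ S, x S * ∑ v ∈ e S, a v = ∑ v, a v * ∑ S, (if v ∈ e S then x S else 0) := by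
        simp only [mul_sum, mul_ite, mul_zero]
        rw [sum_comm]
        refine sum_congr rfl fun S _ => ?_
        rw [sum_ite_mem, univ_inter]
        simp only [mul_comm]
    _ ≤ ∑ v, a v * b v := sum_le_sum fun v _ => mul_le_mul_of_nonneg_left (hx v) (ha v)

theorem sum_mul_le_succ_mul_sum_of_forall_isBlocked [DecidableEq E] {k : ℕ}
    (hk : ∀ T, #(e T) ≤ k) (hb : ∀ v, 0 < b v) {x : E → ℝ} (hx0 : ∀ S, 0 ≤ x S) (hx1 : ∀ S, x S ≤ 1)
    (hxcap : ∀ v, ∑ S, (if v ∈ e S then x S else 0) ≤ b v) {c : E → ℝ} {G : Finset E}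
    (hc : ∀ T ∈ G, 0 ≤ c T) (hG : ∀ S ∉ G, 0 < c S → IsBlocked e b c G S) :
    ∑ S, c S * x S ≤ (k + 1) * ∑ T ∈ G, c T := by
  set w : V → ℝ := fun v => ∑ T ∈ G with v ∈ e T, c T
  have hbv : ∀ v, (0 : ℝ) < b v := fun v => by exact_mod_cast hb v
  have hw : ∀ v, 0 ≤ w v / b v := fun v =>
    div_nonneg (sum_nonneg fun T hT => hc T (mem_filter.1 hT).1) (hbv v).le
  have hcharge : ∀ S, c S * x S ≤ (if S ∈ G then c S else 0) + x S * ∑ v ∈ e S, w v / b v := by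
    intro S
    have hrest : 0 ≤ x S * ∑ v ∈ e S, w v / b v :=
      mul_nonneg (hx0 S) (sum_nonneg fun v _ => hw v)
    by_cases hSG : S ∈ G
    · rw [if_pos hSG]
      linarith [mul_le_of_le_one_right (hc S hSG) (hx1 S)]
    · have hcS : c S ≤ ∑ v ∈ e S, w v / b v := by
        rcases lt_or_ge 0 (c S) with hpos | hnonpos
        · exact (hG S hSG hpos).le_sum_div hb hc
        · exact hnonpos.trans (sum_nonneg fun v _ => hw v)
      rw [if_neg hSG, zero_add, mul_comm]
      exact mul_le_mul_of_nonneg_left hcS (hx0 S)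
  calc ∑ S, c S * x S
      ≤ ∑ S, ((if S ∈ G then c S else 0) + x S * ∑ v ∈ e S, w v / b v) :=
        sum_le_sum fun S _ => hcharge S
    _ = ∑ T ∈ G, c T + ∑ S, x S * ∑ v ∈ e S, w v / b v := by
        rw [sum_add_distrib, sum_ite_mem, univ_inter]
    _ ≤ ∑ T ∈ G, c T + ∑ v, w v / b v * b v := by
        gcongr
        exact sum_mul_sum_le_of_sum_le hw hxcap
    _ = ∑ T ∈ G, c T + ∑ v, w v := by
        simp only [div_mul_cancel₀ _ (hbv _).ne']
    _ ≤ ∑ T ∈ G, c T + k * ∑ T ∈ G, c T := by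
        gcongr
        exact sum_sum_filter_mem_le_mul_sum hk hc
    _ = (k + 1) * ∑ T ∈ G, c T := by ring

theorem exists_isBMatching_sum_mul_le {k : ℕ} (hk : ∀ T, #(e T) ≤ k) (hb : ∀ v, 0 < b v)
    {x : E → ℝ} (hx0 : ∀ S, 0 ≤ x S) (hx1 : ∀ S, x S ≤ 1)
    (hxcap : ∀ v, ∑ S, (if v ∈ e S then x S else 0) ≤ b v) (c : E → ℝ) :
    ∃ G, IsBMatching e b G ∧ ∑ S, c S * x S ≤ (k + 1) * ∑ T ∈ G, c T := by
  classical
  obtain ⟨G, hGpos, hG, hblocked⟩ :=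
    exists_isBMatching_forall_isBlocked (fun v => (hb v).le) c {S | 0 < c S}
  refine ⟨G, hG, sum_mul_le_succ_mul_sum_of_forall_isBlocked hk hb hx0 hx1 hxcap
    (fun T hT => (mem_filter.1 (hGpos hT)).2.le) fun S hSG hS => ?_⟩
  exact hblocked S (mem_filter.2 ⟨mem_univ S, hS⟩) hSG

end BMatching

theorem kHypergraph_bMatching_in_convexHull_general
    {V : Type*} [Fintype V] [DecidableEq V]
    (k : ℕ)
    (𝓔 : Finset (Finset V)) (b : V → ℤ)
    (hcard : ∀ S ∈ 𝓔, 1 ≤ S.card ∧ S.card ≤ k)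
    (hb : ∀ v : V, 1 ≤ b v)
    (x : {S : Finset V // S ∈ 𝓔} → ℝ)
    (hx0 : ∀ S, 0 ≤ x S) (hx1 : ∀ S, x S ≤ 1)
    (hxcap : ∀ v : V,
      ∑ S : {S : Finset V // S ∈ 𝓔}, (if v ∈ S.1 then x S else 0) ≤ (b v : ℝ)) :
    (fun S => x S / (k + 1)) ∈
      convexHull ℝ {χ : {S : Finset V // S ∈ 𝓔} → ℝ |
        ∃ M : Finset (Finset V), M ⊆ 𝓔 ∧
          (∀ v : V, ((M.filter (fun S => v ∈ S)).card : ℤ) ≤ b v) ∧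
          χ = fun S => if S.1 ∈ M then 1 else 0} := by
  refine mem_convexHull_of_forall_exists_le
    ((Set.finite_range fun M : Finset (Finset V) => fun S : {S // S ∈ 𝓔} =>
      if S.1 ∈ M then (1 : ℝ) else 0).subset ?_) fun c => ?_
  · rintro χ ⟨M, -, -, rfl⟩
    exact ⟨M, rfl⟩
  obtain ⟨G, hG, hcG⟩ := exists_isBMatching_sum_mul_le (e := Subtype.val)
    (fun S => (hcard S.1 S.2).2) hb hx0 hx1 hxcap c
  have hGmem : ∀ S : {S // S ∈ 𝓔}, S.1 ∈ G.map (.subtype _) ↔ S ∈ G := fun S =>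
    mem_map' (.subtype _)
  refine ⟨_, ⟨G.map (.subtype _), fun S hS => ?_, fun v => ?_, rfl⟩, ?_⟩
  · obtain ⟨T, -, rfl⟩ := mem_map.1 hS
    exact T.2
  · rw [filter_map, card_map]
    exact hG v
  · simp only [hGmem, mul_ite, mul_one, mul_zero, sum_ite_mem, univ_inter, mul_div_assoc']
    rw [← sum_div, div_le_iff₀ (by positivity)]
    linarith

/-- **k-hypergraph b-matching.** If `x` is a fractional b-matching of a k-bounded
hypergraph, then `x/(k+1)` lies in the convex hull of the indicator vectors of
integral b-matchings. -/
theorem kHypergraph_bMatching_in_convexHull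
    {V : Type*} [Fintype V] [DecidableEq V]
    (k : ℕ) (hk : 1 ≤ k)
    (𝓔 : Finset (Finset V)) (b : V → ℤ)
    (hcard : ∀ S ∈ 𝓔, 1 ≤ S.card ∧ S.card ≤ k)
    (hb : ∀ v : V, 1 ≤ b v)
    (x : {S : Finset V // S ∈ 𝓔} → ℝ)
    (hx0 : ∀ S, 0 ≤ x S) (hx1 : ∀ S, x S ≤ 1)
    (hxcap : ∀ v : V,
      ∑ S : {S : Finset V // S ∈ 𝓔}, (if v ∈ S.1 then x S else 0) ≤ (b v : ℝ)) :
    (fun S => x S / (k + 1)) ∈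
      convexHull ℝ {χ : {S : Finset V // S ∈ 𝓔} → ℝ |
        ∃ M : Finset (Finset V), M ⊆ 𝓔 ∧
          (∀ v : V, ((M.filter (fun S => v ∈ S)).card : ℤ) ≤ b v) ∧
          χ = fun S => if S.1 ∈ M then 1 else 0} :=
  kHypergraph_bMatching_in_convexHull_general k 𝓔 b hcard hb x hx0 hx1 hxcap
end

section
/- Let k ≥ 3 be an integer such that a projective plane of order k−1 exists: a finite set P of points and a family L of exactly k²−k+1 subsets of P (lines) such that every line contains exactly k points, every point lies on exactly k lines, and any two distinct lines intersect. For an integer d ≥ 1, consider the k-HDM instance with V = P, 𝓔 = L, demand d_S = d for every line S, capacity b_v = 2d−1 for every point v, and unit profits c_S = 1. Then: (a) every integral solution of this instance contains at most one edge, so the integral optimum equals 1; and (b) the constant vector x with x_S = (2d−1)/(dk) for every S is a fractional solution of total value Σ_{S ∈ 𝓔} x_S = (k²−k+1)(2d−1)/(dk). Consequently the ratio of the LP optimum to the integral optimum is at least (k²−k+1)(2d−1)/(dk), which tends to 2(k−1+1/k) as d → ∞. -/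
open Finset

/-- **Integrality gap lower bound for k-HDM from projective planes.** For a projective
plane of order `k−1` with all demands `d` and all capacities `2d−1`: (a) every integral
solution has at most one edge and some integral solution has exactly one edge (so the
integral optimum is `1`); (b) the constant vector with value `(2d−1)/(dk)` is a
fractional solution of total LP value `(k²−k+1)(2d−1)/(dk)`. -/
theorem kHDM_projective_plane_gap
    {P : Type*} [Fintype P] [DecidableEq P]
    (k : ℕ) (hk : 3 ≤ k)
    (L : Finset (Finset P))
    (hLcard : L.card = k ^ 2 - k + 1)
    (hline : ∀ S ∈ L, S.card = k)
    (hpoint : ∀ v : P, (L.filter (fun S => v ∈ S)).card = k)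
    (hmeet : ∀ S ∈ L, ∀ T ∈ L, S ≠ T → (S ∩ T).Nonempty)
    (d : ℤ) (hd : 1 ≤ d) :
    -- (a) every integral solution contains at most one edge ...
    ((∀ M : Finset (Finset P), M ⊆ L →
        (∀ v : P, ∑ S ∈ M.filter (fun S => v ∈ S), d ≤ 2 * d - 1) → M.card ≤ 1) ∧
      -- ... and one edge is always feasible, so the integral optimum equals 1
      (∃ M : Finset (Finset P), M ⊆ L ∧
        (∀ v : P, ∑ S ∈ M.filter (fun S => v ∈ S), d ≤ 2 * d - 1) ∧ M.card = 1)) ∧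
    -- (b) the constant vector x_S = (2d−1)/(dk) is a fractional solution ...
    ((0 ≤ (2 * (d : ℝ) - 1) / ((d : ℝ) * k) ∧ (2 * (d : ℝ) - 1) / ((d : ℝ) * k) ≤ 1) ∧
      (∀ v : P, ∑ S ∈ L.filter (fun S => v ∈ S), (d : ℝ) * ((2 * (d : ℝ) - 1) / ((d : ℝ) * k)) ≤
        2 * (d : ℝ) - 1) ∧
      -- ... of total value (k²−k+1)(2d−1)/(dk)
      ∑ _S ∈ L, (2 * (d : ℝ) - 1) / ((d : ℝ) * k) =
        ((k : ℝ) ^ 2 - k + 1) * (2 * (d : ℝ) - 1) / ((d : ℝ) * k)) := by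
  have hkR : (3 : ℝ) ≤ (k : ℝ) := by exact_mod_cast hk
  have hdR : (1 : ℝ) ≤ (d : ℝ) := by exact_mod_cast hd
  have hdk : (0 : ℝ) < (d : ℝ) * k := by nlinarith
  refine ⟨⟨?_, ?_⟩, ⟨⟨div_nonneg (by nlinarith) (le_of_lt hdk), ?_⟩, ?_, ?_⟩⟩
  · -- at most one edge
    intro M hML hcap
    by_contra h
    push_neg at h
    obtain ⟨S, hS, T, hT, hST⟩ := Finset.one_lt_card.mp h
    obtain ⟨v, hv⟩ := hmeet S (hML hS) T (hML hT) hST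
    have hvS : v ∈ S := (Finset.mem_inter.mp hv).1
    have hvT : v ∈ T := (Finset.mem_inter.mp hv).2
    have h2 : 2 ≤ (M.filter (fun S => v ∈ S)).card := by
      have : ({S, T} : Finset (Finset P)) ⊆ M.filter (fun S => v ∈ S) := by
        intro U hU
        simp only [Finset.mem_insert, Finset.mem_singleton] at hU
        rcases hU with rfl | rfl <;> simp [Finset.mem_filter, hS, hT, hvS, hvT]
      calc 2 = ({S, T} : Finset (Finset P)).card := (Finset.card_pair hST).symm
        _ ≤ _ := Finset.card_le_card this
    have := hcap v
    rw [Finset.sum_const, nsmul_eq_mul] at this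
    have h2' : (2 : ℤ) ≤ ((M.filter (fun S => v ∈ S)).card : ℤ) := by exact_mod_cast h2
    nlinarith
  · -- one edge feasible
    have hLne : L.Nonempty := by
      rw [← Finset.card_pos, hLcard]; omega
    obtain ⟨S₀, hS₀⟩ := hLne
    refine ⟨{S₀}, by simpa using hS₀, ?_, Finset.card_singleton _⟩
    intro v
    by_cases hv : v ∈ S₀
    · simp only [Finset.filter_singleton, if_pos hv, Finset.sum_singleton]; omega
    · simp only [Finset.filter_singleton, if_neg hv, Finset.sum_empty]; omega
  · -- x ≤ 1
    rw [div_le_one hdk]; nlinarith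
  · -- capacity constraints tight
    intro v
    rw [Finset.sum_const, hpoint v, nsmul_eq_mul]
    have hkne : (k : ℝ) ≠ 0 := by positivity
    have hdne : (d : ℝ) ≠ 0 := by nlinarith
    rw [show (k : ℝ) * ((d : ℝ) * ((2 * (d : ℝ) - 1) / ((d : ℝ) * k))) = 2 * (d : ℝ) - 1 by
      field_simp]
  · -- total value
    rw [Finset.sum_const, hLcard, nsmul_eq_mul]
    have : ((k ^ 2 - k + 1 : ℕ) : ℝ) = (k : ℝ) ^ 2 - k + 1 := by
      have hkk : k ≤ k ^ 2 := by nlinarith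
      push_cast [Nat.cast_sub hkk]
      ring
    rw [this, mul_div_assoc]
end

section
/- Let a 2-CS-PIP instance be given and let P := { x : E → ℝ : 0 ≤ x_e ≤ 1 for all e ∈ E, and Σ_{e ∈ δ(u)} d^e_u x_e ≤ b_u for all u ∈ V } be the polytope of fractional solutions. Let x̂ be an extreme point of P (a point of P that is not a proper convex combination of two distinct points of P) and let F := { e ∈ E : 0 < x̂_e < 1 }. Then: (i) every connected component C of the graph (V, F) has at most |V(C)| edges (equivalently, contains at most one cycle); and (ii) if 0 < x̂_e < 1 for every e ∈ E, then every vertex incident to an edge of E has degree exactly 2 in G, i.e., the support of x̂ induces vertex-disjoint cycles. -/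
/-!
At an extreme point `x` of `{x | 0 ≤ x ≤ 1, A x ≤ b}`, the constraints that are tight at `x`
have no common nonzero direction `y`: otherwise both `x + ε y` and `x - ε y` stay feasible for
small `ε`. Restricted to the fractional coordinates, the tight rows therefore form an injective
linear map, so there are at most as many fractional edges inside a vertex set `W` as vertices
in `W` (only rows of vertices of `W` meet those edges).

If every edge is fractional, this gives `|E| ≤ |tight vertices|`. A tight vertex has degree at
least `2`, since a single edge `e` at `u` carries load `d e u * x e < d e u ≤ b u`. The handshake
identity `∑ deg = 2 |E|` then forces every vertex that meets an edge to be tight of degree `2`.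
-/

open Finset Filter Topology Matrix

theorem eq_zero_of_mem_extremePoints_of_forall_tight {M J : Type*} [AddCommGroup M]
    [Module ℝ M] [Finite J] {f : J → M →ₗ[ℝ] ℝ} {c : J → ℝ} {x y : M}
    (hx : x ∈ Set.extremePoints ℝ {x | ∀ j, f j x ≤ c j})
    (hy : ∀ j, f j x = c j → f j y = 0) : y = 0 := by
  obtain ⟨hxP, hext⟩ := hx
  have slack : ∀ᶠ ε in 𝓝 (0 : ℝ), ∀ j, |ε * f j y| ≤ c j - f j x := by
    refine eventually_all.2 fun j => ?_
    rcases (hxP j).eq_or_lt with htight | hlt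
    · simp [hy j htight, htight]
    · have : Tendsto (fun ε : ℝ => |ε * f j y|) (𝓝 0) (𝓝 0) := by
        simpa using ((continuous_id.mul continuous_const).abs.tendsto (0 : ℝ))
      exact (this.eventually_lt_const (sub_pos.2 hlt)).mono fun _ => le_of_lt
  obtain ⟨ε, hε, hε0⟩ := ((slack.filter_mono nhdsWithin_le_nhds).and
    (self_mem_nhdsWithin : {0}ᶜ ∈ 𝓝[≠] (0 : ℝ))).exists
  have hmem : ∀ s : ℝ, |s| = |ε| → x + s • y ∈ {x | ∀ j, f j x ≤ c j} := by
    intro s hs j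
    have h2 : s * f j y ≤ |ε * f j y| := by
      rw [abs_mul, ← hs, ← abs_mul]; exact le_abs_self _
    simp only [map_add, map_smul, smul_eq_mul]
    linarith [hε j]
  have h := hext (hmem ε rfl) (hmem (-ε) (abs_neg ε))
    (by simpa [neg_smul, ← sub_eq_add_neg] using mem_openSegment_add_sub (𝕜 := ℝ) x (ε • y))
  exact (smul_eq_zero.1 (add_eq_left.1 h)).resolve_left hε0

def packingPolytope {V ι : Type*} [Fintype ι] (A : Matrix V ι ℝ) (b : V → ℝ) : Set (ι → ℝ) :=
  {x | (∀ i, 0 ≤ x i ∧ x i ≤ 1) ∧ ∀ u, (A *ᵥ x) u ≤ b u}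

section packingPolytope

variable {V ι : Type*} [Fintype ι] {A : Matrix V ι ℝ} {b : V → ℝ} {x : ι → ℝ}

theorem packingPolytope_eq_setOf_forall_le :
    packingPolytope A b = {x | ∀ j, (Sum.elim (Sum.elim (fun i => -LinearMap.proj i)
      (fun i => LinearMap.proj i)) (fun u => LinearMap.proj u ∘ₗ A.mulVecLin) j :
        (ι → ℝ) →ₗ[ℝ] ℝ) x ≤ Sum.elim (Sum.elim (0 : ι → ℝ) 1) b j} := by
  ext x
  simp [packingPolytope, Sum.forall, forall_and]

theorem eq_zero_of_mem_extremePoints_packingPolytope [Finite V] {y : ι → ℝ}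
    (hx : x ∈ (packingPolytope A b).extremePoints ℝ)
    (hy : ∀ i, x i = 0 ∨ x i = 1 → y i = 0)
    (hAy : ∀ u, (A *ᵥ x) u = b u → (A *ᵥ y) u = 0) : y = 0 := by
  rw [packingPolytope_eq_setOf_forall_le] at hx
  refine eq_zero_of_mem_extremePoints_of_forall_tight hx ?_
  rintro ((i | i) | u) htight
  · simpa using hy i (Or.inl (by simpa using htight))
  · simpa using hy i (Or.inr (by simpa using htight))
  · simpa using hAy u htight

theorem card_le_card_of_mem_extremePoints_packingPolytope [Fintype V] [DecidableEq ι]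
    (hx : x ∈ (packingPolytope A b).extremePoints ℝ) {S : Finset ι} {T : Finset V}
    (hS : ∀ i ∈ S, 0 < x i ∧ x i < 1)
    (hT : ∀ u ∉ T, (A *ᵥ x) u = b u → ∀ i ∈ S, A u i = 0) : #S ≤ #T := by
  let L := (A.submatrix ((↑) : T → V) ((↑) : S → ι)).mulVecLin
  have hL : Function.Injective L := by
    rw [← LinearMap.ker_eq_bot, LinearMap.ker_eq_bot']
    intro y hy
    let z : ι → ℝ := fun i => if h : i ∈ S then y ⟨i, h⟩ else 0
    have hAz : ∀ u, (A *ᵥ z) u = ∑ i : S, A u i * y i := by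
      intro u
      simp only [z, mulVec, dotProduct, mul_dite, mul_zero]
      exact (sum_attach_eq_sum_dite S fun i => A u i * y i).symm
    have hz : z = 0 := by
      refine eq_zero_of_mem_extremePoints_packingPolytope hx (fun i hi => ?_) fun u hu => ?_
      · have : i ∉ S := fun hiS => by rcases hi with h | h <;> linarith [hS i hiS]
        simp [z, this]
      · rw [hAz]
        by_cases huT : u ∈ T
        · simpa [L, mulVec, dotProduct] using congrFun hy ⟨u, huT⟩
        · simp [hT u huT hu]
    funext i
    simpa [z] using congrFun hz i
  simpa using LinearMap.finrank_le_finrank_of_injective hL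

end packingPolytope

theorem SimpleGraph.degree_eq_two_of_card_edgeFinset_le {V : Type*} [Fintype V]
    {G : SimpleGraph V} [DecidableRel G.Adj] {T : Finset V} (hcard : #G.edgeFinset ≤ #T)
    (hT : ∀ u ∈ T, 2 ≤ G.degree u) {v : V} (hv : 0 < G.degree v) : G.degree v = 2 := by
  classical
  have hsplit := sum_add_sum_compl T fun u => G.degree u
  have hT2 : ∑ u ∈ T, 2 ≤ ∑ u ∈ T, G.degree u := sum_le_sum hT
  rw [sum_const, smul_eq_mul] at hT2
  have hhandshake := G.sum_degrees_eq_twice_card_edges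
  by_cases hvT : v ∈ T
  · exact ((sum_eq_sum_iff_of_le hT).1 (by rw [sum_const, smul_eq_mul]; omega) v hvT).symm
  · have : ∑ u ∈ Tᶜ, G.degree u = 0 := by omega
    exact absurd ((sum_eq_zero_iff.1 this) v (mem_compl.2 hvT)) hv.ne'

section demandMatrix

variable {V : Type*} [Fintype V] [DecidableEq V] {G : SimpleGraph V} [DecidableRel G.Adj]
  {d : Sym2 V → V → ℤ}

variable (G d) in
def demandMatrix : Matrix V G.edgeFinset ℝ :=
  fun u e => if u ∈ (e : Sym2 V) then (d e u : ℝ) else 0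

theorem demandMatrix_mulVec (x : G.edgeFinset → ℝ) (u : V) :
    (demandMatrix G d *ᵥ x) u =
      ∑ e : G.edgeFinset, if u ∈ (e : Sym2 V) then (d e u : ℝ) * x e else 0 := by
  simp [demandMatrix, mulVec, dotProduct, ite_mul]

theorem packingPolytope_demandMatrix (b : V → ℤ) :
    packingPolytope (demandMatrix G d) (fun u => (b u : ℝ)) =
      {x | (∀ e, 0 ≤ x e ∧ x e ≤ 1) ∧ ∀ u : V, ∑ e : G.edgeFinset,
        (if u ∈ e.1 then (d e.1 u : ℝ) * x e else 0) ≤ (b u : ℝ)} := by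
  ext x
  simp only [packingPolytope, demandMatrix_mulVec, Set.mem_ofPred_eq]

theorem ncard_fractional_edges_le_ncard {b : V → ℝ} {x : G.edgeFinset → ℝ}
    (hx : x ∈ (packingPolytope (demandMatrix G d) b).extremePoints ℝ) (W : Set V) :
    {e : Sym2 V | (∃ h : e ∈ G.edgeFinset, 0 < x ⟨e, h⟩ ∧ x ⟨e, h⟩ < 1) ∧
      ∀ v ∈ e, v ∈ W}.ncard ≤ W.ncard := by
  classical
  let S := univ.filter fun e : G.edgeFinset => (0 < x e ∧ x e < 1) ∧ ∀ v ∈ e.1, v ∈ W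
  have hS : {e : Sym2 V | (∃ h : e ∈ G.edgeFinset, 0 < x ⟨e, h⟩ ∧ x ⟨e, h⟩ < 1) ∧
      ∀ v ∈ e, v ∈ W} = S.map (Function.Embedding.subtype _) := by
    ext e
    simp [S]
  rw [hS, Set.ncard_coe_finset, card_map, Set.ncard_eq_toFinset_card']
  refine card_le_card_of_mem_extremePoints_packingPolytope hx
    (fun e he => (mem_filter.1 he).2.1) fun u hu _ e he => ?_
  have hue : u ∉ (e : Sym2 V) := fun hue => hu (Set.mem_toFinset.2 ((mem_filter.1 he).2.2 u hue))
  simp [demandMatrix, hue]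

theorem two_le_degree_of_demandMatrix_mulVec_eq {b : V → ℤ} {x : G.edgeFinset → ℝ} {u : V}
    (hd : ∀ e ∈ G.edgeFinset, u ∈ e → 0 < d e u)
    (hnoclip : ∀ e ∈ G.edgeFinset, u ∈ e → d e u ≤ b u) (hb : 0 < b u)
    (hx : ∀ e, x e < 1) (htight : (demandMatrix G d *ᵥ x) u = b u) : 2 ≤ G.degree u := by
  by_contra! hdeg
  have hunique : ∀ e₁ e₂ : G.edgeFinset, u ∈ e₁.1 → u ∈ e₂.1 → e₁ = e₂ := by
    intro e₁ e₂ h₁ h₂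
    have hcard : #(G.incidenceFinset u) ≤ 1 := by
      rw [G.card_incidenceFinset_eq_degree]; omega
    rw [G.incidenceFinset_eq_filter] at hcard
    exact Subtype.ext (card_le_one.1 hcard _ (mem_filter.2 ⟨e₁.2, h₁⟩) _ (mem_filter.2 ⟨e₂.2, h₂⟩))
  have hslack : (demandMatrix G d *ᵥ x) u < b u := by
    by_cases hcovered : ∃ e : G.edgeFinset, u ∈ e.1
    · obtain ⟨e, hue⟩ := hcovered
      rw [demandMatrix_mulVec, sum_eq_single e
        (fun e' _ hne => if_neg fun hue' => hne (hunique e' e hue' hue)) (by simp), if_pos hue]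
      have hde : (0 : ℝ) < d e u := by exact_mod_cast hd e e.2 hue
      have hdb : (d e u : ℝ) ≤ b u := by exact_mod_cast hnoclip e e.2 hue
      nlinarith [hx e]
    · simp only [demandMatrix_mulVec, if_neg (not_exists.1 hcovered _), sum_const_zero]
      exact_mod_cast hb
  exact hslack.ne htight

theorem degree_eq_two_of_forall_fractional {b : V → ℤ} {x : G.edgeFinset → ℝ}
    (hd : ∀ e ∈ G.edgeFinset, ∀ u ∈ e, 1 ≤ d e u) (hb : ∀ u, 1 ≤ b u)
    (hnoclip : ∀ e ∈ G.edgeFinset, ∀ u ∈ e, d e u ≤ b u)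
    (hx : x ∈ (packingPolytope (demandMatrix G d) fun u => (b u : ℝ)).extremePoints ℝ)
    (hfrac : ∀ e, 0 < x e ∧ x e < 1) {v : V} (hv : ∃ e ∈ G.edgeFinset, v ∈ e) :
    G.degree v = 2 := by
  let T := univ.filter fun u => (demandMatrix G d *ᵥ x) u = b u
  have hcard : #G.edgeFinset ≤ #T := by
    simpa using card_le_card_of_mem_extremePoints_packingPolytope hx (S := univ) (T := T)
      (fun e _ => hfrac e) fun u hu htight => absurd (mem_filter.2 ⟨mem_univ u, htight⟩) hu
  have hdeg : ∀ u ∈ T, 2 ≤ G.degree u := fun u hu =>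
    two_le_degree_of_demandMatrix_mulVec_eq (fun e he hue => hd e he u hue)
      (fun e he hue => hnoclip e he u hue) (hb u) (fun e => (hfrac e).2) (mem_filter.1 hu).2
  obtain ⟨e, he, hve⟩ := hv
  have hpos : 0 < G.degree v := by
    rw [← G.card_incidenceFinset_eq_degree, G.incidenceFinset_eq_filter]
    exact card_pos.2 ⟨e, mem_filter.2 ⟨he, hve⟩⟩
  exact G.degree_eq_two_of_card_edgeFinset_le hcard hdeg hpos

end demandMatrix

/-- **Structure of extreme points of the natural 2-CS-PIP LP.** (i) The fractional
part of an extreme point induces connected components with at most as many edges as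
vertices (i.e., at most one cycle); (ii) if the extreme point is entirely fractional,
then its support induces vertex-disjoint cycles (every covered vertex has degree 2). -/
theorem twoCSPIP_extreme_point_structure
    {V : Type*} [Fintype V] [DecidableEq V]
    (G : SimpleGraph V) [DecidableRel G.Adj]
    (d : Sym2 V → V → ℤ) (b : V → ℤ)
    (hd : ∀ e ∈ G.edgeFinset, ∀ u ∈ e, 1 ≤ d e u)
    (hb : ∀ u : V, 1 ≤ b u)
    (hnoclip : ∀ e ∈ G.edgeFinset, ∀ u ∈ e, d e u ≤ b u)
    (xhat : {e : Sym2 V // e ∈ G.edgeFinset} → ℝ)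
    (hxhat : xhat ∈ Set.extremePoints ℝ
      {x : {e : Sym2 V // e ∈ G.edgeFinset} → ℝ |
        (∀ e, 0 ≤ x e ∧ x e ≤ 1) ∧
        ∀ u : V, ∑ e : {e : Sym2 V // e ∈ G.edgeFinset},
          (if u ∈ e.1 then (d e.1 u : ℝ) * x e else 0) ≤ (b u : ℝ)}) :
    -- (i) each connected component of the graph of fractional edges has
    --     at most |V(C)| edges
    (∀ c : (SimpleGraph.fromEdgeSet
        {e : Sym2 V | ∃ h : e ∈ G.edgeFinset, 0 < xhat ⟨e, h⟩ ∧ xhat ⟨e, h⟩ < 1}).ConnectedComponent,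
      {e : Sym2 V | (∃ h : e ∈ G.edgeFinset, 0 < xhat ⟨e, h⟩ ∧ xhat ⟨e, h⟩ < 1) ∧
        ∀ v ∈ e, v ∈ c.supp}.ncard ≤ c.supp.ncard) ∧
    -- (ii) if every coordinate is strictly fractional, every vertex incident to an
    --      edge of G has degree exactly 2 in G
    ((∀ e : {e : Sym2 V // e ∈ G.edgeFinset}, 0 < xhat e ∧ xhat e < 1) →
      ∀ v : V, (∃ e ∈ G.edgeFinset, v ∈ e) → G.degree v = 2) := by
  rw [← packingPolytope_demandMatrix] at hxhat
  exact ⟨fun c => ncard_fractional_edges_le_ncard hxhat c.supp,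
    fun hfrac _ hv => degree_eq_two_of_forall_fractional hd hb hnoclip hxhat hfrac hv⟩
end

section
/- Let G = (V, E) be a finite simple graph with a positive real demand d^e_u > 0 for each edge e ∈ E and each endpoint u of e. Let P = (v_0, e_1, v_1, e_2, …, e_ℓ, v_ℓ) be a simple path in G with ℓ ≥ 1 (the vertices v_0, …, v_ℓ are distinct and e_i is the edge v_{i−1}v_i). Then there exists z : E → ℝ with z_e = 0 for every e ∉ {e_1, …, e_ℓ}, such that Σ_{e ∈ δ(u)} d^e_u z_e ≠ 0 for u ∈ {v_0, v_ℓ}, and Σ_{e ∈ δ(u)} d^e_u z_e = 0 for every u ∈ V ∖ {v_0, v_ℓ}. -/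
open Finset

private def WDaux {V : Type*} [Fintype V] [DecidableEq V] (G : SimpleGraph V) [DecidableRel G.Adj]
    (d : Sym2 V → V → ℝ) (z : Sym2 V → ℝ) (u : V) : ℝ :=
  ∑ e ∈ G.edgeFinset, (if u ∈ e then d e u * z e else 0)

private lemma WDaux_single {V : Type*} [Fintype V] [DecidableEq V] (G : SimpleGraph V)
    [DecidableRel G.Adj] (d : Sym2 V → V → ℝ) (e₀ : Sym2 V) (he₀ : e₀ ∈ G.edgeFinset)
    (c : ℝ) (u : V) :
    WDaux G d (fun e => if e = e₀ then c else 0) u = if u ∈ e₀ then d e₀ u * c else 0 := by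
  unfold WDaux
  rw [Finset.sum_eq_single e₀]
  · simp
  · intro e _ hne; simp [hne]
  · intro h; exact absurd he₀ h

private lemma WDaux_add {V : Type*} [Fintype V] [DecidableEq V] (G : SimpleGraph V)
    [DecidableRel G.Adj] (d : Sym2 V → V → ℝ) (z₁ z₂ : Sym2 V → ℝ) (u : V) :
    WDaux G d (fun e => z₁ e + z₂ e) u = WDaux G d z₁ u + WDaux G d z₂ u := by
  unfold WDaux
  rw [← Finset.sum_add_distrib]
  apply Finset.sum_congr rfl
  intro e _
  split_ifs <;> ring

private lemma aux_main {V : Type*} [Fintype V] [DecidableEq V] (G : SimpleGraph V)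
    [DecidableRel G.Adj] (d : Sym2 V → V → ℝ)
    (hd : ∀ e ∈ G.edgeFinset, ∀ u ∈ e, 0 < d e u) :
    ∀ {a b : V} (p : G.Walk a b), p.IsPath → 1 ≤ p.length →
    ∃ z : Sym2 V → ℝ,
      (∀ e : Sym2 V, e ∉ p.edges → z e = 0) ∧
      (∀ u : V, u ≠ a → u ≠ b → WDaux G d z u = 0) ∧
      WDaux G d z a ≠ 0 ∧ WDaux G d z b ≠ 0 := by
  intro a b p
  induction p with
  | nil => intro _ hlen; simp at hlen
  | @cons a w b' h q ih =>
    intro hp _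
    rw [SimpleGraph.Walk.cons_isPath_iff] at hp
    obtain ⟨hq, haq⟩ := hp
    have he₁ : (s(a, w) : Sym2 V) ∈ G.edgeFinset := by
      rw [SimpleGraph.mem_edgeFinset]; exact h
    have haw : a ≠ w := G.ne_of_adj h
    cases q with
    | nil =>
      -- single edge a-w, with w = b'
      refine ⟨fun e => if e = s(a, w) then 1 else 0, ?_, ?_, ?_, ?_⟩
      · intro e he
        simp only [SimpleGraph.Walk.edges_cons, SimpleGraph.Walk.edges_nil,
          List.mem_singleton] at he
        simp [he]
      · intro u hua huw
        rw [WDaux_single G d _ he₁]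
        have : u ∉ (s(a, w) : Sym2 V) := by
          rw [Sym2.mem_iff]; push_neg; exact ⟨hua, huw⟩
        simp [this]
      · rw [WDaux_single G d _ he₁]
        have ha : a ∈ (s(a, w) : Sym2 V) := by simp
        simp only [ha, if_true, mul_one]
        exact ne_of_gt (hd _ he₁ a ha)
      · rw [WDaux_single G d _ he₁]
        have hw : w ∈ (s(a, w) : Sym2 V) := by simp
        simp only [hw, if_true, mul_one]
        exact ne_of_gt (hd _ he₁ w hw)
    | @cons _ x _ h' q' =>
      obtain ⟨z', hz'supp, hz'mid, hz'w, hz'b'⟩ := ih hq (by simp)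
      have hwb : w ≠ b' := by
        rw [SimpleGraph.Walk.cons_isPath_iff] at hq
        intro hE; apply hq.2; rw [hE]; exact SimpleGraph.Walk.end_mem_support q' 
      have hab : a ≠ b' := by
        intro hE; apply haq; rw [hE]; exact SimpleGraph.Walk.end_mem_support _
      have hwmem : w ∈ (SimpleGraph.Walk.cons h' q').support :=
        SimpleGraph.Walk.start_mem_support _
      have hdw : 0 < d s(a, w) w := hd _ he₁ w (by simp)
      set c : ℝ := -(WDaux G d z' w) / d s(a, w) w with hc
      have hcne : c ≠ 0 := by
        apply div_ne_zero _ (ne_of_gt hdw)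
        simpa using hz'w
      refine ⟨fun e => z' e + (if e = s(a, w) then c else 0), ?_, ?_, ?_, ?_⟩
      · intro e he
        simp only [SimpleGraph.Walk.edges_cons, List.mem_cons] at he
        push_neg at he
        have he2 : e ∉ (SimpleGraph.Walk.cons h' q').edges := by
          simp only [SimpleGraph.Walk.edges_cons, List.mem_cons]
          push_neg; exact he.2
        show z' e + (if e = s(a, w) then c else 0) = 0
        rw [hz'supp e he2, if_neg he.1, add_zero]
      · intro u hua hub
        rw [WDaux_add, WDaux_single G d _ he₁]
        by_cases huw : u = w
        · subst huw
          have hm : u ∈ (s(a, u) : Sym2 V) := by simp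
          rw [if_pos hm, hc, mul_div_cancel₀ _ (ne_of_gt hdw)]
          ring
        · have hm : u ∉ (s(a, w) : Sym2 V) := by
            rw [Sym2.mem_iff]; push_neg; exact ⟨hua, huw⟩
          rw [if_neg hm, hz'mid u huw hub, add_zero]
      · rw [WDaux_add, WDaux_single G d _ he₁]
        have hza : WDaux G d z' a = 0 := hz'mid a haw hab
        have ha : a ∈ (s(a, w) : Sym2 V) := by simp
        rw [hza, if_pos ha, zero_add]
        exact mul_ne_zero (ne_of_gt (hd _ he₁ a ha)) hcne
      · rw [WDaux_add, WDaux_single G d _ he₁]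
        have hm : b' ∉ (s(a, w) : Sym2 V) := by
          rw [Sym2.mem_iff]; push_neg; exact ⟨hab.symm, hwb.symm⟩
        rw [if_neg hm, add_zero]
        exact hz'b'

/-- **Path augmentation (Lemma 3).** Given positive demands `d^e_u` and a simple path
`P` from `v₀` to `v₁` of length at least 1, there is an augmentation vector `z`
supported on the edges of `P` whose weighted degree is nonzero exactly at the two
endpoints of the path. -/
theorem twoCSPIP_path_augmentation
    {V : Type*} [Fintype V] [DecidableEq V]
    (G : SimpleGraph V) [DecidableRel G.Adj]
    (d : Sym2 V → V → ℝ)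
    (hd : ∀ e ∈ G.edgeFinset, ∀ u ∈ e, 0 < d e u)
    (v₀ v₁ : V) (p : G.Walk v₀ v₁) (hp : p.IsPath) (hlen : 1 ≤ p.length) :
    ∃ z : Sym2 V → ℝ,
      (∀ e : Sym2 V, e ∉ p.edges → z e = 0) ∧
      (∀ u ∈ ({v₀, v₁} : Set V),
        ∑ e ∈ G.edgeFinset, (if u ∈ e then d e u * z e else 0) ≠ 0) ∧
      (∀ u : V, u ∉ ({v₀, v₁} : Set V) →
        ∑ e ∈ G.edgeFinset, (if u ∈ e then d e u * z e else 0) = 0) := by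
  obtain ⟨z, hsupp, hmid, h0, h1⟩ := aux_main G d hd p hp hlen
  refine ⟨z, hsupp, ?_, ?_⟩
  · intro u hu
    rcases hu with hu | hu <;> subst hu
    · exact h0
    · exact h1
  · intro u hu
    simp only [Set.mem_insert_iff, Set.mem_singleton_iff] at hu
    push_neg at hu
    exact hmid u hu.1 hu.2
end

section
/- Let a 2-CS-PIP instance be given and let x be a fractional solution with x_{e₀} = 1 for some edge e₀ ∈ E. Let x̄ : E → ℝ agree with x on E ∖ {e₀} and satisfy x̄_{e₀} = 0. If x̄/3 lies in the convex hull of the indicator vectors of integral solutions, then x/3 also lies in the convex hull of the indicator vectors of integral solutions. -/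
/-!
Write `x̄/3 = ∑ wᵢ χ(Mᵢ)` as a convex combination of packings. At an endpoint `u` of `e₀` the
average load `∑ wᵢ load(Mᵢ, u) = (A x̄)ᵤ / 3` (`A` the demand matrix) is at most
`(bᵤ - d_{e₀}(u)) / 3`, so by Markov's inequality (loads are integers) the packings without room
for `e₀` at `u` weigh less than `1/3`, while the packings containing `e₀` weigh nothing. Hence the
packings `Mᵢ` to which `e₀` can be added weigh `W > 1/3`; shifting each of them by
`(1/(3W)) χ(e₀)`, i.e. moving part of its weight to `Mᵢ + e₀`, turns `x̄/3` into
`x̄/3 + χ(e₀)/3 = x/3`.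
-/

open Finset

section WeightedSums

variable {ι : Type*}

theorem Finset.sum_filter_le_sum_filter_add_sum_filter {M : Type*} [AddCommMonoid M]
    [PartialOrder M] [IsOrderedAddMonoid M] {s : Finset ι} {f : ι → M} {p q r : ι → Prop}
    [DecidablePred p] [DecidablePred q] [DecidablePred r]
    (hf : ∀ i ∈ s, 0 ≤ f i) (h : ∀ i ∈ s, p i → q i ∨ r i) :
    ∑ i ∈ s with p i, f i ≤ ∑ i ∈ s with q i, f i + ∑ i ∈ s with r i, f i := by
  simp only [sum_filter, ← sum_add_distrib]
  refine sum_le_sum fun i hi => ?_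
  have hfi : 0 ≤ f i := hf i hi
  by_cases hp : p i
  · rw [if_pos hp]
    rcases h i hi hp with hq | hr
    · rw [if_pos hq]; exact le_add_of_nonneg_right (ite_nonneg hfi le_rfl)
    · rw [if_pos hr]; exact le_add_of_nonneg_left (ite_nonneg hfi le_rfl)
  · rw [if_neg hp]; exact add_nonneg (ite_nonneg hfi le_rfl) (ite_nonneg hfi le_rfl)

variable {𝕜 : Type*} [Field 𝕜] [LinearOrder 𝕜] [IsStrictOrderedRing 𝕜]

theorem Finset.sum_filter_lt_lt_of_sum_mul_le {s : Finset ι} {w : ι → 𝕜} {f : ι → ℤ} {B : ℤ}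
    {c : 𝕜} (hw : ∀ i ∈ s, 0 ≤ w i) (hf : ∀ i ∈ s, 0 ≤ f i) (hc : 0 < c)
    (h : ∑ i ∈ s, w i * f i ≤ B * c) : ∑ i ∈ s with B < f i, w i < c := by
  have hmarkov : (B + 1 : 𝕜) * ∑ i ∈ s with B < f i, w i ≤ ∑ i ∈ s, w i * f i := calc
    _ = ∑ i ∈ s with B < f i, w i * (B + 1) := by rw [mul_sum]; simp only [mul_comm]
    _ ≤ ∑ i ∈ s with B < f i, w i * f i := sum_le_sum fun i hi => by
        obtain ⟨his, hlt⟩ := mem_filter.1 hi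
        exact mul_le_mul_of_nonneg_left (by exact_mod_cast hlt) (hw i his)
    _ ≤ _ := sum_le_sum_of_subset_of_nonneg (filter_subset _ _) fun i hi _ =>
        mul_nonneg (hw i hi) (by exact_mod_cast hf i hi)
  have hB : (0 : 𝕜) ≤ B := nonneg_of_mul_nonneg_left
    ((sum_nonneg fun i hi => mul_nonneg (hw i hi) (by exact_mod_cast hf i hi)).trans h) hc
  have hS : 0 ≤ ∑ i ∈ s with B < f i, w i := sum_nonneg fun i hi => hw i (mem_filter.1 hi).1
  nlinarith

open Classical in
theorem sum_smul_add_smul_mem_convexHull {E : Type*} [AddCommGroup E] [Module 𝕜 E] [Fintype ι]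
    {s : Set E} {w : ι → 𝕜} {z : ι → E} {v : E} {c : 𝕜}
    (hw₀ : ∀ i, 0 ≤ w i) (hw₁ : ∑ i, w i = 1) (hz : ∀ i, z i ∈ s) (hc₀ : 0 ≤ c)
    (hc : c ≤ ∑ i with z i + v ∈ s, w i) :
    ∑ i, w i • z i + c • v ∈ convexHull 𝕜 s := by
  set W := ∑ i with z i + v ∈ s, w i
  have hW : 0 ≤ W := hc₀.trans hc
  set r := c / W
  have hr₀ : 0 ≤ r := div_nonneg hc₀ hW
  have hr₁ : r ≤ 1 := div_le_one_of_le₀ hc hW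
  -- `W = 0` forces `c = 0`, so the junk value `c / 0 = 0` is harmless
  have hrW : W * r = c := by
    rcases hW.eq_or_lt with h | h
    · rw [← h, zero_mul]; exact le_antisymm hc₀ (hc.trans h.ge)
    · exact mul_div_cancel₀ c h.ne'
  -- `z i + r • v` lies on the segment from `z i` to `z i + v`
  have hmem : ∀ i, z i + (if z i + v ∈ s then r else 0) • v ∈ convexHull 𝕜 s := by
    intro i
    split_ifs with hg
    · refine segment_subset_convexHull (hz i) hg ⟨1 - r, r, by linarith, hr₀, by ring, ?_⟩
      module
    · simpa using subset_convexHull 𝕜 s (hz i)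
  convert (convex_convexHull 𝕜 s).sum_mem (fun i _ => hw₀ i) hw₁ (fun i _ => hmem i) using 1
  simp only [smul_add, sum_add_distrib, smul_smul, ← sum_smul, mul_ite, mul_zero, ← sum_filter]
  rw [← sum_mul, hrW]

end WeightedSums

namespace TwoCSPIP

open Matrix

variable {V : Type*} [DecidableEq V] {d : Sym2 V → V → ℤ}

variable (d) in
def load (M : Finset (Sym2 V)) (u : V) : ℤ := ∑ e ∈ M.filter (fun e => u ∈ e), d e u

theorem load_nonneg {M : Finset (Sym2 V)} (hd : ∀ e ∈ M, ∀ u ∈ e, 0 ≤ d e u) (u : V) :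
    0 ≤ load d M u :=
  sum_nonneg fun e he => hd e (mem_filter.1 he).1 u (mem_filter.1 he).2

theorem load_insert {M : Finset (Sym2 V)} {e : Sym2 V} (he : e ∉ M) (u : V) :
    load d (insert e M) u = load d M u + if u ∈ e then d e u else 0 := by
  unfold load
  rw [filter_insert]
  split_ifs with hu
  · rw [sum_insert fun h => he (mem_filter.1 h).1, add_comm]
  · rw [add_zero]

variable [Fintype V] {G : SimpleGraph V} [DecidableRel G.Adj]

def indicatorVec (M : Finset (Sym2 V)) : {e // e ∈ G.edgeFinset} → ℝ :=
  fun e => if e.1 ∈ M then 1 else 0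

def packingVectors (G : SimpleGraph V) [DecidableRel G.Adj] (d : Sym2 V → V → ℤ) (b : V → ℤ) :
    Set ({e // e ∈ G.edgeFinset} → ℝ) :=
  {χ | ∃ M : Finset (Sym2 V), M ⊆ G.edgeFinset ∧ (∀ u, load d M u ≤ b u) ∧ χ = indicatorVec M}

def demandMatrix (G : SimpleGraph V) [DecidableRel G.Adj] (d : Sym2 V → V → ℤ) :
    Matrix V {e // e ∈ G.edgeFinset} ℝ :=
  fun u e => if u ∈ e.1 then (d e.1 u : ℝ) else 0

theorem demandMatrix_mulVec_apply (y : {e // e ∈ G.edgeFinset} → ℝ) (u : V) :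
    (demandMatrix G d *ᵥ y) u = ∑ e, if u ∈ e.1 then (d e.1 u : ℝ) * y e else 0 := by
  simp only [mulVec, dotProduct, demandMatrix, ite_mul, zero_mul]

theorem demandMatrix_mulVec_add_single (y : {e // e ∈ G.edgeFinset} → ℝ)
    {e : {e // e ∈ G.edgeFinset}} {u : V} (hu : u ∈ e.1) :
    (demandMatrix G d *ᵥ (y + Pi.single e 1)) u = (demandMatrix G d *ᵥ y) u + d e.1 u := by
  rw [mulVec_add, mulVec_single_one, Pi.add_apply, col_apply, demandMatrix, if_pos hu]

theorem demandMatrix_mulVec_indicatorVec {M : Finset (Sym2 V)} (hM : M ⊆ G.edgeFinset) (u : V) :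
    (demandMatrix G d *ᵥ indicatorVec M) u = load d M u := by
  simp only [mulVec, dotProduct, demandMatrix, indicatorVec, mul_ite, mul_one, mul_zero]
  rw [sum_coe_sort G.edgeFinset
      (fun e => if e ∈ M then (if u ∈ e then (d e u : ℝ) else 0) else 0),
    ← sum_filter, filter_mem_eq_inter, inter_eq_right.2 hM, ← sum_filter, load]
  push_cast
  rfl

theorem sum_mul_load_eq_demandMatrix_mulVec {ι : Type*} [Fintype ι] {w : ι → ℝ}
    {M : ι → Finset (Sym2 V)} (hM : ∀ i, M i ⊆ G.edgeFinset) (u : V) :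
    ∑ i, w i * load d (M i) u = (demandMatrix G d *ᵥ ∑ i, w i • indicatorVec (M i)) u := by
  simp [mulVec_sum, mulVec_smul, demandMatrix_mulVec_indicatorVec (hM _)]

theorem sum_smul_indicatorVec_apply {ι : Type*} [Fintype ι] (w : ι → ℝ)
    (M : ι → Finset (Sym2 V)) (e : {e // e ∈ G.edgeFinset}) :
    (∑ i, w i • indicatorVec (M i)) e = ∑ i with e.1 ∈ M i, w i := by
  simp [indicatorVec, sum_filter]

theorem indicatorVec_insert {M : Finset (Sym2 V)} {e : {e // e ∈ G.edgeFinset}} (he : e.1 ∉ M) :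
    indicatorVec (insert e.1 M) = indicatorVec M + Pi.single e 1 := by
  funext f
  by_cases hf : f = e
  · subst hf; simp [indicatorVec, he]
  · simp [indicatorVec, hf, Subtype.val_injective.ne hf]

theorem indicatorVec_add_single_mem_packingVectors {b : V → ℤ} {M : Finset (Sym2 V)}
    (hM : M ⊆ G.edgeFinset) (hMb : ∀ u, load d M u ≤ b u) {e : {e // e ∈ G.edgeFinset}}
    (he : e.1 ∉ M) (hroom : ∀ u ∈ e.1, load d M u + d e.1 u ≤ b u) :
    indicatorVec M + Pi.single e 1 ∈ packingVectors G d b := by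
  refine ⟨insert e.1 M, insert_subset e.2 hM, fun u => ?_, (indicatorVec_insert he).symm⟩
  rw [load_insert he]
  split_ifs with hu
  · exact hroom u hu
  · simpa using hMb u

open Classical in
theorem inv_three_le_sum_filter_add_single_mem {ι : Type*} [Fintype ι] {w : ι → ℝ}
    {M : ι → Finset (Sym2 V)} {b : V → ℤ} {e₀ : {e // e ∈ G.edgeFinset}}
    (hw₀ : ∀ i, 0 ≤ w i) (hw₁ : ∑ i, w i = 1)
    (hM : ∀ i, M i ⊆ G.edgeFinset) (hMb : ∀ i u, load d (M i) u ≤ b u)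
    (hover : ∀ u ∈ e₀.1, ∑ i with b u - d e₀.1 u < load d (M i) u, w i < 3⁻¹)
    (hcontain : ∑ i with e₀.1 ∈ M i, w i = 0) :
    3⁻¹ ≤ ∑ i with indicatorVec (M i) + Pi.single e₀ 1 ∈ packingVectors G d b, w i := by
  obtain ⟨u, v, huv⟩ : ∃ u v, e₀.1 = s(u, v) := e₀.1.ind fun u v => ⟨u, v, rfl⟩
  have hbad : ∀ i, indicatorVec (M i) + Pi.single e₀ 1 ∉ packingVectors G d b →
      b u - d e₀.1 u < load d (M i) u ∨ (b v - d e₀.1 v < load d (M i) v ∨ e₀.1 ∈ M i) := by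
    intro i hi
    by_contra! h
    refine hi (indicatorVec_add_single_mem_packingVectors (hM i) (hMb i) h.2.2 fun a ha => ?_)
    rw [huv, Sym2.mem_iff] at ha
    rcases ha with rfl | rfl <;> omega
  have hsplit := sum_filter_add_sum_filter_not univ
    (fun i => indicatorVec (M i) + Pi.single e₀ 1 ∈ packingVectors G d b) w
  have hunion₁ := sum_filter_le_sum_filter_add_sum_filter (s := univ) (fun i _ => hw₀ i)
    fun i _ => hbad i
  have hunion₂ := sum_filter_le_sum_filter_add_sum_filter (s := univ)
    (p := fun i => b v - d e₀.1 v < load d (M i) v ∨ e₀.1 ∈ M i) (fun i _ => hw₀ i) fun i _ => id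
  linarith [hover u (by simp [huv]), hover v (by simp [huv])]

end TwoCSPIP

open Matrix TwoCSPIP

theorem twoCSPIP_pack_one_edge_general
    {V : Type*} [Fintype V] [DecidableEq V]
    (G : SimpleGraph V) [DecidableRel G.Adj]
    (d : Sym2 V → V → ℤ) (b : V → ℤ)
    (hd : ∀ e ∈ G.edgeFinset, ∀ u ∈ e, 1 ≤ d e u)
    (x : {e : Sym2 V // e ∈ G.edgeFinset} → ℝ)
    (hxcap : ∀ u : V,
      ∑ e : {e : Sym2 V // e ∈ G.edgeFinset},
        (if u ∈ e.1 then (d e.1 u : ℝ) * x e else 0) ≤ (b u : ℝ))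
    (e₀ : {e : Sym2 V // e ∈ G.edgeFinset}) (he₀ : x e₀ = 1)
    (xbar : {e : Sym2 V // e ∈ G.edgeFinset} → ℝ)
    (hxbar : ∀ e, e ≠ e₀ → xbar e = x e) (hxbar0 : xbar e₀ = 0)
    (hhull : (fun e => xbar e / 3) ∈
      convexHull ℝ {χ : {e : Sym2 V // e ∈ G.edgeFinset} → ℝ |
        ∃ M : Finset (Sym2 V), M ⊆ G.edgeFinset ∧
          (∀ u : V, ∑ e ∈ M.filter (fun e => u ∈ e), d e u ≤ b u) ∧
          χ = fun e => if e.1 ∈ M then 1 else 0}) :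
    (fun e => x e / 3) ∈
      convexHull ℝ {χ : {e : Sym2 V // e ∈ G.edgeFinset} → ℝ |
        ∃ M : Finset (Sym2 V), M ⊆ G.edgeFinset ∧
          (∀ u : V, ∑ e ∈ M.filter (fun e => u ∈ e), d e u ≤ b u) ∧
          χ = fun e => if e.1 ∈ M then 1 else 0} := by
  have hthird : ∀ y : {e // e ∈ G.edgeFinset} → ℝ, (fun e => y e / 3) = (3⁻¹ : ℝ) • y :=
    fun y => funext fun e => div_eq_inv_mul (y e) 3
  rw [hthird] at hhull ⊢
  have hx : x = xbar + Pi.single e₀ 1 := funext fun e => by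
    by_cases he : e = e₀
    · subst he; simp [he₀, hxbar0]
    · simp [hxbar e he, he]
  obtain ⟨ι, _, w, z, hw₀, hw₁, hz, hwz⟩ := mem_convexHull_iff_exists_fintype.1 hhull
  choose M hME hMb hzM using hz
  obtain rfl : z = fun i => indicatorVec (M i) := funext hzM
  have hover : ∀ u ∈ e₀.1, ∑ i with b u - d e₀.1 u < load d (M i) u, w i < 3⁻¹ := by
    intro u hu
    have hcap := hxcap u
    rw [← demandMatrix_mulVec_apply, hx, demandMatrix_mulVec_add_single xbar hu] at hcap
    refine sum_filter_lt_lt_of_sum_mul_le (fun i _ => hw₀ i)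
      (fun i _ => load_nonneg (fun e he u hu => zero_le_one.trans (hd e (hME i he) u hu)) u)
      (by norm_num) ?_
    rw [sum_mul_load_eq_demandMatrix_mulVec hME, hwz, mulVec_smul, Pi.smul_apply, smul_eq_mul]
    push_cast
    linarith
  have hcontain : ∑ i with e₀.1 ∈ M i, w i = 0 := by
    rw [← sum_smul_indicatorVec_apply, hwz, Pi.smul_apply, hxbar0, smul_zero]
  rw [hx, smul_add, ← hwz]
  exact sum_smul_add_smul_mem_convexHull hw₀ hw₁ (fun i => ⟨M i, hME i, hMb i, rfl⟩)
    (by norm_num) (inv_three_le_sum_filter_add_single_mem hw₀ hw₁ hME hMb hover hcontain)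

/-- **Packing a 1-edge for 2-CS-PIP.** If `x` is a fractional solution with
`x_{e₀} = 1` and `x̄` (which zeroes out `e₀`) satisfies `x̄/3 ∈ conv(integral
solutions)`, then also `x/3 ∈ conv(integral solutions)`. -/
theorem twoCSPIP_pack_one_edge
    {V : Type*} [Fintype V] [DecidableEq V]
    (G : SimpleGraph V) [DecidableRel G.Adj]
    (d : Sym2 V → V → ℤ) (b : V → ℤ)
    (hd : ∀ e ∈ G.edgeFinset, ∀ u ∈ e, 1 ≤ d e u)
    (hb : ∀ u : V, 1 ≤ b u)
    (hnoclip : ∀ e ∈ G.edgeFinset, ∀ u ∈ e, d e u ≤ b u)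
    (x : {e : Sym2 V // e ∈ G.edgeFinset} → ℝ)
    (hx0 : ∀ e, 0 ≤ x e) (hx1 : ∀ e, x e ≤ 1)
    (hxcap : ∀ u : V,
      ∑ e : {e : Sym2 V // e ∈ G.edgeFinset},
        (if u ∈ e.1 then (d e.1 u : ℝ) * x e else 0) ≤ (b u : ℝ))
    (e₀ : {e : Sym2 V // e ∈ G.edgeFinset}) (he₀ : x e₀ = 1)
    (xbar : {e : Sym2 V // e ∈ G.edgeFinset} → ℝ)
    (hxbar : ∀ e, e ≠ e₀ → xbar e = x e) (hxbar0 : xbar e₀ = 0)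
    (hhull : (fun e => xbar e / 3) ∈
      convexHull ℝ {χ : {e : Sym2 V // e ∈ G.edgeFinset} → ℝ |
        ∃ M : Finset (Sym2 V), M ⊆ G.edgeFinset ∧
          (∀ u : V, ∑ e ∈ M.filter (fun e => u ∈ e), d e u ≤ b u) ∧
          χ = fun e => if e.1 ∈ M then 1 else 0}) :
    (fun e => x e / 3) ∈
      convexHull ℝ {χ : {e : Sym2 V // e ∈ G.edgeFinset} → ℝ |
        ∃ M : Finset (Sym2 V), M ⊆ G.edgeFinset ∧
          (∀ u : V, ∑ e ∈ M.filter (fun e => u ∈ e), d e u ≤ b u) ∧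
          χ = fun e => if e.1 ∈ M then 1 else 0} :=
  twoCSPIP_pack_one_edge_general G d b hd x hxcap e₀ he₀ xbar hxbar hxbar0 hhull
end

section
/- Let a 2-CS-PIP instance be given, let x be a fractional solution, and let e₀ = uv ∈ E be an edge with x_{e₀} > 0 such that each of u and v is incident to at most one edge f ≠ e₀ with x_f > 0. Let x̄ : E → ℝ agree with x on E ∖ {e₀} and satisfy x̄_{e₀} = 0. If x̄/3 lies in the convex hull of the indicator vectors of integral solutions, then x/3 also lies in the convex hull of the indicator vectors of integral solutions. -/
open Finset

/-- **Packing an edge of a cycle for 2-CS-PIP.** Let `x` be a fractional solution and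
`e₀ = uv` an edge with `x_{e₀} > 0` such that each endpoint of `e₀` is incident to at
most one other edge of positive fractional value. If `x̄/3` (with `x̄` zeroing out
`e₀`) lies in the convex hull of integral solutions, then so does `x/3`. -/
theorem twoCSPIP_pack_cycle_edge
    {V : Type*} [Fintype V] [DecidableEq V]
    (G : SimpleGraph V) [DecidableRel G.Adj]
    (d : Sym2 V → V → ℤ) (b : V → ℤ)
    (hd : ∀ e ∈ G.edgeFinset, ∀ u ∈ e, 1 ≤ d e u)
    (hb : ∀ u : V, 1 ≤ b u)
    (hnoclip : ∀ e ∈ G.edgeFinset, ∀ u ∈ e, d e u ≤ b u)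
    (x : {e : Sym2 V // e ∈ G.edgeFinset} → ℝ)
    (hx0 : ∀ e, 0 ≤ x e) (hx1 : ∀ e, x e ≤ 1)
    (hxcap : ∀ u : V,
      ∑ e : {e : Sym2 V // e ∈ G.edgeFinset},
        (if u ∈ e.1 then (d e.1 u : ℝ) * x e else 0) ≤ (b u : ℝ))
    (u v : V) (e₀ : {e : Sym2 V // e ∈ G.edgeFinset}) (he₀ : e₀.1 = s(u, v))
    (hx₀pos : 0 < x e₀)
    (hsparse : ∀ w : V, w ∈ e₀.1 →
      {f : {e : Sym2 V // e ∈ G.edgeFinset} | f ≠ e₀ ∧ w ∈ f.1 ∧ 0 < x f}.Subsingleton)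
    (xbar : {e : Sym2 V // e ∈ G.edgeFinset} → ℝ)
    (hxbar : ∀ e, e ≠ e₀ → xbar e = x e) (hxbar0 : xbar e₀ = 0)
    (hhull : (fun e => xbar e / 3) ∈
      convexHull ℝ {χ : {e : Sym2 V // e ∈ G.edgeFinset} → ℝ |
        ∃ M : Finset (Sym2 V), M ⊆ G.edgeFinset ∧
          (∀ u : V, ∑ e ∈ M.filter (fun e => u ∈ e), d e u ≤ b u) ∧
          χ = fun e => if e.1 ∈ M then 1 else 0}) :
    (fun e => x e / 3) ∈
      convexHull ℝ {χ : {e : Sym2 V // e ∈ G.edgeFinset} → ℝ |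
        ∃ M : Finset (Sym2 V), M ⊆ G.edgeFinset ∧
          (∀ u : V, ∑ e ∈ M.filter (fun e => u ∈ e), d e u ≤ b u) ∧
          χ = fun e => if e.1 ∈ M then 1 else 0} := by
  classical
  rw [_root_.convexHull_eq] at hhull
  obtain ⟨ι, t, w, z, hw0, hw1, hz, hcm⟩ := hhull
  -- extract the integral solutions
  have hz' : ∀ i : ι, ∃ N : Finset (Sym2 V), N ⊆ G.edgeFinset ∧
      (∀ a : V, ∑ e ∈ N.filter (fun e => a ∈ e), d e a ≤ b a) ∧
      (i ∈ t → z i = fun e => if e.1 ∈ N then (1 : ℝ) else 0) := by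
    intro i
    by_cases hi : i ∈ t
    · obtain ⟨N, h1, h2, h3⟩ := hz i hi
      exact ⟨N, h1, h2, fun _ => h3⟩
    · refine ⟨∅, by simp, fun a => ?_, fun h => absurd h hi⟩
      simpa using (hb a).trans' (by norm_num)
  choose M hM1 hM2 hM3 using hz'
  have hu : u ∈ e₀.1 := by rw [he₀]; exact Sym2.mem_mk_left u v
  have hv : v ∈ e₀.1 := by rw [he₀]; exact Sym2.mem_mk_right u v
  -- coordinatewise description of the convex combination
  have hcoord : ∀ f : {e : Sym2 V // e ∈ G.edgeFinset},
      ∑ i ∈ t, w i * (if f.1 ∈ M i then (1 : ℝ) else 0) = xbar f / 3 := by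
    intro f
    have h1 : t.centerMass w z = ∑ i ∈ t, w i • z i :=
      Finset.centerMass_eq_of_sum_1 t z hw1
    have h2 := congrFun (h1.symm.trans hcm) f
    rw [Finset.sum_apply] at h2
    rw [← h2]
    refine Finset.sum_congr rfl fun i hi => ?_
    rw [hM3 i hi]
    simp
  set c : ℝ := x e₀ / 3 with hc
  have hc0 : 0 < c := by positivity
  have hc3 : c ≤ 1 / 3 := by have := hx1 e₀; rw [hc]; linarith
  -- membership of positive coordinates
  have hposmem : ∀ i ∈ t, 0 < w i → ∀ g ∈ M i, ∀ a : V, a ∈ g →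
      ∃ f : {e : Sym2 V // e ∈ G.edgeFinset}, f ≠ e₀ ∧ a ∈ f.1 ∧ 0 < x f ∧ f.1 = g := by
    intro i hi hwi g hg a hag
    have hgE : g ∈ G.edgeFinset := hM1 i hg
    set f : {e : Sym2 V // e ∈ G.edgeFinset} := ⟨g, hgE⟩ with hf
    have hxbf : 0 < xbar f := by
      have hle : w i ≤ ∑ j ∈ t, w j * (if f.1 ∈ M j then (1 : ℝ) else 0) := by
        have heq : w i * (if f.1 ∈ M i then (1 : ℝ) else 0) = w i := by
          simp [hf, hg]
        calc w i = w i * (if f.1 ∈ M i then (1 : ℝ) else 0) := heq.symm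
          _ ≤ ∑ j ∈ t, w j * (if f.1 ∈ M j then (1 : ℝ) else 0) :=
            Finset.single_le_sum (f := fun j => w j * (if f.1 ∈ M j then (1 : ℝ) else 0))
              (fun j hj => mul_nonneg (hw0 j hj) (by split <;> norm_num)) hi
      rw [hcoord f] at hle
      linarith
    have hfe : f ≠ e₀ := by
      intro h; rw [h, hxbar0] at hxbf; exact lt_irrefl _ hxbf
    exact ⟨f, hfe, hag, by rw [← hxbar f hfe]; exact hxbf, rfl⟩
  -- the bad weight at each endpoint is at most 1/3
  have key : ∀ a : V, a ∈ e₀.1 →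
      ∑ i ∈ t.filter (fun i => ∃ g ∈ M i, a ∈ g), w i ≤ 1 / 3 := by
    intro a ha
    by_cases hex : ∃ f : {e : Sym2 V // e ∈ G.edgeFinset}, f ≠ e₀ ∧ a ∈ f.1 ∧ 0 < x f
    · obtain ⟨f, hfprop⟩ := hex
      have hle : ∑ i ∈ t.filter (fun i => ∃ g ∈ M i, a ∈ g), w i
          ≤ ∑ i ∈ t, w i * (if f.1 ∈ M i then (1 : ℝ) else 0) := by
        rw [Finset.sum_filter]
        refine Finset.sum_le_sum fun i hi => ?_
        by_cases hbad : ∃ g ∈ M i, a ∈ g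
        · rw [if_pos hbad]
          rcases (hw0 i hi).lt_or_eq with hwi | hwi
          · obtain ⟨g, hg, hag⟩ := hbad
            obtain ⟨f', hf'1, hf'2, hf'3, hf'4⟩ := hposmem i hi hwi g hg a hag
            have hff : f' = f := hsparse a ha ⟨hf'1, hf'2, hf'3⟩ hfprop
            have : f.1 ∈ M i := by rw [← hff, hf'4]; exact hg
            rw [if_pos this]; linarith
          · rw [← hwi]; have : (0:ℝ) ≤ (if f.1 ∈ M i then (1:ℝ) else 0) := by
              split <;> norm_num
            nlinarith
        · rw [if_neg hbad]
          exact mul_nonneg (hw0 i hi) (by split <;> norm_num)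
      rw [hcoord f, hxbar f hfprop.1] at hle
      have := hx1 f
      linarith
    · have hzero : ∑ i ∈ t.filter (fun i => ∃ g ∈ M i, a ∈ g), w i = 0 := by
        refine Finset.sum_eq_zero fun i hi => ?_
        rw [Finset.mem_filter] at hi
        by_contra hwi
        have hwipos : 0 < w i := lt_of_le_of_ne (hw0 i hi.1) (Ne.symm hwi)
        obtain ⟨g, hg, hag⟩ := hi.2
        obtain ⟨f, h1, h2, h3, _⟩ := hposmem i hi.1 hwipos g hg a hag
        exact hex ⟨f, h1, h2, h3⟩
      rw [hzero]; norm_num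
  -- the good weight
  set p : ι → Prop := fun i => ∀ g ∈ M i, u ∉ g ∧ v ∉ g with hp
  set sgood : ℝ := ∑ i ∈ t.filter p, w i with hsg
  have hsgood : 1 / 3 ≤ sgood := by
    have hsplit := Finset.sum_filter_add_sum_filter_not t p w
    have h1 := key u hu
    have h2 := key v hv
    set Bu := t.filter (fun i => ∃ g ∈ M i, u ∈ g) with hBu
    set Bv := t.filter (fun i => ∃ g ∈ M i, v ∈ g) with hBv
    have hbadsub : t.filter (fun i => ¬ p i) ⊆ Bu ∪ Bv := by
      intro i hi
      rw [Finset.mem_filter] at hi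
      obtain ⟨hit, hnp⟩ := hi
      have hnp' : ∃ g ∈ M i, u ∈ g ∨ v ∈ g := by
        by_contra hcon
        push_neg at hcon
        exact hnp hcon
      obtain ⟨g, hg, hug⟩ := hnp'
      rw [Finset.mem_union, hBu, hBv, Finset.mem_filter, Finset.mem_filter]
      by_cases huu : u ∈ g
      · exact Or.inl ⟨hit, g, hg, huu⟩
      · exact Or.inr ⟨hit, g, hg, hug.resolve_left huu⟩
    have hun : ∑ i ∈ Bu ∪ Bv, w i ≤ 2 / 3 := by
      have hsum := Finset.sum_union_inter (s₁ := Bu) (s₂ := Bv) (f := w)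
      have hnn : 0 ≤ ∑ i ∈ Bu ∩ Bv, w i := by
        refine Finset.sum_nonneg fun i hi => hw0 i ?_
        have := Finset.mem_of_mem_inter_left hi
        rw [hBu, Finset.mem_filter] at this
        exact this.1
      linarith
    have hb2 : ∑ i ∈ t.filter (fun i => ¬ p i), w i ≤ 2 / 3 := by
      refine le_trans (Finset.sum_le_sum_of_subset_of_nonneg hbadsub fun i hi _ => ?_) hun
      rcases Finset.mem_union.mp hi with h | h
      · rw [hBu, Finset.mem_filter] at h; exact hw0 i h.1
      · rw [hBv, Finset.mem_filter] at h; exact hw0 i h.1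
    rw [hw1] at hsplit
    rw [hsg]
    linarith
  have hs0 : 0 < sgood := lt_of_lt_of_le (by norm_num) hsgood
  set r : ℝ := c / sgood with hr
  have hr0 : 0 ≤ r := le_of_lt (div_pos hc0 hs0)
  have hr1 : r ≤ 1 := (div_le_one hs0).mpr (le_trans hc3 hsgood)
  -- no good solution contains e₀
  have he₀notmem : ∀ i, p i → e₀.1 ∉ M i := fun i hpi hmem => (hpi e₀.1 hmem).1 hu
  -- the new convex combination
  set w' : ι × Bool → ℝ := fun q =>
    if q.2 then (if p q.1 then w q.1 * r else 0)
    else (if p q.1 then w q.1 * (1 - r) else w q.1) with hw'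
  set N : ι × Bool → Finset (Sym2 V) := fun q =>
    if q.2 ∧ p q.1 then insert e₀.1 (M q.1) else M q.1 with hN
  set z' : ι × Bool → ({e : Sym2 V // e ∈ G.edgeFinset} → ℝ) := fun q e =>
    if e.1 ∈ N q then 1 else 0 with hz'def
  set t' : Finset (ι × Bool) := t ×ˢ Finset.univ with ht'
  have hWt : ∀ i : ι, w' (i, true) = if p i then w i * r else 0 := fun i => rfl
  have hWf : ∀ i : ι, w' (i, false) = if p i then w i * (1 - r) else w i := fun i => rfl
  have hw'sum : ∑ q ∈ t', w' q = 1 := by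
    rw [ht', Finset.sum_product, ← hw1]
    refine Finset.sum_congr rfl fun i hi => ?_
    rw [show (Finset.univ : Finset Bool) = {true, false} from rfl]
    rw [Finset.sum_insert (by simp), Finset.sum_singleton, hWt, hWf]
    by_cases hpi : p i
    · rw [if_pos hpi, if_pos hpi]; ring
    · rw [if_neg hpi, if_neg hpi]; ring
  have hw'0 : ∀ q ∈ t', 0 ≤ w' q := by
    rintro ⟨i, bb⟩ hq
    have hit : i ∈ t := (Finset.mem_product.mp hq).1
    have hwi := hw0 i hit
    cases bb
    · rw [hWf]
      by_cases hpi : p i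
      · rw [if_pos hpi]; exact mul_nonneg hwi (by linarith)
      · rw [if_neg hpi]; exact hwi
    · rw [hWt]
      by_cases hpi : p i
      · rw [if_pos hpi]; exact mul_nonneg hwi hr0
      · rw [if_neg hpi]
  have hz'mem : ∀ q ∈ t', z' q ∈ {χ : {e : Sym2 V // e ∈ G.edgeFinset} → ℝ |
      ∃ Ms : Finset (Sym2 V), Ms ⊆ G.edgeFinset ∧
        (∀ a : V, ∑ e ∈ Ms.filter (fun e => a ∈ e), d e a ≤ b a) ∧
        χ = fun e => if e.1 ∈ Ms then 1 else 0} := by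
    rintro ⟨i, bb⟩ hq
    refine ⟨N (i, bb), ?_, ?_, rfl⟩
    · by_cases hcase : (bb : Prop) ∧ p i
      · have hNq : N (i, bb) = insert e₀.1 (M i) := if_pos hcase
        rw [hNq]
        exact Finset.insert_subset e₀.2 (hM1 i)
      · have hNq : N (i, bb) = M i := if_neg hcase
        rw [hNq]; exact hM1 i
    · intro a
      by_cases hcase : (bb : Prop) ∧ p i
      · have hNq : N (i, bb) = insert e₀.1 (M i) := if_pos hcase
        rw [hNq, Finset.filter_insert]
        by_cases ha : a ∈ e₀.1
        · rw [if_pos ha]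
          have hempty : (M i).filter (fun e => a ∈ e) = ∅ := by
            rw [Finset.filter_eq_empty_iff]
            intro g hg
            have ha' : a = u ∨ a = v := by rw [he₀] at ha; exact Sym2.mem_iff.mp ha
            rcases ha' with rfl | rfl
            · exact (hcase.2 g hg).1
            · exact (hcase.2 g hg).2
          rw [hempty]
          simpa using hnoclip e₀.1 e₀.2 a ha
        · rw [if_neg ha]; exact hM2 i a
      · have hNq : N (i, bb) = M i := if_neg hcase
        rw [hNq]; exact hM2 i a
  -- the center of mass is x / 3
  have hfinal : t'.centerMass w' z' = fun e => x e / 3 := by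
    rw [Finset.centerMass_eq_of_sum_1 t' z' hw'sum]
    funext e
    rw [Finset.sum_apply]
    have hsp : ∑ q ∈ t', (w' q • z' q) e
        = ∑ i ∈ t, (w' (i, true) * z' (i, true) e + w' (i, false) * z' (i, false) e) := by
      rw [ht', Finset.sum_product]
      refine Finset.sum_congr rfl fun i hi => ?_
      rw [show (Finset.univ : Finset Bool) = {true, false} from rfl]
      rw [Finset.sum_insert (by simp), Finset.sum_singleton]
      simp [smul_eq_mul]
    rw [hsp]
    have hterm : ∀ i ∈ t, (w' (i, true) * z' (i, true) e + w' (i, false) * z' (i, false) e)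
        = w i * (if e.1 ∈ M i then (1:ℝ) else 0)
          + (if p i then w i * (r * (if e = e₀ then (1:ℝ) else 0)) else 0) := by
      intro i hi
      by_cases hpi : p i
      · have hNt : N (i, true) = insert e₀.1 (M i) := if_pos ⟨rfl, hpi⟩
        have hNf : N (i, false) = M i := if_neg (by simp)
        have hdecomp : (if e.1 ∈ insert e₀.1 (M i) then (1:ℝ) else 0)
            = (if e = e₀ then (1:ℝ) else 0) + (if e.1 ∈ M i then (1:ℝ) else 0) := by
          by_cases hee : e = e₀
          · rw [if_pos hee, if_pos]
            · rw [hee, if_neg (he₀notmem i hpi)]; norm_num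
            · rw [hee]; exact Finset.mem_insert_self _ _
          · have hne : e.1 ≠ e₀.1 := fun h => hee (Subtype.ext h)
            rw [if_neg hee]
            by_cases hm : e.1 ∈ M i
            · rw [if_pos (Finset.mem_insert_of_mem hm), if_pos hm]; norm_num
            · rw [if_neg, if_neg hm]
              · norm_num
              · rw [Finset.mem_insert]; push_neg; exact ⟨hne, hm⟩
        have hzt : z' (i, true) e
            = (if e = e₀ then (1:ℝ) else 0) + (if e.1 ∈ M i then (1:ℝ) else 0) := by
          show (if e.1 ∈ N (i, true) then (1:ℝ) else 0) = _
          rw [hNt, hdecomp]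
        have hzf : z' (i, false) e = (if e.1 ∈ M i then (1:ℝ) else 0) := by
          show (if e.1 ∈ N (i, false) then (1:ℝ) else 0) = _
          rw [hNf]
        have hwt : w' (i, true) = w i * r := by rw [hWt, if_pos hpi]
        have hwf : w' (i, false) = w i * (1 - r) := by rw [hWf, if_pos hpi]
        rw [hzt, hzf, hwt, hwf, if_pos hpi]
        ring
      · have hNt : N (i, true) = M i := if_neg (by simp [hpi])
        have hNf : N (i, false) = M i := if_neg (by simp)
        have hzt : z' (i, true) e = (if e.1 ∈ M i then (1:ℝ) else 0) := by
          show (if e.1 ∈ N (i, true) then (1:ℝ) else 0) = _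
          rw [hNt]
        have hzf : z' (i, false) e = (if e.1 ∈ M i then (1:ℝ) else 0) := by
          show (if e.1 ∈ N (i, false) then (1:ℝ) else 0) = _
          rw [hNf]
        have hwt : w' (i, true) = 0 := by rw [hWt, if_neg hpi]
        have hwf : w' (i, false) = w i := by rw [hWf, if_neg hpi]
        rw [hzt, hzf, hwt, hwf, if_neg hpi]
        ring
    rw [Finset.sum_congr rfl hterm, Finset.sum_add_distrib, hcoord e]
    have h2 : ∑ i ∈ t, (if p i then w i * (r * (if e = e₀ then (1:ℝ) else 0)) else 0)
        = sgood * (r * (if e = e₀ then (1:ℝ) else 0)) := by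
      rw [← Finset.sum_filter, ← Finset.sum_mul, hsg]
    rw [h2]
    have hsr : sgood * r = c := by
      rw [hr, mul_div_cancel₀]
      exact ne_of_gt hs0
    by_cases hee : e = e₀
    · rw [if_pos hee, hee, hxbar0, mul_one, hsr, hc]
      norm_num
    · rw [if_neg hee, hxbar e hee, mul_zero, mul_zero, add_zero]
  rw [← hfinal]
  exact Finset.centerMass_mem_convexHull t' hw'0 (by rw [hw'sum]; norm_num) hz'mem
end
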